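/- arXiv:2410.00887 — 10 statements merged into one kernel-verified Lean document; each statement's English description precedes it below -/
import Mathlib

section
/- A subset A of the Cantor space 2^ℕ is homeomorphic to the Cantor space if and only if A is compact, nonempty, and has no isolated points. -/
open Filter Set PiNat Topology

section CantorAux

/-- `res · n` is continuous (locally constant) on a product of discrete spaces. -/
lemma continuous_res (n : ℕ) : Continuous (fun x : ℕ → Bool => res x n) := by
  apply IsLocallyConstant.continuous
  rw [IsLocallyConstant.iff_exists_open]
  intro x
  refine ⟨(fun y : ℕ → Bool => res y n) ⁻¹' {res x n}, ?_, by simp, ?_⟩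
  · -- preimage of a finite-coordinate condition is open
    have : (fun y : ℕ → Bool => res y n) ⁻¹' {res x n} =
        Set.pi (Finset.range n : Set ℕ) (fun i => {x i}) := by
      ext y
      simp [res_eq_res, Set.mem_pi]
    rw [this]
    exact isOpen_set_pi (Finset.range n).finite_toSet (fun i _ => isOpen_discrete _)
  · intro y hy
    simpa using hy

lemma res_eq_res_of_le {x y : ℕ → Bool} {m n : ℕ} (h : res x m = res y m) (hnm : n ≤ m) :
    res x n = res y n := by
  rw [res_eq_res] at h ⊢
  exact fun i hi => h (lt_of_lt_of_le hi hnm)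

lemma res_add (x : ℕ → Bool) (j j' : ℕ) :
    res x (j + j') = res (fun i => x (j + i)) j' ++ res x j := by
  induction j' with
  | zero => simp
  | succ j' ih =>
    rw [← Nat.add_assoc, res_succ, ih, res_succ]
    simp

/-- A "piece": a finite set of length-`n` binary words, each realized by a point of `A`. -/
structure BPiece (A : Set (ℕ → Bool)) where
  n : ℕ
  S : Finset (List Bool)
  hlen : ∀ l ∈ S, l.length = n
  hwit : ∀ l ∈ S, ∃ x ∈ A, res x n = l
  hSne : S.Nonempty

variable {A : Set (ℕ → Bool)}

/-- The subset of `A` corresponding to a piece. -/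
def BPiece.set (P : BPiece A) : Set (ℕ → Bool) := {x ∈ A | res x P.n ∈ P.S}

lemma BPiece.set_nonempty (P : BPiece A) : P.set.Nonempty := by
  obtain ⟨l, hl⟩ := P.hSne
  obtain ⟨x, hx, hres⟩ := P.hwit l hl
  exact ⟨x, hx, by rw [hres]; exact hl⟩

lemma BPiece.isClosed_set (P : BPiece A) (hA : IsClosed A) : IsClosed P.set := by
  have : P.set = A ∩ ((fun x : ℕ → Bool => res x P.n) ⁻¹' (P.S : Set (List Bool))) := rfl
  rw [this]
  exact hA.inter ((isClosed_discrete _).preimage (continuous_res P.n))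

lemma BPiece.isCompact_set (P : BPiece A) (hA : IsCompact A) : IsCompact P.set := by
  have : P.set = A ∩ ((fun x : ℕ → Bool => res x P.n) ⁻¹' (P.S : Set (List Bool))) := rfl
  rw [this]
  exact hA.inter_right ((isClosed_discrete _).preimage (continuous_res P.n))

/-- All binary words of length `m`. -/
def allLists : ℕ → Finset (List Bool)
  | 0 => {[]}
  | m + 1 => (allLists m).biUnion (fun t => {false :: t, true :: t})

lemma mem_allLists {m : ℕ} {t : List Bool} : t ∈ allLists m ↔ t.length = m := by
  induction m generalizing t with
  | zero => cases t <;> simp [allLists]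
  | succ m ih =>
    cases t with
    | nil => simp [allLists]
    | cons a t =>
      simp only [allLists, Finset.mem_biUnion, Finset.mem_insert, Finset.mem_singleton,
        List.length_cons]
      constructor
      · rintro ⟨s, hs, h | h⟩ <;> simp_all [ih]
      · intro h
        refine ⟨t, ih.mpr (by omega), ?_⟩
        cases a <;> simp

end CantorAux

section Split

variable {A : Set (ℕ → Bool)}

open Classical in
lemma exists_split (hacc : ∀ x ∈ A, AccPt x (Filter.principal A)) (P : BPiece A) :
    ∃ Q₀ Q₁ : BPiece A,
      Q₀.set ⊆ P.set ∧ Q₁.set ⊆ P.set ∧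
      Q₀.set ∪ Q₁.set = P.set ∧
      Disjoint Q₀.set Q₁.set ∧
      P.n ≤ Q₀.n ∧ P.n ≤ Q₁.n ∧
      Q₀.S.card = 1 ∧
      (P.S.card = 1 → P.n < Q₀.n ∧ P.n < Q₁.n) ∧
      (2 ≤ P.S.card → Q₀.n = P.n ∧ Q₁.n = P.n ∧ Q₁.S.card < P.S.card) := by
  rcases le_or_gt 2 P.S.card with hcard | hcard
  · -- at least two words: peel one off
    obtain ⟨l₀, hl₀⟩ := P.hSne
    have herase : (P.S.erase l₀).Nonempty := by
      rw [← Finset.card_pos, Finset.card_erase_of_mem hl₀]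
      omega
    refine ⟨⟨P.n, {l₀}, by simpa using P.hlen l₀ hl₀, by simpa using P.hwit l₀ hl₀,
        Finset.singleton_nonempty _⟩,
      ⟨P.n, P.S.erase l₀, fun l hl => P.hlen l (Finset.mem_of_mem_erase hl),
        fun l hl => P.hwit l (Finset.mem_of_mem_erase hl), herase⟩,
      ?_, ?_, ?_, ?_, le_rfl, le_rfl, by simp, fun h => by omega, fun _ => ?_⟩
    · rintro x ⟨hxA, hxS⟩
      simp only [Finset.mem_singleton] at hxS
      exact ⟨hxA, by rw [hxS]; exact hl₀⟩
    · rintro x ⟨hxA, hxS⟩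
      exact ⟨hxA, Finset.mem_of_mem_erase hxS⟩
    · ext x
      simp only [BPiece.set, Set.mem_union, Set.mem_setOf_eq, Finset.mem_singleton,
        Finset.mem_erase]
      constructor
      · rintro (⟨h1, h2⟩ | ⟨h1, h2⟩)
        · exact ⟨h1, by rw [h2]; exact hl₀⟩
        · exact ⟨h1, h2.2⟩
      · rintro ⟨h1, h2⟩
        by_cases h : res x P.n = l₀
        · exact Or.inl ⟨h1, h⟩
        · exact Or.inr ⟨h1, h, h2⟩
    · rw [Set.disjoint_left]
      rintro x ⟨-, hx1⟩ ⟨-, hx2⟩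
      simp only [Finset.mem_singleton] at hx1
      simp only [Finset.mem_erase] at hx2
      exact hx2.1 hx1
    · refine ⟨rfl, rfl, ?_⟩
      simp only [Finset.card_erase_of_mem hl₀]
      omega
  · -- exactly one word: use the accumulation point property to refine
    have hc1 : P.S.card = 1 := by
      have := Finset.card_pos.mpr P.hSne
      omega
    obtain ⟨l, hl⟩ := Finset.card_eq_one.mp hc1
    obtain ⟨x₀, hx₀A, hx₀res⟩ := P.hwit l (by rw [hl]; exact Finset.mem_singleton_self l)
    -- find another point of A in the same cylinder
    have hU : {y : ℕ → Bool | res y P.n = res x₀ P.n} ∈ nhds x₀ := by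
      refine IsOpen.mem_nhds ?_ rfl
      have : {y : ℕ → Bool | res y P.n = res x₀ P.n} =
          (fun y : ℕ → Bool => res y P.n) ⁻¹' {res x₀ P.n} := rfl
      rw [this]
      exact (isOpen_discrete _).preimage (continuous_res P.n)
    obtain ⟨y, ⟨hyU, hyA⟩, hyne⟩ := (accPt_iff_nhds (x := x₀) (C := A)).mp (hacc x₀ hx₀A) _ hU
    obtain ⟨k, hk⟩ := Function.ne_iff.mp hyne
    have hnk : P.n ≤ k := by
      by_contra h
      exact hk (res_eq_res.mp hyU (by omega))
    set m := k + 1 with hm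
    have hnm : P.n < m := by omega
    -- the finset of realizable extensions
    set T : Finset (List Bool) :=
      (allLists m).filter (fun t => ∃ x ∈ A, res x m = t ∧ res x P.n = res x₀ P.n) with hT
    have hmemT : ∀ x ∈ A, res x P.n = res x₀ P.n → res x m ∈ T := by
      intro x hxA hres
      rw [hT, Finset.mem_filter]
      exact ⟨mem_allLists.mpr (res_length x m), x, hxA, rfl, hres⟩
    have ht₀ : res x₀ m ∈ T := hmemT x₀ hx₀A rfl
    have ht₁ : res y m ∈ T := hmemT y hyA hyU
    have ht01 : res y m ≠ res x₀ m := by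
      intro h
      exact hk (res_eq_res.mp h (by omega))
    have hTlen : ∀ t ∈ T, t.length = m := fun t ht =>
      mem_allLists.mp (Finset.mem_filter.mp ht).1
    have hTwit : ∀ t ∈ T, ∃ x ∈ A, res x m = t := by
      intro t ht
      obtain ⟨x, hx, hres, -⟩ := (Finset.mem_filter.mp ht).2
      exact ⟨x, hx, hres⟩
    -- key: membership in P.set is equivalent to landing in T at level m
    have hPT : ∀ x, x ∈ P.set ↔ (x ∈ A ∧ res x m ∈ T) := by
      intro x
      constructor
      · rintro ⟨hxA, hxS⟩
        rw [hl, Finset.mem_singleton] at hxS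
        exact ⟨hxA, hmemT x hxA (by rw [hxS, hx₀res])⟩
      · rintro ⟨hxA, hxT⟩
        obtain ⟨x', hx'A, hres', hres'0⟩ := (Finset.mem_filter.mp hxT).2
        refine ⟨hxA, ?_⟩
        rw [hl, Finset.mem_singleton]
        have : res x P.n = res x' P.n := res_eq_res_of_le hres'.symm (by omega)
        rw [this, hres'0, hx₀res]
    refine ⟨⟨m, {res x₀ m}, by simpa using res_length x₀ m,
        by simp only [Finset.mem_singleton]; rintro t rfl; exact ⟨x₀, hx₀A, rfl⟩,
        Finset.singleton_nonempty _⟩,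
      ⟨m, T.erase (res x₀ m), fun t ht => hTlen t (Finset.mem_of_mem_erase ht),
        fun t ht => hTwit t (Finset.mem_of_mem_erase ht),
        ⟨res y m, Finset.mem_erase.mpr ⟨ht01, ht₁⟩⟩⟩,
      ?_, ?_, ?_, ?_, le_of_lt hnm, le_of_lt hnm, by simp, fun _ => ⟨hnm, hnm⟩,
      fun h => by omega⟩
    · rintro x ⟨hxA, hxS⟩
      refine (hPT x).mpr ⟨hxA, ?_⟩
      simp only [Finset.mem_singleton] at hxS
      rw [hxS]; exact ht₀
    · rintro x ⟨hxA, hxS⟩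
      exact (hPT x).mpr ⟨hxA, Finset.mem_of_mem_erase hxS⟩
    · apply Set.Subset.antisymm
      · apply Set.union_subset
        · rintro x ⟨hxA, hxS⟩
          refine (hPT x).mpr ⟨hxA, ?_⟩
          simp only [Finset.mem_singleton] at hxS
          rw [hxS]; exact ht₀
        · rintro x ⟨hxA, hxS⟩
          exact (hPT x).mpr ⟨hxA, Finset.mem_of_mem_erase hxS⟩
      · rintro x hx
        obtain ⟨hxA, hxT⟩ := (hPT x).mp hx
        by_cases h : res x m = res x₀ m
        · exact Or.inl ⟨hxA, by simpa using h⟩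
        · exact Or.inr ⟨hxA, Finset.mem_erase.mpr ⟨h, hxT⟩⟩
    · rw [Set.disjoint_left]
      rintro x ⟨-, hx1⟩ ⟨-, hx2⟩
      simp only [Finset.mem_singleton] at hx1
      simp only [Finset.mem_erase] at hx2
      exact hx2.1 hx1

end Split

section Grow

variable {A : Set (ℕ → Bool)}

/-- Iterate the splitting along a (reversed) finite binary word. -/
def grow (s0 s1 : BPiece A → BPiece A) : BPiece A → List Bool → BPiece A
  | P, [] => P
  | P, a :: l => cond a (s1 (grow s0 s1 P l)) (s0 (grow s0 s1 P l))

lemma grow_append (s0 s1 : BPiece A → BPiece A) (P : BPiece A) (l₁ l₂ : List Bool) :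
    grow s0 s1 P (l₁ ++ l₂) = grow s0 s1 (grow s0 s1 P l₂) l₁ := by
  induction l₁ with
  | nil => rfl
  | cons a l ih => cases a <;> simp [grow, ih]

variable (s0 s1 : BPiece A → BPiece A)
variable (h0n : ∀ P, P.n ≤ (s0 P).n) (h1n : ∀ P, P.n ≤ (s1 P).n)
variable (h0card : ∀ P, (s0 P).S.card = 1)
variable (hsing : ∀ P, P.S.card = 1 → P.n < (s0 P).n ∧ P.n < (s1 P).n)
variable (hbig : ∀ P, 2 ≤ P.S.card → (s0 P).n = P.n ∧ (s1 P).n = P.n ∧ (s1 P).S.card < P.S.card)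

include h0n h1n h0card hsing hbig

lemma reach_singleton : ∀ (c : ℕ) (P : BPiece A), P.S.card ≤ c → ∀ x : ℕ → Bool,
    ∃ j, (grow s0 s1 P (res x j)).S.card = 1 ∧ P.n ≤ (grow s0 s1 P (res x j)).n := by
  intro c
  induction c with
  | zero =>
    intro P hP x
    have := Finset.card_pos.mpr P.hSne
    omega
  | succ c ih =>
    intro P hP x
    rcases Nat.lt_or_ge P.S.card 2 with h | h
    · have hc1 : P.S.card = 1 := by
        have := Finset.card_pos.mpr P.hSne
        omega
      exact ⟨0, hc1, le_rfl⟩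
    · cases hx0 : x 0 with
      | false =>
        have e : grow s0 s1 P (res x 1) = s0 P := by
          show grow s0 s1 P [x 0] = s0 P
          rw [hx0]
          rfl
        refine ⟨1, ?_, ?_⟩
        · rw [e]; exact h0card P
        · rw [e]; exact h0n P
      | true =>
        have hP' : (s1 P).S.card ≤ c := by
          have := (hbig P h).2.2
          omega
        obtain ⟨j, hc, hn⟩ := ih (s1 P) hP' (fun i => x (1 + i))
        have e : res x (j + 1) = res (fun i => x (1 + i)) j ++ [x 0] := by
          rw [Nat.add_comm j 1, res_add x 1 j]
          rfl
        have e2 : grow s0 s1 P (res x (j + 1)) =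
            grow s0 s1 (s1 P) (res (fun i => x (1 + i)) j) := by
          rw [e, grow_append]
          congr 1
          show cond (x 0) (s1 P) (s0 P) = s1 P
          rw [hx0]
          rfl
        refine ⟨j + 1, ?_, ?_⟩
        · rw [e2]; exact hc
        · rw [e2]; exact le_trans (h1n P) hn

lemma reach_bigger (P : BPiece A) (hP : P.S.card = 1) (x : ℕ → Bool) :
    ∃ j, (grow s0 s1 P (res x j)).S.card = 1 ∧ P.n < (grow s0 s1 P (res x j)).n := by
  set P' : BPiece A := cond (x 0) (s1 P) (s0 P) with hP'
  have hlt : P.n < P'.n := by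
    cases hx0 : x 0 <;> simp only [hP', hx0, cond_false, cond_true]
    · exact (hsing P hP).1
    · exact (hsing P hP).2
  obtain ⟨j, hc, hn⟩ :=
    reach_singleton s0 s1 h0n h1n h0card hsing hbig P'.S.card P' le_rfl (fun i => x (1 + i))
  have e : res x (j + 1) = res (fun i => x (1 + i)) j ++ [x 0] := by
    rw [Nat.add_comm j 1, res_add x 1 j]
    rfl
  have e2 : grow s0 s1 P (res x (j + 1)) = grow s0 s1 P' (res (fun i => x (1 + i)) j) := by
    rw [e, grow_append]
    rfl
  refine ⟨j + 1, ?_, ?_⟩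
  · rw [e2]; exact hc
  · rw [e2]; exact lt_of_lt_of_le hlt hn

lemma reach_level (k : ℕ) (P : BPiece A) (hP : P.S.card = 1) (x : ℕ → Bool) :
    ∃ j, (grow s0 s1 P (res x j)).S.card = 1 ∧ k ≤ (grow s0 s1 P (res x j)).n := by
  induction k with
  | zero => exact ⟨0, hP, Nat.zero_le _⟩
  | succ k ih =>
    obtain ⟨j, hc, hn⟩ := ih
    obtain ⟨j', hc', hn'⟩ :=
      reach_bigger s0 s1 h0n h1n h0card hsing hbig (grow s0 s1 P (res x j)) hc
        (fun i => x (j + i))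
    have e : grow s0 s1 P (res x (j + j')) =
        grow s0 s1 (grow s0 s1 P (res x j)) (res (fun i => x (j + i)) j') := by
      rw [res_add x j j', grow_append]
    refine ⟨j + j', ?_, ?_⟩
    · rw [e]; exact hc'
    · rw [e]; omega

end Grow

section Backward

variable {A : Set (ℕ → Bool)}

lemma cantor_backward (hcomp : IsCompact A) (hne : A.Nonempty)
    (hacc : ∀ x ∈ A, AccPt x (Filter.principal A)) :
    Nonempty (A ≃ₜ (ℕ → Bool)) := by
  classical
  choose s0 s1 h0sub h1sub hunion hdisj h0n h1n h0card hsing hbig using exists_split hacc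
  obtain ⟨a₀, ha₀⟩ := hne
  have hroot_wit : ∀ l ∈ ({[]} : Finset (List Bool)), ∃ x ∈ A, res x 0 = l := by
    intro l hl
    simp only [Finset.mem_singleton] at hl
    exact ⟨a₀, ha₀, by rw [hl]; rfl⟩
  set root : BPiece A := ⟨0, {[]}, by simp, hroot_wit, Finset.singleton_nonempty _⟩ with hroot
  have hroot_set : root.set = A := by
    ext x
    simp [BPiece.set, hroot, res_zero]
  have hroot_card : root.S.card = 1 := by simp [hroot]
  -- the scheme along branches
  set D : List Bool → BPiece A := fun l => grow s0 s1 root l with hD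
  set K : (ℕ → Bool) → ℕ → Set (ℕ → Bool) := fun x j => (D (res x j)).set with hK
  have hKsucc : ∀ x j, K x (j + 1) = (cond (x j) (s1 (D (res x j))) (s0 (D (res x j)))).set := by
    intro x j
    rfl
  have hKmono : ∀ x j, K x (j + 1) ⊆ K x j := by
    intro x j
    rw [hKsucc]
    cases x j
    · exact h0sub _
    · exact h1sub _
  have hK0 : ∀ x, K x 0 = A := fun x => hroot_set
  have hKne : ∀ x j, (K x j).Nonempty := fun x j => (D (res x j)).set_nonempty
  have hKclosed : ∀ x j, IsClosed (K x j) := fun x j =>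
    (D (res x j)).isClosed_set hcomp.isClosed
  have hKinter : ∀ x : ℕ → Bool, (⋂ j, K x j).Nonempty := by
    intro x
    refine IsCompact.nonempty_iInter_of_sequence_nonempty_isCompact_isClosed (K x)
      (hKmono x) (hKne x) ?_ (hKclosed x)
    rw [hK0]
    exact hcomp
  choose F hF using hKinter
  have hFK : ∀ x j, F x ∈ K x j := fun x j => Set.mem_iInter.mp (hF x) j
  have hFA : ∀ x, F x ∈ A := fun x => by
    have := hFK x 0
    rwa [hK0] at this
  -- coordinates get pinned down along branches
  have hcoord : ∀ (x : ℕ → Bool) (k : ℕ), ∃ j, ∀ a ∈ K x j, ∀ a' ∈ K x j,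
      ∀ i, i < k → a i = a' i := by
    intro x k
    obtain ⟨j, hc, hn⟩ := reach_level s0 s1 h0n h1n h0card hsing hbig k root hroot_card x
    refine ⟨j, ?_⟩
    obtain ⟨t, ht⟩ := Finset.card_eq_one.mp hc
    rintro a ⟨-, haS⟩ a' ⟨-, ha'S⟩ i hi
    rw [ht, Finset.mem_singleton] at haS ha'S
    have : res a (grow s0 s1 root (res x j)).n = res a' (grow s0 s1 root (res x j)).n :=
      haS.trans ha'S.symm
    exact res_eq_res.mp this (lt_of_lt_of_le hi hn)
  -- injectivity
  have hFinj : Function.Injective F := by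
    intro x y hxy
    by_contra hne'
    have hex : ∃ m, x m ≠ y m := Function.ne_iff.mp hne'
    set m := Nat.find hex with hm
    have hm1 : x m ≠ y m := Nat.find_spec hex
    have hres : res x m = res y m := by
      rw [res_eq_res]
      intro i hi
      by_contra h
      exact Nat.find_min hex hi h
    have hFx : F x ∈ (cond (x m) (s1 (D (res x m))) (s0 (D (res x m)))).set := by
      rw [← hKsucc]
      exact hFK x (m + 1)
    have hFy : F y ∈ (cond (y m) (s1 (D (res x m))) (s0 (D (res x m)))).set := by
      rw [hres]
      rw [← hKsucc]
      exact hFK y (m + 1)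
    cases hxm : x m <;> cases hym : y m
    · exact hm1 (by rw [hxm, hym])
    · rw [hxm] at hFx
      rw [hym] at hFy
      exact Set.disjoint_left.mp (hdisj (D (res x m))) hFx (hxy ▸ hFy)
    · rw [hxm] at hFx
      rw [hym] at hFy
      exact Set.disjoint_left.mp (hdisj (D (res x m))) hFy (hxy ▸ hFx)
    · exact hm1 (by rw [hxm, hym])
  -- continuity
  have hFcont : Continuous F := by
    apply continuous_pi
    intro i
    rw [continuous_iff_continuousAt]
    intro x
    obtain ⟨j, hj⟩ := hcoord x (i + 1)
    apply Filter.EventuallyEq.continuousAt (y := F x i)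
    have hUopen : IsOpen {y : ℕ → Bool | res y j = res x j} := by
      have : {y : ℕ → Bool | res y j = res x j} =
          (fun y : ℕ → Bool => res y j) ⁻¹' {res x j} := rfl
      rw [this]
      exact (isOpen_discrete _).preimage (continuous_res j)
    filter_upwards [hUopen.mem_nhds rfl] with y hy
    have hKeq : K y j = K x j := by
      show (D (res y j)).set = (D (res x j)).set
      rw [show res y j = res x j from hy]
    exact hj (F y) (hKeq ▸ hFK y j) (F x) (hFK x j) i (Nat.lt_succ_self i)
  -- surjectivity onto A
  have hFsurj : ∀ a ∈ A, ∃ x, F x = a := by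
    intro a ha
    set bit : List Bool → Bool := fun l => if a ∈ (s0 (D l)).set then false else true with hbit
    set br : ℕ → List Bool := fun j => Nat.rec [] (fun _ ih => bit ih :: ih) j with hbr
    set x : ℕ → Bool := fun j => bit (br j) with hx
    have hresbr : ∀ j, res x j = br j := by
      intro j
      induction j with
      | zero => rfl
      | succ j ih =>
        rw [res_succ, ih]
    have hmem : ∀ j, a ∈ (D (br j)).set := by
      intro j
      induction j with
      | zero =>
        show a ∈ root.set
        rw [hroot_set]
        exact ha
      | succ j ih =>
        have hDsucc : D (br (j + 1)) = cond (bit (br j)) (s1 (D (br j))) (s0 (D (br j))) := rfl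
        rw [hDsucc]
        by_cases h : a ∈ (s0 (D (br j))).set
        · have : bit (br j) = false := by rw [hbit]; simp [h]
          rw [this]
          exact h
        · have hb : bit (br j) = true := by rw [hbit]; simp [h]
          rw [hb]
          have : a ∈ (s0 (D (br j))).set ∪ (s1 (D (br j))).set := by
            rw [hunion]
            exact ih
          rcases this with h' | h'
          · exact absurd h' h
          · exact h'
    refine ⟨x, ?_⟩
    funext i
    obtain ⟨j, hj⟩ := hcoord x (i + 1)
    have haK : a ∈ K x j := by
      rw [hK]
      simp only []
      rw [hresbr j]
      exact hmem j
    exact hj (F x) (hFK x j) a haK i (Nat.lt_succ_self i)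
  -- assemble the homeomorphism
  have hbij : Function.Bijective (fun x : ℕ → Bool => (⟨F x, hFA x⟩ : A)) := by
    constructor
    · intro x y h
      exact hFinj (congrArg Subtype.val h)
    · rintro ⟨a, ha⟩
      obtain ⟨x, hx'⟩ := hFsurj a ha
      exact ⟨x, Subtype.ext hx'⟩
  have hcont : Continuous (fun x : ℕ → Bool => (⟨F x, hFA x⟩ : A)) :=
    hFcont.subtype_mk _
  exact ⟨(Continuous.homeoOfEquivCompactToT2 (f := Equiv.ofBijective _ hbij) hcont).symm⟩

end Backward

section Forward

/-- The Cantor space has no isolated points. -/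
lemma cantor_mem_closure_compl_singleton (q : ℕ → Bool) :
    q ∈ closure ({q}ᶜ : Set (ℕ → Bool)) := by
  rw [mem_closure_iff]
  intro U hU hqU
  obtain ⟨V, ⟨z, n, rfl⟩, hqV, hVU⟩ :=
    (PiNat.isTopologicalBasis_cylinders (fun _ : ℕ => Bool)).exists_subset_of_mem_open hqU hU
  have hcyl : cylinder q n = cylinder z n := mem_cylinder_iff_eq.mp hqV
  refine ⟨Function.update q n (!(q n)), hVU ?_, ?_⟩
  · rw [← hcyl]
    exact update_mem_cylinder q n _
  · intro h
    simp only [Set.mem_singleton_iff] at h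
    have := congrFun h n
    rw [Function.update_self] at this
    exact (Bool.not_ne_self (q n)) this

lemma cantor_forward {A : Set (ℕ → Bool)} (e : A ≃ₜ (ℕ → Bool)) :
    IsCompact A ∧ A.Nonempty ∧ ∀ x ∈ A, AccPt x (Filter.principal A) := by
  have hcs : CompactSpace A := e.symm.compactSpace
  refine ⟨isCompact_iff_compactSpace.mpr hcs, ?_, ?_⟩
  · exact ⟨(e.symm (fun _ => false) : A).1, (e.symm (fun _ => false)).2⟩
  · intro x hx
    set p : A := ⟨x, hx⟩ with hp
    -- p is not isolated in A
    have hpc : p ∈ closure ({p}ᶜ : Set A) := by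
      have h1 : e p ∈ closure ({e p}ᶜ : Set (ℕ → Bool)) :=
        cantor_mem_closure_compl_singleton (e p)
      have h2 : p ∈ e.symm '' closure ({e p}ᶜ : Set (ℕ → Bool)) :=
        ⟨e p, h1, e.symm_apply_apply p⟩
      rw [Homeomorph.image_closure] at h2
      have h3 : e.symm '' ({e p}ᶜ : Set (ℕ → Bool)) = ({p}ᶜ : Set A) := by
        rw [Set.image_compl_eq e.symm.bijective, Set.image_singleton, e.symm_apply_apply]
      rwa [h3] at h2
    have hxc : x ∈ closure (A \ {x}) := by
      have h4 := closure_subtype.mp hpc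
      have h5 : Subtype.val '' ({p}ᶜ : Set A) = A \ {x} := by
        ext y
        constructor
        · rintro ⟨⟨y', hy'⟩, hyne, rfl⟩
          refine ⟨hy', ?_⟩
          simp only [Set.mem_singleton_iff]
          intro h
          apply hyne
          simp only [Set.mem_singleton_iff]
          exact Subtype.ext h
        · rintro ⟨hyA, hyne⟩
          refine ⟨⟨y, hyA⟩, ?_, rfl⟩
          simp only [Set.mem_compl_iff, Set.mem_singleton_iff]
          intro h
          exact hyne (congrArg Subtype.val h)
      rwa [h5] at h4
    -- convert to AccPt
    show (nhdsWithin x {x}ᶜ ⊓ Filter.principal A).NeBot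
    have heq : nhdsWithin x {x}ᶜ ⊓ Filter.principal A = nhdsWithin x (A \ {x}) := by
      rw [nhdsWithin, nhdsWithin, inf_assoc, Filter.inf_principal]
      congr 1
      congr 1
      ext y
      simp only [Set.mem_inter_iff, Set.mem_compl_iff, Set.mem_singleton_iff, Set.mem_diff]
      tauto
    rw [heq]
    exact mem_closure_iff_nhdsWithin_neBot.mp hxc

end Forward

/-- A subset `A` of the Cantor space `2^ℕ` is homeomorphic to the Cantor space if and only if
`A` is compact, nonempty, and has no isolated points. -/
theorem subset_homeomorphic_cantor_iff
    (A : Set (ℕ → Bool)) :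
    Nonempty (A ≃ₜ (ℕ → Bool)) ↔
      IsCompact A ∧ A.Nonempty ∧ ∀ x ∈ A, AccPt x (Filter.principal A) := by
  constructor
  · rintro ⟨e⟩
    exact cantor_forward e
  · rintro ⟨hcomp, hne, hacc⟩
    exact cantor_backward hcomp hne hacc
end

section
/- A subset A of the real line is homeomorphic to the Cantor space if and only if A is compact, nonempty, has no isolated points, and has empty interior. -/
open Set Metric Filter Topology CantorScheme PiNat

open Set Metric Filter Topology

/-- A "good piece": nonempty compact relatively open subset of `A`. -/
def IsGoodPiece (A K : Set ℝ) : Prop :=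
  K.Nonempty ∧ IsCompact K ∧ ∃ U, IsOpen U ∧ K = A ∩ U

theorem good_split {A : Set ℝ} (hint : interior A = ∅)
    (hacc : ∀ x ∈ A, AccPt x (Filter.principal A)) {K : Set ℝ} (hK : IsGoodPiece A K) :
    ∃ P : Bool → Set ℝ, (∀ b, IsGoodPiece A (P b)) ∧ P false ∪ P true = K ∧
      Disjoint (P false) (P true) ∧
      ∀ r : ℝ, EMetric.diam K ≤ ENNReal.ofReal r →
        ∀ b, EMetric.diam (P b) ≤ ENNReal.ofReal (2 / 3 * r) := by
  obtain ⟨hne, hcomp, U, hUopen, hKU⟩ := hK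
  have hKA : K ⊆ A := hKU ▸ inter_subset_left
  set a := sInf K with ha_def
  set b := sSup K with hb_def
  have haK : a ∈ K := hcomp.sInf_mem hne
  have hbK : b ∈ K := hcomp.sSup_mem hne
  have hsub : K ⊆ Icc a b := fun x hx => ⟨csInf_le hcomp.bddBelow hx, le_csSup hcomp.bddAbove hx⟩
  have hab : a < b := by
    rcases ((hsub haK).2).lt_or_eq with h | h
    · exact h
    · exfalso
      have haU : a ∈ U := (hKU ▸ haK).2
      obtain ⟨y, ⟨hyU, hyA⟩, hyne⟩ :=
        accPt_iff_nhds.mp (hacc a (hKA haK)) U (hUopen.mem_nhds haU)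
      have hyK : y ∈ K := hKU ▸ ⟨hyA, hyU⟩
      have := hsub hyK
      rw [← h] at this
      exact hyne (le_antisymm this.2 this.1)
  have hd : (0:ℝ) < b - a := sub_pos.mpr hab
  have hIoo : ¬ Ioo (a + (b - a) / 3) (b - (b - a) / 3) ⊆ A := by
    intro hsubA
    have h1 : Ioo (a + (b - a) / 3) (b - (b - a) / 3) ⊆ interior A :=
      interior_maximal hsubA isOpen_Ioo
    rw [hint] at h1
    have hcc : a + (b - a) / 3 < b - (b - a) / 3 := by linarith
    obtain ⟨c, hc⟩ := Set.nonempty_Ioo.mpr hcc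
    exact h1 hc
  obtain ⟨c, hcI, hcA⟩ := not_subset.mp hIoo
  have hac : a < c := by have := hcI.1; linarith
  have hcb : c < b := by have := hcI.2; linarith
  have hcK : c ∉ K := fun h => hcA (hKA h)
  refine ⟨fun b' => if b' then K ∩ Ioi c else K ∩ Iio c, ?_, ?_, ?_, ?_⟩
  · intro b'
    cases b'
    · simp only [if_neg Bool.false_ne_true]
      refine ⟨⟨a, haK, hac⟩, ?_, ⟨U ∩ Iio c, hUopen.inter isOpen_Iio, by rw [hKU, inter_assoc]⟩⟩
      have heq : K ∩ Iio c = K ∩ Iic c := by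
        apply subset_antisymm (inter_subset_inter_right _ Iio_subset_Iic_self)
        rintro x ⟨hxK, hxc⟩
        exact ⟨hxK, lt_of_le_of_ne hxc (fun (he : x = c) => hcK (by rwa [he] at hxK))⟩
      rw [heq]
      exact hcomp.inter_right isClosed_Iic
    · simp only [if_pos]
      refine ⟨⟨b, hbK, hcb⟩, ?_, ⟨U ∩ Ioi c, hUopen.inter isOpen_Ioi, by rw [hKU, inter_assoc]⟩⟩
      have heq : K ∩ Ioi c = K ∩ Ici c := by
        apply subset_antisymm (inter_subset_inter_right _ Ioi_subset_Ici_self)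
        rintro x ⟨hxK, hxc⟩
        exact ⟨hxK, lt_of_le_of_ne hxc (fun (he : c = x) => hcK (by rwa [← he] at hxK))⟩
      rw [heq]
      exact hcomp.inter_right isClosed_Ici
  · simp only [if_pos, if_neg Bool.false_ne_true]
    ext x
    constructor
    · rintro (⟨h, _⟩ | ⟨h, _⟩) <;> exact h
    · intro hx
      rcases lt_or_gt_of_ne (show x ≠ c from fun he => hcK (by rwa [he] at hx)) with h | h
      · exact Or.inl ⟨hx, h⟩
      · exact Or.inr ⟨hx, h⟩
  · simp only [if_pos, if_neg Bool.false_ne_true]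
    rw [disjoint_left]
    rintro x ⟨_, h1⟩ ⟨_, h2⟩
    exact lt_asymm (mem_Iio.mp h1) (mem_Ioi.mp h2)
  · intro r hr b'
    have hba : b - a ≤ r := by
      have h1 : edist a b ≤ EMetric.diam K := EMetric.edist_le_diam_of_mem haK hbK
      have h2 : edist a b = ENNReal.ofReal (b - a) := by
        rw [edist_dist, Real.dist_eq, abs_sub_comm, abs_of_nonneg (by linarith)]
      rw [h2] at h1
      rcases (ENNReal.ofReal_le_ofReal_iff').mp (h1.trans hr) with h | h
      · exact h
      · linarith
    cases b'
    · simp only [if_neg Bool.false_ne_true]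
      have hsub2 : K ∩ Iio c ⊆ Icc a c :=
        fun x hx => ⟨(hsub hx.1).1, le_of_lt hx.2⟩
      calc EMetric.diam (K ∩ Iio c) ≤ EMetric.diam (Icc a c) := EMetric.diam_mono hsub2
        _ = ENNReal.ofReal (c - a) := Real.ediam_Icc a c
        _ ≤ ENNReal.ofReal (2 / 3 * r) := ENNReal.ofReal_le_ofReal (by
            have := hcI.2; linarith)
    · simp only [if_pos]
      have hsub2 : K ∩ Ioi c ⊆ Icc c b :=
        fun x hx => ⟨le_of_lt hx.2, (hsub hx.1).2⟩
      calc EMetric.diam (K ∩ Ioi c) ≤ EMetric.diam (Icc c b) := EMetric.diam_mono hsub2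
        _ = ENNReal.ofReal (b - c) := Real.ediam_Icc c b
        _ ≤ ENNReal.ofReal (2 / 3 * r) := ENNReal.ofReal_le_ofReal (by
            have := hcI.1; linarith)


theorem cantor_of_good {A : Set ℝ} (hcomp : IsCompact A) (hne : A.Nonempty)
    (hacc : ∀ x ∈ A, AccPt x (Filter.principal A)) (hint : interior A = ∅) :
    Nonempty (A ≃ₜ (ℕ → Bool)) := by
  classical
  choose P hPgood hPunion hPdisj hPdiam using
    fun K (hK : IsGoodPiece A K) => good_split hint hacc hK
  let DP : List Bool → {K : Set ℝ // IsGoodPiece A K} := fun l =>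
    l.rec ⟨A, hne, hcomp, univ, isOpen_univ, (inter_univ A).symm⟩
      (fun b _ ih => ⟨P ih.1 ih.2 b, hPgood ih.1 ih.2 b⟩)
  let D : List Bool → Set ℝ := fun l => (DP l).1
  have hDnil : D [] = A := rfl
  have hDcons : ∀ b l, D (b :: l) = P (DP l).1 (DP l).2 b := fun _ _ => rfl
  have hne_l : ∀ l, (D l).Nonempty := fun l => (DP l).2.1
  have hcomp_l : ∀ l, IsCompact (D l) := fun l => (DP l).2.2.1
  have hunion : ∀ l, D (false :: l) ∪ D (true :: l) = D l := fun l => hPunion (DP l).1 (DP l).2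
  have hanti : CantorScheme.Antitone D := by
    intro l b
    cases b
    · rw [← hunion l]; exact subset_union_left
    · rw [← hunion l]; exact subset_union_right
  have hdisj : CantorScheme.Disjoint D := by
    intro l b b' hbb'
    cases b <;> cases b'
    · exact absurd rfl hbb'
    · exact hPdisj (DP l).1 (DP l).2
    · exact (hPdisj (DP l).1 (DP l).2).symm
    · exact absurd rfl hbb'
  -- diameter bound
  set C : ℝ := (EMetric.diam A).toReal with hC
  have hAdiam : EMetric.diam A ≤ ENNReal.ofReal C := by
    rw [hC]; exact le_of_eq (ENNReal.ofReal_toReal hcomp.isBounded.ediam_ne_top).symm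
  have hdiam_l : ∀ l : List Bool,
      EMetric.diam (D l) ≤ ENNReal.ofReal ((2/3 : ℝ) ^ l.length * C) := by
    intro l
    induction l with
    | nil => simpa using hAdiam
    | cons b l ih =>
      have h1 := hPdiam (DP l).1 (DP l).2 _ ih b
      rw [hDcons]
      refine h1.trans (le_of_eq ?_)
      congr 1
      simp only [List.length_cons, pow_succ]
      ring
  have hvd : VanishingDiam D := by
    intro x
    have hlim : Tendsto (fun n : ℕ => ENNReal.ofReal ((2/3 : ℝ) ^ n * C)) atTop (𝓝 0) := by
      rw [← ENNReal.ofReal_zero]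
      apply ENNReal.tendsto_ofReal
      have := (tendsto_pow_atTop_nhds_zero_of_lt_one (by norm_num : (0:ℝ) ≤ 2/3)
        (by norm_num : (2/3 : ℝ) < 1)).mul_const C
      simpa using this
    apply tendsto_of_tendsto_of_tendsto_of_le_of_le tendsto_const_nhds hlim
      (fun n => zero_le)
    intro n
    have := hdiam_l (res x n)
    rwa [res_length] at this
  have hca : ClosureAntitone D := hanti.closureAntitone (fun l => (hcomp_l l).isClosed)
  have hdom : (inducedMap D).1 = univ := hca.map_of_vanishingDiam hvd hne_l
  have hmem : ∀ x : ℕ → Bool, x ∈ (inducedMap D).1 := fun x => hdom ▸ mem_univ x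
  let f : (ℕ → Bool) → ℝ := fun x => (inducedMap D).2 ⟨x, hmem x⟩
  have hfmem : ∀ (x : ℕ → Bool) (n : ℕ), f x ∈ D (res x n) := fun x n => map_mem ⟨x, hmem x⟩ n
  have hfA : ∀ x, f x ∈ A := by
    intro x
    have := hfmem x 0
    rwa [res_zero, hDnil] at this
  have hfcont : Continuous f :=
    (hvd.map_continuous).comp (Continuous.subtype_mk continuous_id _)
  have hfinj : Function.Injective f := by
    intro x y hxy
    have := hdisj.map_injective (show (inducedMap D).2 ⟨x, hmem x⟩ =
      (inducedMap D).2 ⟨y, hmem y⟩ from hxy)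
    exact congrArg Subtype.val this
  have hfsurj : ∀ y ∈ A, ∃ x, f x = y := by
    intro y hy
    have step : ∀ l, y ∈ D l → ∃ b, y ∈ D (b :: l) := by
      intro l hl
      rw [← hunion l] at hl
      rcases hl with h | h
      exacts [⟨false, h⟩, ⟨true, h⟩]
    choose bs hbs using step
    let L : ℕ → {l : List Bool // y ∈ D l} := fun n =>
      n.rec ⟨[], by rwa [hDnil]⟩ (fun _ ih => ⟨bs ih.1 ih.2 :: ih.1, hbs ih.1 ih.2⟩)
    let x : ℕ → Bool := fun n => (L (n + 1)).1.headI
    have hres : ∀ n, res x n = (L n).1 := by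
      intro n
      induction n with
      | zero => rw [res_zero]; rfl
      | succ n ih =>
        rw [res_succ, ih]
        have hL : (L (n + 1)).1 = bs (L n).1 (L n).2 :: (L n).1 := rfl
        rw [hL]
        rfl
    refine ⟨x, ?_⟩
    apply eq_of_forall_dist_le
    intro ε hε
    obtain ⟨n, hn⟩ := hvd.dist_lt ε hε x
    have h1 : f x ∈ D (res x n) := hfmem x n
    have h2 : y ∈ D (res x n) := by rw [hres n]; exact (L n).2
    exact le_of_lt (hn _ h1 _ h2)
  let g : (ℕ → Bool) → ↥A := fun x => ⟨f x, hfA x⟩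
  have hgbij : Function.Bijective g := by
    constructor
    · intro x y hxy
      exact hfinj (congrArg Subtype.val hxy)
    · rintro ⟨y, hy⟩
      obtain ⟨x, hx⟩ := hfsurj y hy
      exact ⟨x, Subtype.ext hx⟩
  have hgcont : Continuous g := hfcont.subtype_mk _
  let E : (ℕ → Bool) ≃ ↥A := Equiv.ofBijective g hgbij
  have hEcont : Continuous E := hgcont
  exact ⟨(hEcont.homeoOfEquivCompactToT2).symm⟩


/-- A subset `A` of the real line is homeomorphic to the Cantor space if and only if
`A` is compact, nonempty, has no isolated points, and has empty interior. -/
theorem real_subset_homeomorphic_cantor_iff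
    (A : Set ℝ) :
    Nonempty (A ≃ₜ (ℕ → Bool)) ↔
      IsCompact A ∧ A.Nonempty ∧ (∀ x ∈ A, AccPt x (Filter.principal A)) ∧
        interior A = ∅ := by
  constructor
  · rintro ⟨h⟩
    haveI : CompactSpace ↥A := h.symm.compactSpace
    refine ⟨isCompact_iff_compactSpace.mpr inferInstance, ⟨(h.symm (fun _ => false) : ↥A).1,
      (h.symm (fun _ => false)).2⟩, ?_, ?_⟩
    · intro x hx
      rw [accPt_iff_nhds]
      intro U hU
      set z : ℕ → Bool := h ⟨x, hx⟩ with hz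
      set w : ℕ → ℕ → Bool := fun n => Function.update z n (!z n) with hw
      have hwz : ∀ n, w n ≠ z := by
        intro n he
        have : w n n = z n := by rw [he]
        rw [hw] at this
        simp only [Function.update_self] at this
        exact Bool.not_ne_self (z n) this
      have hconv : Tendsto w atTop (𝓝 z) := by
        rw [tendsto_pi_nhds]
        intro k
        apply tendsto_nhds_of_eventually_eq
        filter_upwards [eventually_ge_atTop (k + 1)] with n hn
        exact Function.update_of_ne (by omega) _ _
      have hconv2 : Tendsto (fun n => ((h.symm (w n) : ↥A) : ℝ)) atTop (𝓝 x) := by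
        have h1 : Tendsto (fun n => h.symm (w n)) atTop (𝓝 (h.symm z)) :=
          (h.symm.continuous.tendsto z).comp hconv
        have h2 : h.symm z = ⟨x, hx⟩ := by rw [hz, Homeomorph.symm_apply_apply]
        rw [h2] at h1
        exact (continuous_subtype_val.tendsto _).comp h1
      have hev : ∀ᶠ n in atTop, ((h.symm (w n) : ↥A) : ℝ) ∈ U := hconv2.eventually_mem hU
      obtain ⟨n, hn⟩ := hev.exists
      refine ⟨((h.symm (w n) : ↥A) : ℝ), ⟨hn, (h.symm (w n)).2⟩, ?_⟩
      intro he
      apply hwz n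
      have h3 : h.symm (w n) = ⟨x, hx⟩ := Subtype.ext he
      have := congrArg h h3
      rwa [Homeomorph.apply_symm_apply] at this
    · haveI hTD : TotallyDisconnectedSpace ↥A := by
        rw [totallyDisconnectedSpace_iff]
        rw [← Set.range_eq_univ.mpr h.symm.surjective]
        exact h.symm.isEmbedding.isTotallyDisconnected_range.mpr inferInstance
      have hTDA : IsTotallyDisconnected A := totallyDisconnectedSpace_subtype_iff.mp hTD
      by_contra hne
      obtain ⟨x, hx⟩ := Set.nonempty_iff_ne_empty.mpr hne
      rw [mem_interior_iff_mem_nhds, Metric.mem_nhds_iff] at hx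
      obtain ⟨ε, hε, hball⟩ := hx
      have hIcc : Icc x (x + ε / 2) ⊆ A := by
        intro y hy
        apply hball
        rw [mem_ball, Real.dist_eq, abs_sub_lt_iff]
        constructor <;> [skip; skip] <;> cases' hy with h1 h2 <;> linarith
      have := hTDA _ hIcc isPreconnected_Icc
      have h1 : x ∈ Icc x (x + ε / 2) := ⟨le_refl _, by linarith⟩
      have h2 : x + ε / 2 ∈ Icc x (x + ε / 2) := ⟨by linarith, le_refl _⟩
      have := this h1 h2
      linarith
  · rintro ⟨hcomp, hne, hacc, hint⟩
    exact cantor_of_good hcomp hne hacc hint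
end

section
/- Every subset of ℝ that is homeomorphic to the Cantor space is order isomorphic (with the order induced from ℝ) to the Cantor space equipped with the lexicographic order. -/
/-!
A subset of `ℝ` homeomorphic to the Cantor space is compact, perfect and totally disconnected,
hence nowhere dense. Split such a set `A` at a point outside `A` in the middle half of its convex
hull: both halves are again of the same kind, every point of the left half lies below every point
of the right half, and each half has at most `3/4` of the diameter. Iterating gives a binary tree
of pieces whose branches shrink to single points, and sending a branch to its point is a strictly
monotone bijection from the lexicographically ordered Cantor space onto `A`.
-/

open Set Filter Topology Metric PiNat

section Perfect

variable {X Y : Type*} [TopologicalSpace X] [TopologicalSpace Y]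

theorem Preperfect.nontrivial {C : Set X} (hC : Preperfect C) (hne : C.Nonempty) :
    C.Nontrivial := by
  obtain ⟨x, hx⟩ := hne
  obtain ⟨y, ⟨-, hy⟩, hyx⟩ := accPt_iff_nhds.1 (hC x hx) univ univ_mem
  exact ⟨y, hy, x, hx, hyx⟩

theorem Homeomorph.perfectSpace (h : X ≃ₜ Y) [PerfectSpace X] : PerfectSpace Y := by
  rw [perfectSpace_iff_forall_not_isolated]
  intro y
  rw [← h.apply_symm_apply y, ← h.map_punctured_nhds_eq]
  infer_instance

theorem preperfect_of_perfectSpace {s : Set X} [PerfectSpace s] : Preperfect s := by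
  refine fun x hx => accPt_iff_nhds.2 fun U hU => ?_
  obtain ⟨y, ⟨hyU, -⟩, hyx⟩ := accPt_iff_nhds.1
    (PerfectSpace.univ_preperfect ⟨x, hx⟩ trivial) _ (continuous_subtype_val.continuousAt hU)
  exact ⟨y, ⟨hyU, y.2⟩, fun h => hyx (Subtype.ext h)⟩

instance Pi.perfectSpace {ι : Type*} {π : ι → Type*} [∀ i, TopologicalSpace (π i)]
    [Infinite ι] [∀ i, Nontrivial (π i)] : PerfectSpace (∀ i, π i) := by
  classical
  refine ⟨fun x _ => accPt_iff_nhds.2 fun U hU => ?_⟩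
  obtain ⟨I, u, hu, hIU⟩ :=
    isOpen_pi_iff.1 isOpen_interior x (mem_interior_iff_mem_nhds.2 hU)
  obtain ⟨k, hk⟩ := Infinite.exists_notMem_finset I
  obtain ⟨b, hb⟩ := exists_ne (x k)
  refine ⟨Function.update x k b, ⟨interior_subset (hIU fun i hi => ?_), trivial⟩,
    fun h => hb (by simpa using congrFun h k)⟩
  rw [Function.update_of_ne (ne_of_mem_of_not_mem hi hk)]
  exact (hu i hi).2

end Perfect

section Order

variable {α : Type*} [ConditionallyCompleteLinearOrder α]

theorem Set.Nontrivial.csInf_lt_csSup {s : Set α} (hs : s.Nontrivial) (hb : BddBelow s)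
    (ha : BddAbove s) : sInf s < sSup s := by
  obtain ⟨x, hx, y, hy, hxy⟩ := hs
  rcases hxy.lt_or_gt with h | h
  · exact (csInf_le hb hx).trans_lt (h.trans_le (le_csSup ha hy))
  · exact (csInf_le hb hy).trans_lt (h.trans_le (le_csSup ha hx))

theorem IsTotallyDisconnected.dense_compl [TopologicalSpace α] [OrderTopology α]
    [DenselyOrdered α] [NoMaxOrder α] {s : Set α} (hs : IsTotallyDisconnected s) :
    Dense sᶜ := by
  rw [← interior_eq_empty_iff_dense_compl, eq_empty_iff_forall_notMem]
  intro x hx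
  obtain ⟨u, hxu, hus⟩ :=
    exists_Ico_subset_of_mem_nhds (mem_interior_iff_mem_nhds.1 hx) (exists_gt x)
  obtain ⟨y, hxy, hyu⟩ := exists_between hxu
  exact hxy.ne (hs _ hus isPreconnected_Ico ⟨le_rfl, hxu⟩ ⟨hxy.le, hyu⟩)

end Order

namespace BinarySplit

variable {α : Type*} [LinearOrder α] (c : Set α → α)

def half (K : Set α) (b : Bool) : Set α :=
  K ∩ bif b then Ioi (c K) else Iio (c K)

variable (A : Set α)

/-- Lists are read newest bit first, so that the branch of `x : ℕ → Bool` at depth `n` is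
`piece c A (PiNat.res x n)`. -/
def piece : List Bool → Set α
  | [] => A
  | b :: s => half c (piece s) b

def addressPrefix (a : α) : ℕ → List Bool
  | 0 => []
  | n + 1 => decide (c (piece c A (addressPrefix a n)) < a) :: addressPrefix a n

def address (a : α) (n : ℕ) : Bool :=
  decide (c (piece c A (addressPrefix c A a n)) < a)

variable {c A}

theorem piece_cons_subset (b : Bool) (s : List Bool) : piece c A (b :: s) ⊆ piece c A s :=
  inter_subset_left

theorem piece_subset : ∀ s, piece c A s ⊆ A
  | [] => subset_rfl
  | b :: s => (piece_cons_subset b s).trans (piece_subset s)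

theorem lt_of_mem_half {K : Set α} {a a' : α} (ha : a ∈ half c K false)
    (ha' : a' ∈ half c K true) : a < a' :=
  (ha.2 : a < c K).trans ha'.2

theorem mem_half_decide {K : Set α} {a : α} (ha : a ∈ K) (hne : a ≠ c K) :
    a ∈ half c K (decide (c K < a)) := by
  by_cases h : c K < a
  · simpa [half, h] using ha
  · simpa [half, h] using ⟨ha, lt_of_le_of_ne (not_lt.1 h) hne⟩

theorem res_address (a : α) : ∀ n, res (address c A a) n = addressPrefix c A a n
  | 0 => rfl
  | n + 1 => by rw [res_succ, res_address a n]; rfl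

theorem mem_piece_addressPrefix (hc : ∀ s, c (piece c A s) ∉ piece c A s) {a : α}
    (ha : a ∈ A) : ∀ n, a ∈ piece c A (addressPrefix c A a n)
  | 0 => ha
  | n + 1 => by
    have ih := mem_piece_addressPrefix hc ha n
    exact mem_half_decide ih (ne_of_mem_of_not_mem ih (hc _))

theorem lt_of_mem_piece_res {x y : Lex (ℕ → Bool)} (hxy : x < y) {a a' : α}
    (ha : ∀ n, a ∈ piece c A (res (ofLex x) n))
    (ha' : ∀ n, a' ∈ piece c A (res (ofLex y) n)) : a < a' := by
  obtain ⟨i, hi, hxyi⟩ := hxy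
  obtain ⟨hx, hy⟩ := Bool.lt_iff.1 hxyi
  have hres : res (ofLex x) i = res (ofLex y) i := res_eq_res.2 fun j hj => hi j hj
  have hai := ha (i + 1)
  have hai' := ha' (i + 1)
  rw [res_succ, show ofLex x i = false from hx] at hai
  rw [res_succ, show ofLex y i = true from hy, ← hres] at hai'
  exact lt_of_mem_half hai hai'

theorem nonempty_orderIso_lex (hc : ∀ s, c (piece c A s) ∉ piece c A s)
    (hA : ∀ x : ℕ → Bool, ∃! a, ∀ n, a ∈ piece c A (res x n)) :
    Nonempty (A ≃o Lex (ℕ → Bool)) := by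
  choose f hf hf_unique using hA
  let g : Lex (ℕ → Bool) → A := fun x => ⟨f (ofLex x), hf _ 0⟩
  have hg_mono : StrictMono g := fun x y hxy =>
    Subtype.mk_lt_mk.2 (lt_of_mem_piece_res hxy (hf _) (hf _))
  have hg_surj : Function.Surjective g := fun a =>
    ⟨toLex (address c A a), Subtype.ext <| (hf_unique _ a fun n =>
      res_address (c := c) (A := A) a n ▸ mem_piece_addressPrefix hc a.2 n).symm⟩
  exact ⟨(hg_mono.orderIsoOfSurjective g hg_surj).symm⟩

theorem isClosed_half [TopologicalSpace α] [OrderClosedTopology α] {K : Set α} (hK : IsClosed K)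
    (hc : c K ∉ K) (b : Bool) : IsClosed (half c K b) := by
  have hne : ∀ a ∈ K, a ≠ c K := fun a ha => ne_of_mem_of_not_mem ha hc
  cases b
  · convert hK.inter (isClosed_Iic (a := c K)) using 1
    ext a
    simp only [half, cond_false, mem_inter_iff, mem_Iio, mem_Iic]
    exact and_congr_right fun ha => (hne a ha).le_iff_lt.symm
  · convert hK.inter (isClosed_Ici (a := c K)) using 1
    ext a
    simp only [half, cond_true, mem_inter_iff, mem_Ioi, mem_Ici]
    exact and_congr_right fun ha => (hne a ha).symm.le_iff_lt.symm

theorem preperfect_half [TopologicalSpace α] [OrderTopology α] {K : Set α} (hK : Preperfect K)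
    (b : Bool) : Preperfect (half c K b) := by
  rw [half, inter_comm]
  exact hK.open_inter (by cases b <;> simp [isOpen_Ioi, isOpen_Iio])

end BinarySplit

open BinarySplit

noncomputable def midSplitPoint (K : Set ℝ) : ℝ :=
  Classical.epsilon fun c =>
    c ∉ K ∧ c ∈ Ioo ((3 * sInf K + sSup K) / 4) ((sInf K + 3 * sSup K) / 4)

theorem midSplitPoint_spec {K : Set ℝ} (hK : Dense Kᶜ) (h : sInf K < sSup K) :
    midSplitPoint K ∉ K ∧
      midSplitPoint K ∈ Ioo ((3 * sInf K + sSup K) / 4) ((sInf K + 3 * sSup K) / 4) :=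
  Classical.epsilon_spec (hK.exists_between (by linarith))

theorem half_midSplitPoint_nonempty_and_diam_le {K : Set ℝ} (hK : IsCompact K)
    (hnt : K.Nontrivial) (hd : Dense Kᶜ) (b : Bool) :
    (half midSplitPoint K b).Nonempty ∧ diam (half midSplitPoint K b) ≤ 3 / 4 * diam K := by
  have hlt := hnt.csInf_lt_csSup hK.bddBelow hK.bddAbove
  obtain ⟨-, hc₁, hc₂⟩ := midSplitPoint_spec hd hlt
  have hinf := hK.sInf_mem hnt.nonempty
  have hsup := hK.sSup_mem hnt.nonempty
  rw [Real.diam_eq hK.isBounded]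
  cases b
  · refine ⟨⟨_, hinf, (by linarith : sInf K < midSplitPoint K)⟩, ?_⟩
    have hsub : half midSplitPoint K false ⊆ Icc (sInf K) (midSplitPoint K) :=
      fun a ha => ⟨csInf_le hK.bddBelow ha.1, (ha.2 : a < _).le⟩
    have := (diam_mono hsub (isBounded_Icc _ _)).trans_eq (Real.diam_Icc (by linarith))
    linarith
  · refine ⟨⟨_, hsup, (by linarith : midSplitPoint K < sSup K)⟩, ?_⟩
    have hsub : half midSplitPoint K true ⊆ Icc (midSplitPoint K) (sSup K) :=
      fun a ha => ⟨(ha.2 : _ < a).le, le_csSup hK.bddAbove ha.1⟩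
    have := (diam_mono hsub (isBounded_Icc _ _)).trans_eq (Real.diam_Icc (by linarith))
    linarith

section PerfectNowhereDense

variable {A : Set ℝ} (hA : IsCompact A) (hperf : Preperfect A) (hd : Dense Aᶜ)
  (hne : A.Nonempty)
include hA hperf hd hne

theorem piece_midSplitPoint_spec :
    ∀ s : List Bool, IsCompact (piece midSplitPoint A s) ∧
      Preperfect (piece midSplitPoint A s) ∧ (piece midSplitPoint A s).Nonempty ∧
      diam (piece midSplitPoint A s) ≤ (3 / 4) ^ s.length * diam A
  | [] => ⟨hA, hperf, hne, by simp [piece]⟩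
  | b :: s => by
    obtain ⟨hK, hKp, hKne, hKd⟩ := piece_midSplitPoint_spec s
    have hdK : Dense (piece midSplitPoint A s)ᶜ :=
      hd.mono (compl_subset_compl.2 (piece_subset s))
    have hnt := hKp.nontrivial hKne
    obtain ⟨hcK, -⟩ := midSplitPoint_spec hdK (hnt.csInf_lt_csSup hK.bddBelow hK.bddAbove)
    obtain ⟨hne', hdiam⟩ := half_midSplitPoint_nonempty_and_diam_le hK hnt hdK b
    refine ⟨hK.of_isClosed_subset (isClosed_half hK.isClosed hcK b) inter_subset_left,
      preperfect_half hKp b, hne', hdiam.trans ?_⟩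
    rw [List.length_cons, pow_succ', mul_assoc]
    gcongr

theorem midSplitPoint_notMem_piece (s : List Bool) :
    midSplitPoint (piece midSplitPoint A s) ∉ piece midSplitPoint A s := by
  obtain ⟨hK, hKp, hKne, -⟩ := piece_midSplitPoint_spec hA hperf hd hne s
  exact (midSplitPoint_spec (hd.mono (compl_subset_compl.2 (piece_subset s)))
    ((hKp.nontrivial hKne).csInf_lt_csSup hK.bddBelow hK.bddAbove)).1

theorem existsUnique_mem_piece_midSplitPoint (x : ℕ → Bool) :
    ∃! a, ∀ n, a ∈ piece midSplitPoint A (res x n) := by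
  have hP := piece_midSplitPoint_spec hA hperf hd hne
  obtain ⟨a, ha⟩ := IsCompact.nonempty_iInter_of_sequence_nonempty_isCompact_isClosed
    (fun n => piece midSplitPoint A (res x n)) (fun n => piece_cons_subset _ _)
    (fun n => (hP _).2.2.1) (hP _).1 (fun n => (hP _).1.isClosed)
  rw [mem_iInter] at ha
  have hlim : Tendsto (fun n : ℕ => (3 / 4 : ℝ) ^ n * diam A) atTop (𝓝 0) := by
    simpa using (tendsto_pow_atTop_nhds_zero_of_lt_one (by norm_num : (0 : ℝ) ≤ 3 / 4)
      (by norm_num)).mul_const (diam A)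
  refine ⟨a, ha, fun a' ha' => dist_le_zero.1 (ge_of_tendsto' hlim fun n => ?_)⟩
  calc dist a' a ≤ diam (piece midSplitPoint A (res x n)) :=
        dist_le_diam_of_mem (hP _).1.isBounded (ha' n) (ha n)
    _ ≤ (3 / 4) ^ n * diam A := by simpa using (hP (res x n)).2.2.2

theorem nonempty_orderIso_lex_of_isCompact_of_preperfect : Nonempty (A ≃o Lex (ℕ → Bool)) :=
  nonempty_orderIso_lex (midSplitPoint_notMem_piece hA hperf hd hne)
    (existsUnique_mem_piece_midSplitPoint hA hperf hd hne)

end PerfectNowhereDense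

/-- Every subset of `ℝ` that is homeomorphic to the Cantor space is order isomorphic (with the
order induced from `ℝ`) to the Cantor space equipped with the lexicographic order. -/
theorem real_cantor_subset_orderIso_lex
    (A : Set ℝ) (h : Nonempty (A ≃ₜ (ℕ → Bool))) :
    Nonempty (A ≃o Lex (ℕ → Bool)) := by
  obtain ⟨e⟩ := h
  have : CompactSpace A := e.symm.compactSpace
  have : PerfectSpace A := e.symm.perfectSpace
  have : TotallyDisconnectedSpace A := e.symm.totallyDisconnectedSpace
  exact nonempty_orderIso_lex_of_isCompact_of_preperfect (isCompact_iff_compactSpace.2 ‹_›)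
    preperfect_of_perfectSpace (totallyDisconnectedSpace_subtype_iff.1 ‹_›).dense_compl
    ⟨_, (e.symm fun _ => false).2⟩
end

section
/- If A ⊆ ℝ is countable and dense, then ℝ \ A with the induced order is order isomorphic to the set of irrational numbers ℝ \ ℚ with the induced order. -/
/-!
Cantor's back-and-forth argument gives an order isomorphism `e : A ≃o ℚ`. Since both
sets are dense in `ℝ`, `x ↦ sup {e a | a ∈ A, a < x}` extends `e` to an order automorphism
of `ℝ`; it maps `A` onto `ℚ`, hence `ℝ \ A` onto `ℝ \ ℚ`.
-/

open Set

section Dense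

variable {α : Type*} [LinearOrder α] [TopologicalSpace α] [OrderTopology α] {A : Set α}

theorem Dense.denselyOrdered_subtype [DenselyOrdered α] (hA : Dense A) : DenselyOrdered A where
  dense _ _ hab :=
    let ⟨c, hc, hac, hcb⟩ := hA.exists_between hab
    ⟨⟨c, hc⟩, hac, hcb⟩

theorem Dense.noMinOrder_subtype [NoMinOrder α] (hA : Dense A) : NoMinOrder A where
  exists_lt a :=
    let ⟨c, hc, hca⟩ := hA.exists_lt a
    ⟨⟨c, hc⟩, hca⟩

theorem Dense.noMaxOrder_subtype [NoMaxOrder α] (hA : Dense A) : NoMaxOrder A where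
  exists_gt a :=
    let ⟨c, hc, hac⟩ := hA.exists_gt a
    ⟨⟨c, hc⟩, hac⟩

theorem Monotone.eq_id_of_eqOn_dense [DenselyOrdered α] {f : α → α} (hf : Monotone f)
    (hA : Dense A) (hfA : EqOn f id A) : f = id := by
  funext x
  rcases lt_trichotomy (f x) x with hlt | heq | hgt
  · obtain ⟨a, ha, hfxa, hax⟩ := hA.exists_between hlt
    exact absurd (hfA ha) ((hf hax.le).trans_lt hfxa).ne
  · exact heq
  · obtain ⟨a, ha, hxa, hafx⟩ := hA.exists_between hgt
    exact absurd (hfA ha) (hafx.trans_le (hf hxa.le)).ne'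

end Dense

theorem Dense.nonempty_orderIso_of_countable {α β : Type*}
    [LinearOrder α] [TopologicalSpace α] [OrderTopology α]
    [DenselyOrdered α] [NoMinOrder α] [NoMaxOrder α] [Nonempty α]
    [LinearOrder β] [TopologicalSpace β] [OrderTopology β]
    [DenselyOrdered β] [NoMinOrder β] [NoMaxOrder β] [Nonempty β]
    {A : Set α} {B : Set β} (hA : Dense A) (hB : Dense B) (hAc : A.Countable)
    (hBc : B.Countable) : Nonempty (A ≃o B) := by
  have := hAc.to_subtype
  have := hBc.to_subtype
  have := hA.nonempty.to_subtype
  have := hB.nonempty.to_subtype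
  have := hA.denselyOrdered_subtype
  have := hB.denselyOrdered_subtype
  have := hA.noMinOrder_subtype
  have := hB.noMinOrder_subtype
  have := hA.noMaxOrder_subtype
  have := hB.noMaxOrder_subtype
  exact Order.iso_of_countable_dense A B

namespace OrderIso

def subtypeEquiv {α β : Type*} [LE α] [LE β] {p : α → Prop} {q : β → Prop}
    (e : α ≃o β) (h : ∀ a, p a ↔ q (e a)) : {a // p a} ≃o {b // q b} where
  toEquiv := e.toEquiv.subtypeEquiv h
  map_rel_iff' := e.le_iff_le

section DenseExtend

variable {α β : Type*} {A : Set α} {B : Set β}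

section

variable [LinearOrder α] [ConditionallyCompleteLinearOrder β]

def denseExtend (e : A ≃o B) (x : α) : β :=
  sSup ((fun a : A => (e a : β)) '' {a | (a : α) < x})

variable [TopologicalSpace α] [OrderTopology α] [DenselyOrdered α]
  [NoMinOrder α] [NoMaxOrder α]

theorem lt_denseExtend_iff (hA : Dense A) (e : A ≃o B) {a : A} {x : α} :
    (e a : β) < e.denseExtend x ↔ (a : α) < x := by
  constructor
  · intro h
    by_contra! hxa
    obtain ⟨y, hy, hyx⟩ := hA.exists_lt x
    refine h.not_ge (csSup_le ⟨_, ⟨⟨y, hy⟩, hyx, rfl⟩⟩ ?_)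
    rintro _ ⟨a', ha', rfl⟩
    exact e.monotone (ha'.trans_le hxa).le
  · intro h
    obtain ⟨y, hy, hay, hyx⟩ := hA.exists_between h
    obtain ⟨z, hz, hxz⟩ := hA.exists_gt x
    have hbdd : BddAbove ((fun a : A => (e a : β)) '' {a | (a : α) < x}) := by
      refine ⟨e ⟨z, hz⟩, ?_⟩
      rintro _ ⟨a', ha', rfl⟩
      exact e.monotone (ha'.trans hxz).le
    calc (e a : β) < e ⟨y, hy⟩ := e.strictMono hay
      _ ≤ e.denseExtend x := le_csSup hbdd ⟨⟨y, hy⟩, hyx, rfl⟩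

theorem denseExtend_strictMono (hA : Dense A) (e : A ≃o B) : StrictMono e.denseExtend := by
  intro x y hxy
  obtain ⟨a, ha, hxa, hay⟩ := hA.exists_between hxy
  calc e.denseExtend x ≤ e ⟨a, ha⟩ :=
        not_lt.1 fun h => lt_asymm hxa ((lt_denseExtend_iff hA e).1 h)
    _ < e.denseExtend y := (lt_denseExtend_iff hA e).2 hay

theorem denseExtend_coe [TopologicalSpace β] [OrderTopology β] [DenselyOrdered β]
    (hA : Dense A) (hB : Dense B) (e : A ≃o B) (a : A) : e.denseExtend a = e a := by
  refine le_antisymm (not_lt.1 fun h => ((lt_denseExtend_iff hA e).1 h).false)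
    (not_lt.1 fun h => ?_)
  obtain ⟨b, hb, hab, hba⟩ := hB.exists_between h
  have hlt : e.symm ⟨b, hb⟩ < a := by
    simpa using e.symm.strictMono (show (⟨b, hb⟩ : B) < e a from hba)
  have := (lt_denseExtend_iff hA e).2 hlt
  rw [apply_symm_apply] at this
  exact lt_asymm hab this

end

variable [ConditionallyCompleteLinearOrder α] [TopologicalSpace α] [OrderTopology α]
  [DenselyOrdered α] [NoMinOrder α] [NoMaxOrder α]
  [ConditionallyCompleteLinearOrder β] [TopologicalSpace β] [OrderTopology β]
  [DenselyOrdered β] [NoMinOrder β] [NoMaxOrder β]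

theorem denseExtend_symm_denseExtend (hA : Dense A) (hB : Dense B) (e : A ≃o B) (x : α) :
    e.symm.denseExtend (e.denseExtend x) = x := by
  have hmono : Monotone (e.symm.denseExtend ∘ e.denseExtend) :=
    ((denseExtend_strictMono hB e.symm).comp (denseExtend_strictMono hA e)).monotone
  have hfix : EqOn (e.symm.denseExtend ∘ e.denseExtend) id A := fun a ha => by
    simp [denseExtend_coe hA hB e ⟨a, ha⟩, denseExtend_coe hB hA e.symm]
  exact congrFun (hmono.eq_id_of_eqOn_dense hA hfix) x

def denseExtendIso (hA : Dense A) (hB : Dense B) (e : A ≃o B) : α ≃o β where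
  toFun := e.denseExtend
  invFun := e.symm.denseExtend
  left_inv := denseExtend_symm_denseExtend hA hB e
  right_inv := denseExtend_symm_denseExtend hB hA e.symm
  map_rel_iff' := (denseExtend_strictMono hA e).le_iff_le

theorem denseExtendIso_mem_iff (hA : Dense A) (hB : Dense B) (e : A ≃o B) (x : α) :
    e.denseExtendIso hA hB x ∈ B ↔ x ∈ A := by
  refine ⟨fun hx => ?_, fun hx => ?_⟩
  · have hx' : e.denseExtend x ∈ B := hx
    rw [← denseExtend_symm_denseExtend hA hB e x,
      show e.denseExtend x = ((⟨_, hx'⟩ : B) : β) from rfl, denseExtend_coe hB hA]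
    exact Subtype.prop _
  · show e.denseExtend ((⟨x, hx⟩ : A) : α) ∈ B
    rw [denseExtend_coe hA hB]
    exact Subtype.prop _

end DenseExtend

end OrderIso

/-- If `A ⊆ ℝ` is countable and dense, then `ℝ \ A` with the induced order is order isomorphic
to the set of irrational numbers with the induced order. -/
theorem compl_countable_dense_orderIso_irrational
    (A : Set ℝ) (hc : A.Countable) (hd : Dense A) :
    Nonempty ((Aᶜ : Set ℝ) ≃o ({x : ℝ | Irrational x} : Set ℝ)) := by
  have hQ : Dense (range ((↑) : ℚ → ℝ)) := Rat.denseRange_cast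
  obtain ⟨e⟩ := hd.nonempty_orderIso_of_countable hQ hc (countable_range _)
  exact ⟨(e.denseExtendIso hd hQ).subtypeEquiv fun x =>
    not_congr (e.denseExtendIso_mem_iff hd hQ x).symm⟩
end

section
/- Let f be an additive coloring of pairs from a dense infinite linear order X into a finite semigroup C, i.e. f(x,z) = f(x,y) + f(y,z) whenever x < y < z. Then X has a homogeneous subset (all pairs get the same color) that is somewhere dense in the order topology. -/
open Set

section Aux

variable {X : Type*} [LinearOrder X] [DenselyOrdered X]
  [TopologicalSpace X] [OrderTopology X]

/-- If a finite union of sets is dense in a nonempty open interval, one of the sets is dense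
in some nonempty open subinterval. -/
lemma aux_somewhere_dense_of_finite_union {ι : Type*} [DecidableEq ι] (s : Finset ι)
    (D : ι → Set X) :
    ∀ u v : X, u < v → (Ioo u v ⊆ closure (⋃ i ∈ s, D i)) →
    ∃ i ∈ s, ∃ u' v' : X, u' < v' ∧ Ioo u' v' ⊆ Ioo u v ∧
      Ioo u' v' ⊆ closure (D i ∩ Ioo u' v') := by
  induction s using Finset.induction_on with
  | empty =>
    intro u v huv h
    obtain ⟨z, hz⟩ := exists_between huv
    have := h hz
    simp at this
  | insert a t hi ih =>
    intro u v huv h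
    by_cases hcase : ∃ u' v' : X, u' < v' ∧ Ioo u' v' ⊆ Ioo u v ∧
        Ioo u' v' ⊆ closure (D a ∩ Ioo u' v')
    · obtain ⟨u', v', h1, h2, h3⟩ := hcase
      exact ⟨a, Finset.mem_insert_self a t, u', v', h1, h2, h3⟩
    · -- D a is not dense in any subinterval, so some subinterval avoids closure (D a)
      have hW : ∃ z ∈ Ioo u v, z ∉ closure (D a) := by
        by_contra hc
        push_neg at hc
        exact hcase ⟨u, v, huv, Subset.rfl, fun z hz => by
          have := isOpen_Ioo.inter_closure (t := D a) ⟨hz, hc z hz⟩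
          rwa [inter_comm] at this⟩
      obtain ⟨z, hzuv, hz⟩ := hW
      have hWopen : IsOpen (Ioo u v \ closure (D a)) :=
        isOpen_Ioo.sdiff isClosed_closure
      have hmem : (Ioo u v \ closure (D a)) ∈ nhds z :=
        hWopen.mem_nhds ⟨hzuv, hz⟩
      obtain ⟨l, r, hzlr, hlr⟩ :=
        (mem_nhds_iff_exists_Ioo_subset' ⟨u, hzuv.1⟩ ⟨v, hzuv.2⟩).1 hmem
      have hlrlt : l < r := lt_trans hzlr.1 hzlr.2
      have hsub : Ioo l r ⊆ Ioo u v := fun w hw => (hlr hw).1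
      have hdense : Ioo l r ⊆ closure (⋃ i ∈ t, D i) := by
        intro w hw
        have hw2 := h (hsub hw)
        rw [Finset.set_biUnion_insert, closure_union] at hw2
        rcases hw2 with hw2 | hw2
        · exact absurd hw2 (hlr hw).2
        · exact hw2
      obtain ⟨i, hit, u', v', h1, h2, h3⟩ := ih l r hlrlt hdense
      exact ⟨i, Finset.mem_insert_of_mem hit, u', v', h1, h2.trans hsub, h3⟩

/-- A set dense in an interval meets every nonempty open subinterval. -/
lemma aux_exists_mem {A : Set X} {u v : X} (h : Ioo u v ⊆ closure A) {a b : X}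
    (hab : a < b) (hsub : Ioo a b ⊆ Ioo u v) : ∃ x ∈ A, x ∈ Ioo a b := by
  obtain ⟨m, hm⟩ := exists_between hab
  have hmc := h (hsub hm)
  rw [mem_closure_iff] at hmc
  obtain ⟨y, hy1, hy2⟩ := hmc (Ioo a b) isOpen_Ioo hm
  exact ⟨y, hy2, hy1⟩

variable {C : Type*} [AddSemigroup C]

/-- Main recursion: given a set `A` dense in `(u,v)` all of whose pair colors lie in `S`,
find a homogeneous set dense in some interval. -/
lemma aux_main (f : X → X → C)
    (hadd : ∀ x y z : X, x < y → y < z → f x z = f x y + f y z) :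
    ∀ (n : ℕ) (S : Finset C), S.card ≤ n → ∀ (A : Set X) (u v : X), u < v →
      A ⊆ Ioo u v → Ioo u v ⊆ closure A →
      (∀ a ∈ A, ∀ b ∈ A, a < b → f a b ∈ S) →
      ∃ (A' : Set X) (c : C) (u' v' : X), u' < v' ∧ A' ⊆ Ioo u' v' ∧
        Ioo u' v' ⊆ closure A' ∧ (∀ a ∈ A', ∀ b ∈ A', a < b → f a b = c) := by
  classical
  intro n
  induction n with
  | zero =>
    intro S hS A u v huv hAsub hdense hcol
    -- derive a contradiction: A has two elements but S is empty
    obtain ⟨z, hz⟩ := exists_between huv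
    obtain ⟨w, hw⟩ := exists_between hz.2
    obtain ⟨x₀, hx₀A, hx₀⟩ := aux_exists_mem hdense hz.1
      (fun y hy => ⟨hy.1, lt_trans hy.2 hz.2⟩)
    obtain ⟨y₀, hy₀A, hy₀⟩ := aux_exists_mem hdense hw.2
      (fun y hy => ⟨lt_trans (lt_trans hz.1 hw.1) hy.1, hy.2⟩)
    have hxy : x₀ < y₀ := lt_trans hx₀.2 (lt_trans hw.1 hy₀.1)
    have := hcol x₀ hx₀A y₀ hy₀A hxy
    have hS0 : S = ∅ := Finset.card_eq_zero.1 (Nat.le_zero.1 hS)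
    rw [hS0] at this
    exact absurd this (Finset.notMem_empty _)
  | succ n ih =>
    intro S hS A u v huv hAsub hdense hcol
    -- pick basepoints x₀ < y₀ in A with a nonempty interval between them
    obtain ⟨z, hz⟩ := exists_between huv
    obtain ⟨w, hw⟩ := exists_between hz.2
    obtain ⟨x₀, hx₀A, hx₀⟩ := aux_exists_mem hdense hz.1
      (fun y hy => ⟨hy.1, lt_trans hy.2 hz.2⟩)
    obtain ⟨y₀, hy₀A, hy₀⟩ := aux_exists_mem hdense hw.2
      (fun y hy => ⟨lt_trans (lt_trans hz.1 hw.1) hy.1, hy.2⟩)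
    have hxy : x₀ < y₀ := lt_trans hx₀.2 (lt_trans hw.1 hy₀.1)
    have hx₀u : u < x₀ := hx₀.1
    have hy₀v : y₀ < v := hy₀.2
    have hIoosub : Ioo x₀ y₀ ⊆ Ioo u v := fun p hp =>
      ⟨lt_trans hx₀u hp.1, lt_trans hp.2 hy₀v⟩
    -- the classes
    set D : C × C → Set X :=
      fun p => {q | q ∈ A ∧ q ∈ Ioo x₀ y₀ ∧ f x₀ q = p.1 ∧ f q y₀ = p.2} with hD
    have hcover : Ioo x₀ y₀ ⊆ closure (⋃ p ∈ S ×ˢ S, D p) := by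
      intro q hq
      have h1 : q ∈ closure A := hdense (hIoosub hq)
      have h2 : q ∈ closure (Ioo x₀ y₀ ∩ A) := isOpen_Ioo.inter_closure ⟨hq, h1⟩
      refine closure_mono ?_ h2
      rintro r ⟨hr1, hr2⟩
      have hc1 : f x₀ r ∈ S := hcol x₀ hx₀A r hr2 hr1.1
      have hc2 : f r y₀ ∈ S := hcol r hr2 y₀ hy₀A hr1.2
      exact mem_biUnion (Finset.mem_product.2 ⟨hc1, hc2⟩)
        (⟨hr2, hr1, rfl, rfl⟩ : r ∈ D (f x₀ r, f r y₀))
    obtain ⟨⟨c, d⟩, hpmem, u₁, v₁, h₁lt, h₁sub, h₁dense⟩ :=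
      aux_somewhere_dense_of_finite_union (S ×ˢ S) D x₀ y₀ hxy hcover
    have hcS : c ∈ S := (Finset.mem_product.1 hpmem).1
    have hdS : d ∈ S := (Finset.mem_product.1 hpmem).2
    set B : Set X := D (c, d) ∩ Ioo u₁ v₁ with hB
    have hBsub : B ⊆ Ioo u₁ v₁ := fun p hp => hp.2
    have hBsub' : Ioo u₁ v₁ ⊆ Ioo x₀ y₀ := h₁sub
    have hBdense : Ioo u₁ v₁ ⊆ closure B := h₁dense
    -- pair colors of B
    have hBcol : ∀ a ∈ B, ∀ b ∈ B, a < b → f a b ∈ S ∧ c + f a b = c ∧ f a b + d = d := by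
      rintro a ⟨⟨haA, haI, hac, had⟩, -⟩ b ⟨⟨hbA, hbI, hbc, hbd⟩, -⟩ hab
      refine ⟨hcol a haA b hbA hab, ?_, ?_⟩
      · have := hadd x₀ a b haI.1 hab
        rw [hbc, hac] at this
        exact this.symm
      · have := hadd a b y₀ hab hbI.2
        rw [had, hbd] at this
        exact this.symm
    set S' : Finset C := S.filter (fun t => c + t = c ∧ t + d = d) with hS'def
    have hS'sub : S' ⊆ S := Finset.filter_subset _ _
    by_cases hS' : S' = S
    · -- stall case: c = d is an idempotent zero of S
      have hcmem : c ∈ S' := hS' ▸ hcS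
      have hdmem : d ∈ S' := hS' ▸ hdS
      have hc' := (Finset.mem_filter.1 hcmem).2
      have hd' := (Finset.mem_filter.1 hdmem).2
      have hcd : c = d := by
        have h1 : c + d = d := hc'.2
        have h2 : c + d = c := hd'.1
        rw [h2] at h1; exact h1
      have hzero : ∀ t ∈ S, c + t = c ∧ t + c = c := by
        intro t ht
        have : t ∈ S' := hS' ▸ ht
        have h := (Finset.mem_filter.1 this).2
        exact ⟨h.1, by rw [hcd]; exact h.2⟩
      by_cases hrec : ∀ u₂ v₂ : X, u₂ < v₂ → Ioo u₂ v₂ ⊆ Ioo u₁ v₁ →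
          ∃ p q : X, p ∈ B ∧ q ∈ B ∧ p ∈ Ioo u₂ v₂ ∧ q ∈ Ioo u₂ v₂ ∧ p < q ∧ f p q = c
      · -- e-pairs everywhere: B itself is homogeneous with color c
        refine ⟨B, c, u₁, v₁, h₁lt, hBsub, hBdense, ?_⟩
        intro a ha b hb hab
        have haI := hBsub ha
        have hbI := hBsub hb
        have hsub2 : Ioo a b ⊆ Ioo u₁ v₁ := fun p hp =>
          ⟨lt_trans haI.1 hp.1, lt_trans hp.2 hbI.2⟩
        obtain ⟨p, q, hpB, hqB, hpI, hqI, hpq, hfpq⟩ := hrec a b hab hsub2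
        have hap : a < p := hpI.1
        have hqb : q < b := hqI.2
        have hpb : p < b := lt_trans hpq hqb
        have h1 : f a b = f a p + f p b := hadd a p b hap hpb
        have h2 : f p b = f p q + f q b := hadd p q b hpq hqb
        have hfqb : f q b ∈ S := (hBcol q hqB b hb hqb).1
        have hfap : f a p ∈ S := (hBcol a ha p hpB hap).1
        rw [h2, hfpq, (hzero _ hfqb).1] at h1
        rw [(hzero _ hfap).2] at h1
        exact h1
      · -- some subinterval has no c-pairs: remove c from S
        push_neg at hrec
        obtain ⟨u₂, v₂, h₂lt, h₂sub, h₂nc⟩ := hrec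
        set A₂ : Set X := B ∩ Ioo u₂ v₂ with hA₂
        have hA₂sub : A₂ ⊆ Ioo u₂ v₂ := fun p hp => hp.2
        have hA₂dense : Ioo u₂ v₂ ⊆ closure A₂ := by
          intro p hp
          have h1 : p ∈ closure B := hBdense (h₂sub hp)
          have h2 : p ∈ closure (Ioo u₂ v₂ ∩ B) := isOpen_Ioo.inter_closure ⟨hp, h1⟩
          rwa [inter_comm] at h2
        have hA₂col : ∀ a ∈ A₂, ∀ b ∈ A₂, a < b → f a b ∈ S.erase c := by
          rintro a ⟨haB, haI⟩ b ⟨hbB, hbI⟩ hab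
          refine Finset.mem_erase.2 ⟨?_, (hBcol a haB b hbB hab).1⟩
          exact h₂nc a b haB hbB haI hbI hab
        have hcard : (S.erase c).card ≤ n := by
          have := Finset.card_erase_of_mem hcS
          omega
        exact ih (S.erase c) hcard A₂ u₂ v₂ h₂lt hA₂sub hA₂dense hA₂col
    · -- strict decrease case
      have hssub : S' ⊂ S := Finset.ssubset_iff_subset_ne.2 ⟨hS'sub, hS'⟩
      have hcard : S'.card ≤ n := by
        have := Finset.card_lt_card hssub
        omega
      have hBcol' : ∀ a ∈ B, ∀ b ∈ B, a < b → f a b ∈ S' := by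
        intro a ha b hb hab
        obtain ⟨h1, h2, h3⟩ := hBcol a ha b hb hab
        exact Finset.mem_filter.2 ⟨h1, h2, h3⟩
      exact ih S' hcard B u₁ v₁ h₁lt hBsub hBdense hBcol'

end Aux

/-- Let `f` be an additive coloring of pairs from a dense infinite linear order `X` (with the
order topology) into a finite semigroup `C`, i.e. `f x z = f x y + f y z` whenever
`x < y < z`. Then `X` has a homogeneous subset that is somewhere dense in the order topology,
i.e. dense in some nonempty open interval. -/
theorem additive_coloring_somewhere_dense_homogeneous
    {X : Type*} [LinearOrder X] [DenselyOrdered X] [Infinite X]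
    [TopologicalSpace X] [OrderTopology X]
    {C : Type*} [AddSemigroup C] [Finite C]
    (f : X → X → C)
    (hadd : ∀ x y z : X, x < y → y < z → f x z = f x y + f y z) :
    ∃ (A : Set X) (c : C),
      (∀ a ∈ A, ∀ b ∈ A, a < b → f a b = c) ∧
      ∃ u v : X, u < v ∧ (Set.Ioo u v).Nonempty ∧
        Set.Ioo u v ⊆ closure (A ∩ Set.Ioo u v) := by
  classical
  have : Fintype C := Fintype.ofFinite C
  obtain ⟨x, y, hxy⟩ := exists_pair_ne X
  rcases hxy.lt_or_gt with h | h
  case _ =>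
    obtain ⟨A', c, u', v', h1, h2, h3, h4⟩ :=
      aux_main f hadd (Finset.univ : Finset C).card Finset.univ le_rfl
        (Set.Ioo x y) x y h Set.Subset.rfl subset_closure
        (fun a _ b _ _ => Finset.mem_univ _)
    refine ⟨A', c, h4, u', v', h1, nonempty_Ioo.2 h1, ?_⟩
    rwa [Set.inter_eq_self_of_subset_left h2]
  case _ =>
    obtain ⟨A', c, u', v', h1, h2, h3, h4⟩ :=
      aux_main f hadd (Finset.univ : Finset C).card Finset.univ le_rfl
        (Set.Ioo y x) y x h Set.Subset.rfl subset_closure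
        (fun a _ b _ _ => Finset.mem_univ _)
    refine ⟨A', c, h4, u', v', h1, nonempty_Ioo.2 h1, ?_⟩
    rwa [Set.inter_eq_self_of_subset_left h2]
end

section
/- Let C ⊆ ℝ be compact, U an open neighborhood of C, and D₁, D₂ ⊆ ℝ dense sets. Then there exist finitely many pairwise distinct points a₁,…,aₙ ∈ D₁ and b₁,…,bₙ ∈ D₂ such that the open intervals (aᵢ, bᵢ) are pairwise disjoint and C ⊆ ⋃ᵢ (aᵢ, bᵢ) ⊆ U. -/
lemma disjointify : ∀ (n : ℕ) (s : Finset (ℝ × ℝ)), s.card ≤ n →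
    ∃ t : Finset (ℝ × ℝ),
      (∀ p ∈ t, ∀ q ∈ t, p ≠ q → Disjoint (Set.Ioo p.1 p.2) (Set.Ioo q.1 q.2)) ∧
      (⋃ p ∈ t, Set.Ioo p.1 p.2) = ⋃ p ∈ s, Set.Ioo p.1 p.2 := by
  intro n
  induction n with
  | zero =>
    intro s hs
    have : s = ∅ := Finset.card_eq_zero.1 (Nat.le_zero.1 hs)
    subst this
    exact ⟨∅, by simp, rfl⟩
  | succ n ih =>
    intro s hs
    by_cases h : ∀ p ∈ s, ∀ q ∈ s, p ≠ q → Disjoint (Set.Ioo p.1 p.2) (Set.Ioo q.1 q.2)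
    · exact ⟨s, h, rfl⟩
    push_neg at h
    obtain ⟨p, hp, q, hq, hpq, hnd⟩ := h
    obtain ⟨x, hxp, hxq⟩ := Set.not_disjoint_iff.1 hnd
    have hunion : Set.Ioo p.1 p.2 ∪ Set.Ioo q.1 q.2
        = Set.Ioo (min p.1 q.1) (max p.2 q.2) :=
      Set.Ioo_union_Ioo' (lt_trans hxq.1 hxp.2) (lt_trans hxp.1 hxq.2)
    have hq' : q ∈ s.erase p := Finset.mem_erase.2 ⟨hpq.symm, hq⟩
    set s' : Finset (ℝ × ℝ) := insert (min p.1 q.1, max p.2 q.2) ((s.erase p).erase q) with hs'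
    have hcard : s'.card ≤ n := by
      have h1 : ((s.erase p).erase q).card = s.card - 2 := by
        rw [Finset.card_erase_of_mem hq', Finset.card_erase_of_mem hp]; omega
      have h2 : 2 ≤ s.card := Finset.one_lt_card.2 ⟨p, hp, q, hq, hpq⟩
      have h3 : s'.card ≤ ((s.erase p).erase q).card + 1 := Finset.card_insert_le _ _
      omega
    obtain ⟨t, ht, hte⟩ := ih s' hcard
    refine ⟨t, ht, hte.trans ?_⟩
    rw [hs', Finset.set_biUnion_insert]
    conv_rhs => rw [← Finset.insert_erase hp, Finset.set_biUnion_insert,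
      ← Finset.insert_erase hq', Finset.set_biUnion_insert]
    rw [← Set.union_assoc, hunion]

/-- Let `C ⊆ ℝ` be compact, `U` an open neighborhood of `C`, and `D₁, D₂ ⊆ ℝ` dense.
Then there are finitely many pairwise distinct points `a i ∈ D₁`, `b i ∈ D₂` such that the open
intervals `(a i, b i)` are pairwise disjoint and `C ⊆ ⋃ i, (a i, b i) ⊆ U`. -/
theorem compact_cover_by_intervals_with_dense_endpoints
    (C U D₁ D₂ : Set ℝ) (hC : IsCompact C) (hU : IsOpen U) (hCU : C ⊆ U)
    (hD₁ : Dense D₁) (hD₂ : Dense D₂) :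
    ∃ (n : ℕ) (a b : Fin n → ℝ),
      Function.Injective a ∧ Function.Injective b ∧ (∀ i j, a i ≠ b j) ∧
      (∀ i, a i ∈ D₁) ∧ (∀ i, b i ∈ D₂) ∧
      (Pairwise fun i j => Disjoint (Set.Ioo (a i) (b i)) (Set.Ioo (a j) (b j))) ∧
      C ⊆ ⋃ i, Set.Ioo (a i) (b i) ∧ (⋃ i, Set.Ioo (a i) (b i)) ⊆ U := by
  classical
  -- Step 1: for each x ∈ C choose an interval around x inside U
  have step1 : ∀ x ∈ C, ∃ p : ℝ × ℝ, x ∈ Set.Ioo p.1 p.2 ∧ Set.Ioo p.1 p.2 ⊆ U := by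
    intro x hx
    obtain ⟨ε, hε, hball⟩ := Metric.isOpen_iff.1 hU x (hCU hx)
    refine ⟨(x - ε, x + ε), by constructor <;> simp [hε], ?_⟩
    intro y hy
    simp only [Set.mem_Ioo] at hy
    apply hball
    simp only [Metric.mem_ball, Real.dist_eq, abs_lt]
    constructor <;> linarith [hy.1, hy.2]
  choose! P hP hPU using step1
  -- Step 2: finite subcover
  obtain ⟨t₀, ht₀C, ht₀fin, ht₀cov⟩ := hC.elim_finite_subcover_image
    (fun x (_ : x ∈ C) => isOpen_Ioo (a := (P x).1) (b := (P x).2))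
    (fun x hx => Set.mem_biUnion hx (hP x hx))
  set s₀ : Finset (ℝ × ℝ) := ht₀fin.toFinset.image P with hs₀
  have hs₀U : (⋃ p ∈ s₀, Set.Ioo p.1 p.2) ⊆ U := by
    intro y hy
    simp only [hs₀, Finset.mem_image, Set.Finite.mem_toFinset, Set.mem_iUnion] at hy
    obtain ⟨p, ⟨⟨z, hz, rfl⟩, hyp⟩⟩ := hy
    exact hPU z (ht₀C hz) hyp
  have hs₀C : C ⊆ ⋃ p ∈ s₀, Set.Ioo p.1 p.2 := by
    intro y hy
    obtain ⟨z, hz, hyz⟩ := Set.mem_iUnion₂.1 (ht₀cov hy)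
    exact Set.mem_biUnion (Finset.mem_image_of_mem P (ht₀fin.mem_toFinset.2 hz)) hyz
  -- Step 3: disjointify
  obtain ⟨t, htdis, htun⟩ := disjointify s₀.card s₀ le_rfl
  have htC : C ⊆ ⋃ p ∈ t, Set.Ioo p.1 p.2 := htun ▸ hs₀C
  have htU : (⋃ p ∈ t, Set.Ioo p.1 p.2) ⊆ U := htun ▸ hs₀U
  -- the compact piece of C inside each interval
  set K : ℝ × ℝ → Set ℝ := fun p => C \ ⋃ q ∈ t.erase p, Set.Ioo q.1 q.2 with hK
  have hKcomp : ∀ p, IsCompact (K p) := by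
    intro p
    apply hC.diff
    exact isOpen_biUnion fun q _ => isOpen_Ioo
  have hKsub : ∀ p ∈ t, K p ⊆ Set.Ioo p.1 p.2 := by
    intro p hp y hy
    obtain ⟨q, hq, hyq⟩ := Set.mem_iUnion₂.1 (htC hy.1)
    rcases eq_or_ne q p with rfl | hne
    · exact hyq
    · exact absurd (Set.mem_biUnion (Finset.mem_erase.2 ⟨hne, hq⟩) hyq) hy.2
  have hKcov : ∀ y ∈ C, ∃ p ∈ t, y ∈ K p := by
    intro y hy
    obtain ⟨p, hp, hyp⟩ := Set.mem_iUnion₂.1 (htC hy)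
    refine ⟨p, hp, hy, ?_⟩
    intro hmem
    obtain ⟨q, hq, hyq⟩ := Set.mem_iUnion₂.1 hmem
    have hq' := Finset.mem_erase.1 hq
    exact (htdis q hq'.2 p hp hq'.1).le_bot ⟨hyq, hyp⟩
  set t' : Finset (ℝ × ℝ) := t.filter (fun p => (K p).Nonempty) with ht'
  -- Step 4: choose endpoints in the dense sets
  have step4 : ∀ p ∈ t', ∃ a b : ℝ, a ∈ D₁ ∧ b ∈ D₂ ∧ a ∈ Set.Ioo p.1 p.2 ∧
      b ∈ Set.Ioo p.1 p.2 ∧ a < b ∧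
      Set.Ioo a b ⊆ Set.Ioo p.1 p.2 ∧ K p ⊆ Set.Ioo a b := by
    intro p hp
    obtain ⟨hpt, hpne⟩ := Finset.mem_filter.1 hp
    have hKs := hKsub p hpt
    have hInf : sInf (K p) ∈ K p := (hKcomp p).sInf_mem hpne
    have hSup : sSup (K p) ∈ K p := (hKcomp p).sSup_mem hpne
    have h1 : p.1 < sInf (K p) := (hKs hInf).1
    have h2 : sSup (K p) < p.2 := (hKs hSup).2
    obtain ⟨a, haD, haI⟩ := hD₁.exists_mem_open isOpen_Ioo (Set.nonempty_Ioo.2 h1)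
    obtain ⟨b, hbD, hbI⟩ := hD₂.exists_mem_open isOpen_Ioo (Set.nonempty_Ioo.2 h2)
    have hIS : sInf (K p) ≤ sSup (K p) :=
      csInf_le_csSup hpne (hKcomp p).bddBelow (hKcomp p).bddAbove
    refine ⟨a, b, haD, hbD, ⟨haI.1, by linarith [haI.2]⟩,
      ⟨by linarith [hbI.1], hbI.2⟩, by linarith [haI.2, hbI.1],
      Set.Ioo_subset_Ioo haI.1.le hbI.2.le, ?_⟩
    intro y hy
    exact ⟨lt_of_lt_of_le haI.2 (csInf_le
      (hKcomp p).bddBelow hy), lt_of_le_of_lt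
      (le_csSup (hKcomp p).bddAbove hy) hbI.1⟩
  choose! A B hAD hBD hAI hBI hAB hABsub hABcov using step4
  -- Step 5: index by Fin n
  set n := t'.card with hn
  set e := t'.equivFin.symm with he
  have hmem : ∀ p : t', (p : ℝ × ℝ) ∈ t' := fun p => p.2
  have hmemt : ∀ p : t', (p : ℝ × ℝ) ∈ t := fun p => (Finset.mem_filter.1 p.2).1
  have hdis' : ∀ p q : t', p ≠ q →
      Disjoint (Set.Ioo (p : ℝ × ℝ).1 (p : ℝ × ℝ).2) (Set.Ioo (q : ℝ × ℝ).1 (q : ℝ × ℝ).2) :=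
    fun p q h => htdis _ (hmemt p) _ (hmemt q) (fun hc => h (Subtype.ext hc))
  have hene : ∀ i j : Fin n, i ≠ j → e i ≠ e j := fun i j h hc => h (e.injective hc)
  refine ⟨n, fun i => A (e i), fun i => B (e i), ?_, ?_, ?_, ?_, ?_, ?_, ?_, ?_⟩
  · -- injectivity of a
    intro i j h
    by_contra hne
    simp only at h
    have h2 := hAI _ (hmem (e j))
    rw [← h] at h2
    exact Set.disjoint_left.1 (hdis' _ _ (hene i j hne)) (hAI _ (hmem (e i))) h2
  · -- injectivity of b
    intro i j h
    by_contra hne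
    simp only at h
    have h2 := hBI _ (hmem (e j))
    rw [← h] at h2
    exact Set.disjoint_left.1 (hdis' _ _ (hene i j hne)) (hBI _ (hmem (e i))) h2
  · -- a i ≠ b j
    intro i j h
    simp only at h
    rcases eq_or_ne i j with rfl | hne
    · exact absurd h (ne_of_lt (hAB _ (hmem (e i))))
    · have h2 := hBI _ (hmem (e j))
      rw [← h] at h2
      exact Set.disjoint_left.1 (hdis' _ _ (hene i j hne)) (hAI _ (hmem (e i))) h2
  · exact fun i => hAD _ (hmem (e i))
  · exact fun i => hBD _ (hmem (e i))
  · -- pairwise disjoint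
    intro i j hne
    exact (hdis' _ _ (hene i j hne)).mono (hABsub _ (hmem (e i))) (hABsub _ (hmem (e j)))
  · -- C covered
    intro y hy
    obtain ⟨p, hp, hyp⟩ := hKcov y hy
    have hp' : p ∈ t' := Finset.mem_filter.2 ⟨hp, ⟨y, hyp⟩⟩
    refine Set.mem_iUnion.2 ⟨e.symm ⟨p, hp'⟩, ?_⟩
    simp only [Equiv.apply_symm_apply]
    exact hABcov p hp' hyp
  · -- union inside U
    intro y hy
    obtain ⟨i, hyi⟩ := Set.mem_iUnion.1 hy
    exact htU (Set.mem_biUnion (hmemt (e i)) (hABsub _ (hmem (e i)) hyi))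
end

section
/- Let A ⊆ ℝ be a meager F_σ set, let (Bₙ) be a sequence of nonempty closed subsets of ℝ with B = ⋃ₙ Bₙ, such that A, B₁, B₂, … are pairwise disjoint and every nonempty open subset of ℝ contains some Bₙ as a subset. Then there exists a Cantor set C ⊆ ℝ (homeomorphic to the Cantor space minus endpoints) such that: C is disjoint from A, B is meager in C, and each nonempty open subset of C contains some Bₙ. -/
set_option maxHeartbeats 2000000

open Set Filter Topology PiNat CantorScheme Metric Bornology

/-- The Cantor space minus its two endpoints (the constant-false and constant-true sequences). -/
def CantorMinusEnds : Set (ℕ → Bool) :=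
  {x | x ≠ (fun _ => false) ∧ x ≠ (fun _ => true)}


namespace CantorAvoid

structure BNode (C : Set ℝ) where
  u : ℝ
  v : ℝ
  hlt : u < v
  hu : u ∉ C
  hv : v ∉ C
  hne : (C ∩ Ioo u v).Nonempty

variable {C : Set ℝ}

lemma BNode.trace_eq (nd : BNode C) : C ∩ Icc nd.u nd.v = C ∩ Ioo nd.u nd.v := by
  apply Subset.antisymm
  · rintro x ⟨hxC, hx1, hx2⟩
    refine ⟨hxC, lt_of_le_of_ne hx1 ?_, lt_of_le_of_ne hx2 ?_⟩
    · rintro rfl; exact nd.hu hxC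
    · rintro rfl; exact nd.hv hxC
  · exact inter_subset_inter_right _ Ioo_subset_Icc_self

lemma diam_le_of_subset_Icc {s : Set ℝ} {x y : ℝ} (h : s ⊆ Icc x y) (hxy : x ≤ y) :
    diam s ≤ y - x :=
  le_trans (diam_mono h (isBounded_Icc x y)) (le_of_eq (Real.diam_Icc hxy))

/-- a nonempty open interval contains a point not in `C` -/
lemma exists_gap (hint : interior C = ∅) {x y : ℝ} (hxy : x < y) :
    ∃ c, c ∈ Ioo x y ∧ c ∉ C := by
  by_contra h
  push_neg at h
  have hsub : Ioo x y ⊆ C := fun c hc => h c hc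
  have : Ioo x y ⊆ interior C := interior_maximal hsub isOpen_Ioo
  rw [hint] at this
  exact (nonempty_Ioo.2 hxy).ne_empty (subset_empty_iff.1 this)

section Hyp
variable (hcl : IsClosed C) (hint : interior C = ∅)
  (hacc : ∀ x ∈ C, AccPt x (𝓟 C)) (hbd : IsBounded C) (hCne : C.Nonempty)

omit hbd in
include hcl hint hacc in
lemma bsplit (nd : BNode C) : ∃ c : ℝ, nd.u < c ∧ c < nd.v ∧ c ∉ C ∧
    (C ∩ Ioo nd.u c).Nonempty ∧ (C ∩ Ioo c nd.v).Nonempty ∧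
    diam (C ∩ Icc nd.u c) ≤ 3/4 * diam (C ∩ Icc nd.u nd.v) ∧
    diam (C ∩ Icc c nd.v) ≤ 3/4 * diam (C ∩ Icc nd.u nd.v) := by
  obtain ⟨u, v, hlt, hu, hv, hne⟩ := nd
  have htr : C ∩ Icc u v = C ∩ Ioo u v := BNode.trace_eq ⟨u,v,hlt,hu,hv,hne⟩
  simp only at *
  set T := C ∩ Icc u v with hT
  have hTcl : IsClosed T := hcl.inter isClosed_Icc
  have hTbd : IsBounded T := (isBounded_Icc u v).subset inter_subset_right
  have hTc : IsCompact T := Metric.isCompact_of_isClosed_isBounded hTcl hTbd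
  have hTne : T.Nonempty := hne.mono (inter_subset_inter_right _ Ioo_subset_Icc_self)
  set m := sInf T with hm
  set M := sSup T with hM
  have hmT : m ∈ T := hTc.sInf_mem hTne
  have hMT : M ∈ T := hTc.sSup_mem hTne
  have hmIoo : m ∈ Ioo u v := by have : m ∈ T := hmT; rw [htr] at this; exact this.2
  have hMIoo : M ∈ Ioo u v := by have : M ∈ T := hMT; rw [htr] at this; exact this.2
  have hle : ∀ t ∈ T, m ≤ t ∧ t ≤ M := fun t ht =>
    ⟨csInf_le hTbd.bddBelow ht, le_csSup hTbd.bddAbove ht⟩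
  have hmM : m < M := by
    rcases lt_or_ge m M with h | h
    · exact h
    · exfalso
      obtain ⟨y, hy, hyne⟩ := accPt_iff_nhds.1 (hacc m hmT.1) (Ioo u v)
        (isOpen_Ioo.mem_nhds hmIoo)
      have hyT : y ∈ T := ⟨hy.2, Ioo_subset_Icc_self hy.1⟩
      exact hyne (le_antisymm ((hle y hyT).2.trans h) (hle y hyT).1)
  set d := M - m with hd
  have hdpos : 0 < d := by simp only [hd]; linarith
  have hdle : d ≤ diam T := by
    have := Metric.dist_le_diam_of_mem hTbd hmT hMT
    rw [Real.dist_eq, abs_sub_comm, abs_of_nonneg (by linarith)] at this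
    linarith
  by_cases hcase : (C ∩ Ioo (m + d/4) (M - d/4)).Nonempty
  · obtain ⟨x, hxC, hxI⟩ := hcase
    obtain ⟨y, hy, hyx⟩ := accPt_iff_nhds.1 (hacc x hxC) (Ioo (m + d/4) (M - d/4))
      (isOpen_Ioo.mem_nhds hxI)
    set x' := min x y with hx'
    set y' := max x y with hy'
    have hx'I : x' ∈ Ioo (m + d/4) (M - d/4) := by
      rcases min_cases x y with ⟨h1, _⟩ | ⟨h1, _⟩ <;> rw [hx', h1]; exacts [hxI, hy.1]
    have hy'I : y' ∈ Ioo (m + d/4) (M - d/4) := by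
      rcases max_cases x y with ⟨h1, _⟩ | ⟨h1, _⟩ <;> rw [hy', h1]; exacts [hxI, hy.1]
    have hx'y' : x' < y' := by
      rcases lt_or_gt_of_ne (Ne.symm hyx) with h | h
      · rw [hx', hy', min_eq_left h.le, max_eq_right h.le]; exact h
      · rw [hx', hy', min_eq_right h.le, max_eq_left h.le]; exact h
    obtain ⟨c, hcI, hcC⟩ := exists_gap hint hx'y'
    have hmc : m < c := by have := hx'I.1; have := hcI.1; linarith [hdpos]
    have hcM : c < M := by have := hy'I.2; have := hcI.2; linarith [hdpos]
    refine ⟨c, by linarith [hmIoo.1], by linarith [hMIoo.2], hcC, ⟨m, hmT.1, hmIoo.1, hmc⟩,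
      ⟨M, hMT.1, hcM, hMIoo.2⟩, ?_, ?_⟩
    · have hsub : C ∩ Icc u c ⊆ Icc m c := by
        rintro t ⟨htC, ht1, ht2⟩
        have htT : t ∈ T := ⟨htC, ht1, le_trans ht2 (by linarith [hMIoo.2])⟩
        exact ⟨(hle t htT).1, ht2⟩
      refine le_trans (diam_le_of_subset_Icc hsub hmc.le) ?_
      have : c ≤ M - d/4 := by have := hcI.2; have := hy'I.2; linarith
      have h34 : c - m ≤ 3/4 * d := by simp only [hd] at *; linarith
      nlinarith [hdle, hdpos]
    · have hsub : C ∩ Icc c v ⊆ Icc c M := by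
        rintro t ⟨htC, ht1, ht2⟩
        have htT : t ∈ T := ⟨htC, le_trans (by linarith [hmIoo.1]) ht1, ht2⟩
        exact ⟨ht1, (hle t htT).2⟩
      refine le_trans (diam_le_of_subset_Icc hsub hcM.le) ?_
      have : m + d/4 ≤ c := by have := hcI.1; have := hx'I.1; linarith
      have h34 : M - c ≤ 3/4 * d := by simp only [hd] at *; linarith
      nlinarith [hdle, hdpos]
  · set c := (m + M)/2 with hc
    have hmc : m < c := by simp only [hc]; linarith
    have hcM : c < M := by simp only [hc]; linarith
    have hcmem : c ∈ Ioo (m + d/4) (M - d/4) := by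
      constructor <;> (simp only [hc, hd]; linarith)
    have hcC : c ∉ C := fun h => hcase ⟨c, h, hcmem⟩
    refine ⟨c, by linarith [hmIoo.1], by linarith [hMIoo.2], hcC, ⟨m, hmT.1, hmIoo.1, hmc⟩,
      ⟨M, hMT.1, hcM, hMIoo.2⟩, ?_, ?_⟩
    · have hsub : C ∩ Icc u c ⊆ Icc m (m + d/4) := by
        rintro t ⟨htC, ht1, ht2⟩
        have htT : t ∈ T := ⟨htC, ht1, le_trans ht2 (by linarith [hMIoo.2])⟩
        refine ⟨(hle t htT).1, ?_⟩
        by_contra hgt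
        push_neg at hgt
        have htlt : t < M - d/4 := by have := hcmem.2; linarith
        exact hcase ⟨t, htC, hgt, htlt⟩
      refine le_trans (diam_le_of_subset_Icc hsub (by linarith)) ?_
      nlinarith [hdle, hdpos]
    · have hsub : C ∩ Icc c v ⊆ Icc (M - d/4) M := by
        rintro t ⟨htC, ht1, ht2⟩
        have htT : t ∈ T := ⟨htC, le_trans (by linarith [hmIoo.1]) ht1, ht2⟩
        refine ⟨?_, (hle t htT).2⟩
        by_contra hgt
        push_neg at hgt
        have htgt : m + d/4 < t := by have := hcmem.1; linarith
        exact hcase ⟨t, htC, htgt, hgt⟩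
      refine le_trans (diam_le_of_subset_Icc hsub (by linarith)) ?_
      nlinarith [hdle, hdpos]

noncomputable def broot : BNode C where
  u := sInf C - 1
  v := sSup C + 1
  hlt := by
    obtain ⟨x, hx⟩ := hCne
    have h1 : sInf C ≤ x := csInf_le hbd.bddBelow hx
    have h2 : x ≤ sSup C := le_csSup hbd.bddAbove hx
    linarith
  hu := fun h => absurd (csInf_le hbd.bddBelow h) (by linarith)
  hv := fun h => absurd (le_csSup hbd.bddAbove h) (by linarith)
  hne := by
    obtain ⟨x, hx⟩ := hCne
    have h1 : sInf C ≤ x := csInf_le hbd.bddBelow hx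
    have h2 : x ≤ sSup C := le_csSup hbd.bddAbove hx
    exact ⟨x, hx, by constructor <;> linarith⟩

lemma broot_inter : C ∩ Icc (broot hbd hCne : BNode C).u (broot hbd hCne).v = C :=
  inter_eq_left.mpr (fun x hx => ⟨by
    have := csInf_le hbd.bddBelow hx
    simp only [broot]; linarith, by
    have := le_csSup hbd.bddAbove hx
    simp only [broot]; linarith⟩)

noncomputable def bchild (nd : BNode C) : Bool → BNode C := fun b =>
  match b with
  | false => ⟨nd.u, (bsplit hcl hint hacc nd).choose, (bsplit hcl hint hacc nd).choose_spec.1,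
      nd.hu, (bsplit hcl hint hacc nd).choose_spec.2.2.1, (bsplit hcl hint hacc nd).choose_spec.2.2.2.1⟩
  | true => ⟨(bsplit hcl hint hacc nd).choose, nd.v, (bsplit hcl hint hacc nd).choose_spec.2.1,
      (bsplit hcl hint hacc nd).choose_spec.2.2.1, nd.hv, (bsplit hcl hint hacc nd).choose_spec.2.2.2.2.1⟩

noncomputable def bnode : List Bool → BNode C
  | [] => broot hbd hCne
  | b :: l => bchild hcl hint hacc (bnode l) b

noncomputable def bA (l : List Bool) : Set ℝ :=
  C ∩ Icc (bnode hcl hint hacc hbd hCne l).u (bnode hcl hint hacc hbd hCne l).v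


variable {hcl hint hacc hbd hCne}

lemma bA_closed (l : List Bool) : IsClosed (bA hcl hint hacc hbd hCne l) :=
  hcl.inter isClosed_Icc

lemma bA_ne (l : List Bool) : (bA hcl hint hacc hbd hCne l).Nonempty := by
  rw [bA, BNode.trace_eq]
  exact (bnode hcl hint hacc hbd hCne l).hne

lemma bA_anti : CantorScheme.Antitone (bA hcl hint hacc hbd hCne) := by
  intro l b
  have hnd : bnode hcl hint hacc hbd hCne (b :: l) = bchild hcl hint hacc
    (bnode hcl hint hacc hbd hCne l) b := rfl
  set nd := bnode hcl hint hacc hbd hCne l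
  obtain ⟨h1, h2, h3, h4, h5, h6, h7⟩ := (bsplit hcl hint hacc nd).choose_spec
  cases b <;>
    · rw [bA, hnd]
      simp only [bchild]
      exact inter_subset_inter_right _ (Icc_subset_Icc (by linarith) (by linarith))

lemma bA_disj : CantorScheme.Disjoint (bA hcl hint hacc hbd hCne) := by
  intro l a b hab
  have key : ∀ x, x ∈ bA hcl hint hacc hbd hCne (false :: l) →
      x ∈ bA hcl hint hacc hbd hCne (true :: l) → False := by
    intro x hx1 hx2
    set nd := bnode hcl hint hacc hbd hCne l
    obtain ⟨h1, h2, h3, h4, h5, h6, h7⟩ := (bsplit hcl hint hacc nd).choose_spec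
    have e1 : x ≤ (bsplit hcl hint hacc nd).choose := hx1.2.2
    have e2 : (bsplit hcl hint hacc nd).choose ≤ x := hx2.2.1
    have : x = (bsplit hcl hint hacc nd).choose := le_antisymm e1 e2
    exact h3 (this ▸ hx1.1)
  cases a <;> cases b <;> simp at hab <;> rw [Set.disjoint_left] <;> intro x hx1 hx2
  · exact key x hx1 hx2
  · exact key x hx2 hx1

lemma bA_diam (l : List Bool) (b : Bool) :
    diam (bA hcl hint hacc hbd hCne (b :: l)) ≤ 3/4 * diam (bA hcl hint hacc hbd hCne l) := by
  set nd := bnode hcl hint hacc hbd hCne l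
  obtain ⟨h1, h2, h3, h4, h5, h6, h7⟩ := (bsplit hcl hint hacc nd).choose_spec
  cases b
  · exact h6
  · exact h7

lemma bA_diam_pow (l : List Bool) :
    diam (bA hcl hint hacc hbd hCne l) ≤
      (3/4)^(l.length) * diam (bA hcl hint hacc hbd hCne []) := by
  induction l with
  | nil => simp
  | cons b l ih =>
    calc diam (bA hcl hint hacc hbd hCne (b :: l)) ≤
        3/4 * diam (bA hcl hint hacc hbd hCne l) := bA_diam l b
      _ ≤ 3/4 * ((3/4)^(l.length) * diam (bA hcl hint hacc hbd hCne [])) :=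
          mul_le_mul_of_nonneg_left ih (by norm_num)
      _ = (3/4)^((b :: l).length) * diam (bA hcl hint hacc hbd hCne []) := by
          simp [List.length_cons, pow_succ]; ring

lemma bA_bounded (l : List Bool) : IsBounded (bA hcl hint hacc hbd hCne l) :=
  ((isBounded_Icc _ _).subset inter_subset_right)

lemma bA_vanishing : VanishingDiam (bA hcl hint hacc hbd hCne) := by
  intro x
  have h0 : Tendsto (fun n : ℕ => (3/4 : ℝ)^n * diam (bA hcl hint hacc hbd hCne []))
      atTop (𝓝 0) := by
    have := (tendsto_pow_atTop_nhds_zero_of_lt_one (by norm_num : (0:ℝ) ≤ 3/4)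
      (by norm_num : (3/4:ℝ) < 1)).mul_const (diam (bA hcl hint hacc hbd hCne []))
    simpa using this
  have hup : Tendsto (fun n : ℕ => ENNReal.ofReal
      ((3/4:ℝ)^n * diam (bA hcl hint hacc hbd hCne []))) atTop (𝓝 0) := by
    rw [← ENNReal.ofReal_zero]
    exact ENNReal.tendsto_ofReal h0
  apply tendsto_of_tendsto_of_tendsto_of_le_of_le tendsto_const_nhds hup (fun n => zero_le)
  intro n
  apply EMetric.diam_le
  intro y hy z hz
  rw [edist_dist]
  apply ENNReal.ofReal_le_ofReal
  calc dist y z ≤ diam (bA hcl hint hacc hbd hCne (res x n)) :=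
        dist_le_diam_of_mem (bA_bounded _) hy hz
    _ ≤ (3/4)^((res x n).length) * diam (bA hcl hint hacc hbd hCne []) := bA_diam_pow _
    _ = (3/4)^n * diam (bA hcl hint hacc hbd hCne []) := by rw [res_length]

lemma bA_total : (inducedMap (bA hcl hint hacc hbd hCne)).1 = univ :=
  ClosureAntitone.map_of_vanishingDiam bA_vanishing
    (bA_anti.closureAntitone (fun _ => bA_closed _)) (fun _ => bA_ne _)

noncomputable def bf (hcl : IsClosed C) (hint : interior C = ∅)
    (hacc : ∀ x ∈ C, AccPt x (𝓟 C)) (hbd : IsBounded C) (hCne : C.Nonempty)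
    (x : ℕ → Bool) : ℝ :=
  (inducedMap (bA hcl hint hacc hbd hCne)).2 ⟨x, by rw [bA_total]; trivial⟩

lemma bf_mem (x : ℕ → Bool) (n : ℕ) :
    bf hcl hint hacc hbd hCne x ∈ bA hcl hint hacc hbd hCne (res x n) :=
  map_mem _ n

lemma bf_in_C (x : ℕ → Bool) : bf hcl hint hacc hbd hCne x ∈ C :=
  (bf_mem x 0).1

lemma bf_cont : Continuous (bf hcl hint hacc hbd hCne) :=
  (VanishingDiam.map_continuous bA_vanishing).comp
    (Continuous.subtype_mk continuous_id _)

lemma bf_inj : Function.Injective (bf hcl hint hacc hbd hCne) := by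
  intro x y h
  have := bA_disj.map_injective (A := bA hcl hint hacc hbd hCne)
    (a₁ := ⟨x, by rw [bA_total]; trivial⟩) (a₂ := ⟨y, by rw [bA_total]; trivial⟩) h
  exact congrArg Subtype.val this

lemma bstep {z : ℝ} (l : List Bool) (hz : z ∈ bA hcl hint hacc hbd hCne l) :
    ∃ b, z ∈ bA hcl hint hacc hbd hCne (b :: l) := by
  set nd := bnode hcl hint hacc hbd hCne l with hnd
  have hz' : z ∈ C ∩ Ioo nd.u nd.v := by rw [bA] at hz; rw [← BNode.trace_eq]; exact hz
  obtain ⟨h1, h2, h3, h4, h5, h6, h7⟩ := (bsplit hcl hint hacc nd).choose_spec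
  rcases lt_or_gt_of_ne (fun h : z = (bsplit hcl hint hacc nd).choose => h3 (h ▸ hz'.1)) with h | h
  · exact ⟨false, hz'.1, hz'.2.1.le, h.le⟩
  · exact ⟨true, hz'.1, h.le, hz'.2.2.le⟩

noncomputable def bseq (z : ℝ) (hz : z ∈ bA hcl hint hacc hbd hCne []) :
    (n : ℕ) → {l : List Bool // l.length = n ∧ z ∈ bA hcl hint hacc hbd hCne l}
  | 0 => ⟨[], rfl, hz⟩
  | n+1 =>
    let p := bseq z hz n
    ⟨(bstep p.1 p.2.2).choose :: p.1, by simp [p.2.1], (bstep p.1 p.2.2).choose_spec⟩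

lemma bf_surj (z : ℝ) (hzC : z ∈ C) : ∃ x, bf hcl hint hacc hbd hCne x = z := by
  have hz : z ∈ bA hcl hint hacc hbd hCne [] := by
    rw [bA, show bnode hcl hint hacc hbd hCne [] = broot hbd hCne from rfl, broot_inter]
    exact hzC
  set x : ℕ → Bool := fun n =>
    (bstep (bseq z hz n).1 (bseq z hz n).2.2).choose with hx
  have hres : ∀ n, res x n = (bseq z hz n).1 := by
    intro n
    induction n with
    | zero => simp [bseq]
    | succ n ih =>
      have : (bseq z hz (n+1)).1 =
          (bstep (bseq z hz n).1 (bseq z hz n).2.2).choose :: (bseq z hz n).1 := rfl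
      rw [res_succ, ih, this]
  have hzmem : ∀ n, z ∈ bA hcl hint hacc hbd hCne (res x n) := by
    intro n; rw [hres n]; exact (bseq z hz n).2.2
  refine ⟨x, ?_⟩
  have hdist : ∀ n : ℕ, dist (bf hcl hint hacc hbd hCne x) z ≤
      (3/4)^n * diam (bA hcl hint hacc hbd hCne []) := by
    intro n
    calc dist (bf hcl hint hacc hbd hCne x) z ≤ diam (bA hcl hint hacc hbd hCne (res x n)) :=
          dist_le_diam_of_mem (bA_bounded _) (bf_mem x n) (hzmem n)
      _ ≤ (3/4)^((res x n).length) * diam (bA hcl hint hacc hbd hCne []) := bA_diam_pow _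
      _ = (3/4)^n * diam (bA hcl hint hacc hbd hCne []) := by rw [res_length]
  have h0 : Tendsto (fun n : ℕ => (3/4 : ℝ)^n * diam (bA hcl hint hacc hbd hCne []))
      atTop (𝓝 0) := by
    have := (tendsto_pow_atTop_nhds_zero_of_lt_one (by norm_num : (0:ℝ) ≤ 3/4)
      (by norm_num : (3/4:ℝ) < 1)).mul_const (diam (bA hcl hint hacc hbd hCne []))
    simpa using this
  have : dist (bf hcl hint hacc hbd hCne x) z ≤ 0 :=
    ge_of_tendsto h0 (Eventually.of_forall hdist)
  have := le_antisymm this dist_nonneg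
  rwa [dist_eq_zero] at this

lemma brouwer_real (hcl : IsClosed C) (hint : interior C = ∅)
    (hacc : ∀ x ∈ C, AccPt x (𝓟 C)) (hbd : IsBounded C) (hCne : C.Nonempty) :
    Nonempty ((ℕ → Bool) ≃ₜ C) := by
  have hbij : Function.Bijective
      (fun x : ℕ → Bool => (⟨bf hcl hint hacc hbd hCne x, bf_in_C x⟩ : C)) := by
    constructor
    · intro x y h
      exact bf_inj (congrArg Subtype.val h)
    · rintro ⟨z, hz⟩
      obtain ⟨x, hx⟩ := bf_surj z hz
      exact ⟨x, Subtype.ext hx⟩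
  let e : (ℕ → Bool) ≃ C := Equiv.ofBijective _ hbij
  have hcont : Continuous e := Continuous.subtype_mk bf_cont _
  exact ⟨hcont.homeoOfEquivCompactToT2⟩

end Hyp

lemma exists_gap' {Y : Set ℝ} (hint : interior Y = ∅) {x y : ℝ} (hxy : x < y) :
    ∃ c, c ∈ Ioo x y ∧ c ∉ Y := by
  by_contra h
  push_neg at h
  have : Ioo x y ⊆ interior Y := interior_maximal (fun c hc => h c hc) isOpen_Ioo
  rw [hint] at this
  exact (nonempty_Ioo.2 hxy).ne_empty (subset_empty_iff.1 this)

lemma grid_cover (k : ℕ) (c : ℕ → ℝ) : ∀ y : ℝ, c 0 ≤ y → y ≤ c (k+1) →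
    (∀ i, i ≤ k → c i ≤ c (i+1)) → ∃ i ≤ k, c i ≤ y ∧ y ≤ c (i+1) := by
  induction k with
  | zero => exact fun y h0 h1 _ => ⟨0, le_refl _, h0, h1⟩
  | succ k ih =>
    intro y h0 h1 hmono
    by_cases h : y ≤ c (k+1)
    · obtain ⟨i, hik, h⟩ := ih y h0 h (fun i hi => hmono i (hi.trans (Nat.le_succ _)))
      exact ⟨i, hik.trans (Nat.le_succ _), h⟩
    · exact ⟨k+1, le_refl _, (not_le.1 h).le, h1⟩

lemma cover_lemma {Y : Set ℝ} (hYc : IsCompact Y) (hYne : Y.Nonempty)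
    (hYint : interior Y = ∅) {ε : ℝ} (hε : 0 < ε) :
    ∃ l : List (ℝ × ℝ),
      (∀ p ∈ l, p.1 < p.2 ∧ p.2 - p.1 ≤ ε ∧ (Y ∩ Icc p.1 p.2).Nonempty ∧
        Y ∩ Icc p.1 p.2 ⊆ Ioo p.1 p.2) ∧
      List.Pairwise (fun p q : ℝ × ℝ => Disjoint (Icc p.1 p.2) (Icc q.1 q.2)) l ∧
      (Y ⊆ ⋃ p ∈ l, Ioo p.1 p.2) ∧
      (∃ g, (∀ p ∈ l, g ∉ Icc p.1 p.2) ∧ ∃ y ∈ Y, |g - y| ≤ ε) := by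
  classical
  have hYcl : IsClosed Y := hYc.isClosed
  have hYbd : IsBounded Y := hYc.isBounded
  set m₀ := sInf Y with hm₀
  set M₀ := sSup Y with hM₀
  have hmY : m₀ ∈ Y := hYc.sInf_mem hYne
  have hMY : M₀ ∈ Y := hYc.sSup_mem hYne
  have hYsub : Y ⊆ Icc m₀ M₀ := fun y hy =>
    ⟨csInf_le hYbd.bddBelow hy, le_csSup hYbd.bddAbove hy⟩
  have hmM : m₀ ≤ M₀ := (hYsub hmY).2
  set k := ⌈(M₀ - m₀)/(ε/2)⌉₊ with hk
  set s' := (M₀ - m₀)/((k:ℝ)+1) with hs'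
  have hkpos : (0:ℝ) < (k:ℝ)+1 := by positivity
  have hs0 : 0 ≤ s' := div_nonneg (by linarith) hkpos.le
  have hMm : M₀ - m₀ = ((k:ℝ)+1) * s' := by rw [hs']; field_simp
  have hceil : M₀ - m₀ ≤ (k:ℝ) * (ε/2) := by
    have h1 : (M₀ - m₀)/(ε/2) ≤ (k:ℝ) := Nat.le_ceil _
    rwa [div_le_iff₀ (by linarith)] at h1
  have hs_le : s' ≤ ε/2 := by
    rw [hs', div_le_iff₀ hkpos]
    nlinarith
  have hk0M : k = 0 → M₀ = m₀ := by
    intro h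
    have h2 : (M₀ - m₀)/(ε/2) ≤ 0 := Nat.ceil_eq_zero.1 h
    have h3 : M₀ - m₀ ≤ 0 := by
      by_contra hc
      push_neg at hc
      have : 0 < (M₀ - m₀)/(ε/2) := div_pos hc (by linarith)
      linarith
    linarith
  have hk1s : 0 < k → 0 < s' := by
    intro h
    have := Nat.ceil_pos.1 h
    have h4 : 0 < M₀ - m₀ := by
      by_contra hc
      push_neg at hc
      have : (M₀ - m₀)/(ε/2) ≤ 0 := div_nonpos_of_nonpos_of_nonneg (by linarith) (by linarith)
      linarith
    exact div_pos h4 hkpos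
  -- the perturbed grid points
  have hpick : ∀ i : ℕ, ∃ t : ℝ, 0 < s' →
      (t ∈ Ioo (m₀ + i*s' - s'/4) (m₀ + i*s' + s'/4) ∧ t ∉ Y) := by
    intro i
    by_cases h : 0 < s'
    · obtain ⟨t, ht⟩ := exists_gap' hYint (show m₀ + i*s' - s'/4 < m₀ + i*s' + s'/4 by linarith)
      exact ⟨t, fun _ => ht⟩
    · exact ⟨0, fun hc => absurd hc h⟩
  choose pick pick_spec using hpick
  set c : ℕ → ℝ := fun i => if i = 0 then m₀ - ε/8 else if k+1 ≤ i then M₀ + ε/8 else pick i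
    with hc
  have hc0 : c 0 = m₀ - ε/8 := by simp [hc]
  have hck : c (k+1) = M₀ + ε/8 := by simp [hc]
  have hcpick : ∀ i, 1 ≤ i → i ≤ k →
      c i ∈ Ioo (m₀ + i*s' - s'/4) (m₀ + i*s' + s'/4) ∧ c i ∉ Y := by
    intro i h1 h2
    have hi0 : i ≠ 0 := by omega
    have hik : ¬ (k+1 ≤ i) := by omega
    have hkpos' : 0 < k := by omega
    have : c i = pick i := by simp [hc, hi0, hik, show ¬ k < i by omega]
    rw [this]
    exact pick_spec i (hk1s hkpos')
  set γ := if k = 0 then ε/4 else s'/2 with hγ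
  have hγpos : 0 < γ := by
    rcases Nat.eq_zero_or_pos k with h | h
    · simp [hγ, h]; linarith
    · have := hk1s h
      rw [hγ, if_neg (by omega)]
      linarith
  have hγε : γ ≤ ε/2 := by
    rcases Nat.eq_zero_or_pos k with h | h
    · simp [hγ, h]; linarith
    · rw [hγ, if_neg (by omega)]; linarith
  have hgap : ∀ i, i ≤ k → γ ≤ c (i+1) - c i ∧ c (i+1) - c i ≤ 3*ε/4 := by
    intro i hi
    rcases Nat.eq_zero_or_pos k with hk0 | hk1
    · have hi0 : i = 0 := by omega
      subst hi0
      have h1 : c 1 = M₀ + ε/8 := by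
        have h2 := hck
        rw [hk0] at h2
        simpa using h2
      have hMe : M₀ = m₀ := hk0M hk0
      rw [hγ, if_pos hk0, h1, hc0, hMe]
      constructor <;> linarith
    · have hs'pos := hk1s hk1
      have hγeq : γ = s'/2 := by rw [hγ, if_neg (by omega)]
      by_cases hi0 : i = 0
      · subst hi0
        have h1 := hcpick 1 (le_refl _) (by omega)
        obtain ⟨⟨ha, hb⟩, _⟩ := h1
        rw [hγeq, hc0]
        push_cast at ha hb
        constructor <;> linarith
      · have hi1 : 1 ≤ i := by omega
        by_cases hik : i = k
        · obtain ⟨⟨ha, hb⟩, _⟩ := hcpick i hi1 (le_of_eq hik)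
          have hck' : c (i+1) = M₀ + ε/8 := by rw [hik]; exact hck
          have hMi : M₀ - m₀ = ((i:ℝ)+1) * s' := by rw [hMm, hik]
          rw [hγeq, hck']
          push_cast at ha hb
          constructor <;> nlinarith [hs_le, hε, hs'pos]
        · have hik1 : i + 1 ≤ k := by omega
          obtain ⟨⟨ha, hb⟩, _⟩ := hcpick i hi1 (by omega)
          obtain ⟨⟨ha', hb'⟩, _⟩ := hcpick (i+1) (by omega) hik1
          rw [hγeq]
          push_cast at ha hb ha' hb'
          constructor <;> linarith
  have hnotY : ∀ i, i ≤ k+1 → c i ∉ Y := by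
    intro i hi
    by_cases hi0 : i = 0
    · subst hi0
      rw [hc0]
      intro h
      have := (hYsub h).1
      linarith
    · by_cases hik : k+1 ≤ i
      · have : c i = M₀ + ε/8 := by simp [hc, hi0, hik, show ¬ i ≤ k by omega]
        rw [this]
        intro h
        have := (hYsub h).2
        linarith
      · exact (hcpick i (by omega) (by omega)).2
  have cstep : ∀ j, j ≤ k → c j ≤ c (j+1) := fun j hj => by linarith [(hgap j hj).1]
  have cmono : ∀ i j, i ≤ j → j ≤ k+1 → c i ≤ c j := by
    have H : ∀ n, n ≤ k+1 → ∀ i, i ≤ n → c i ≤ c n := by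
      intro n
      induction n with
      | zero =>
        intro _ i hi
        have : i = 0 := by omega
        rw [this]
      | succ n ih =>
        intro hn i hi
        rcases Nat.eq_or_lt_of_le hi with h | h
        · rw [h]
        · exact le_trans (ih (by omega) i (by omega)) (cstep n (by omega))
    intro i j hij hj
    exact H j hj i hij
  set η : ℕ → ℝ := fun i => min (infDist (c i) Y) γ / 4 with hη
  have hηpos : ∀ i, i ≤ k+1 → 0 < η i := by
    intro i hi
    have h1 : 0 < infDist (c i) Y := (hYcl.notMem_iff_infDist_pos hYne).1 (hnotY i hi)
    exact div_pos (lt_min h1 hγpos) (by norm_num)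
  have hηle : ∀ i, η i ≤ γ/4 := by
    intro i
    have := min_le_right (infDist (c i) Y) γ
    rw [hη]
    simp only
    linarith
  have hηdist : ∀ i y, y ∈ Y → 4 * η i ≤ |c i - y| := by
    intro i y hy
    have h1 : infDist (c i) Y ≤ dist (c i) y := infDist_le_dist_of_mem hy
    rw [Real.dist_eq] at h1
    have h2 := min_le_left (infDist (c i) Y) γ
    rw [hη]
    simp only
    linarith
  set l : List (ℝ × ℝ) := ((List.range (k+1)).filter
      (fun i => decide ((Y ∩ Icc (c i) (c (i+1))).Nonempty))).map
      (fun i : ℕ => (c i + η i, c (i+1) - η (i+1))) with hl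
  have hmemf : ∀ i : ℕ, i ∈ (List.range (k+1)).filter
      (fun i => decide ((Y ∩ Icc (c i) (c (i+1))).Nonempty)) ↔
      (i ≤ k ∧ (Y ∩ Icc (c i) (c (i+1))).Nonempty) := by
    intro i
    rw [List.mem_filter, List.mem_range, Nat.lt_succ_iff, decide_eq_true_eq]
  have key : ∀ i, i ≤ k → ∀ y ∈ Y ∩ Icc (c i) (c (i+1)),
      y ∈ Ioo (c i + η i) (c (i+1) - η (i+1)) := by
    rintro i hi y ⟨hyY, hy1, hy2⟩
    have h1 := hηdist i y hyY
    have h2 := hηdist (i+1) y hyY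
    rw [abs_of_nonpos (by linarith)] at h1
    rw [abs_of_nonneg (by linarith)] at h2
    have e1 := hηpos i (by omega)
    have e2 := hηpos (i+1) (by omega)
    constructor <;> linarith
  refine ⟨l, ?_, ?_, ?_, ?_⟩
  · intro p hp
    rw [hl, List.mem_map] at hp
    obtain ⟨i, hif, rfl⟩ := hp
    rw [hmemf] at hif
    obtain ⟨hik, y, hy⟩ := hif
    have hgapi := hgap i hik
    have e1 := hηpos i (by omega)
    have e2 := hηpos (i+1) (by omega)
    have f1 := hηle i
    have f2 := hηle (i+1)
    refine ⟨show c i + η i < c (i+1) - η (i+1) by linarith,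
      show (c (i+1) - η (i+1)) - (c i + η i) ≤ ε by linarith, ⟨y, hy.1, ?_⟩, ?_⟩
    · have := key i hik y hy
      exact ⟨this.1.le, this.2.le⟩
    · rintro z ⟨hzY, hz1, hz2⟩
      have hz1' : c i + η i ≤ z := hz1
      have hz2' : z ≤ c (i+1) - η (i+1) := hz2
      exact key i hik z ⟨hzY, by linarith, by linarith⟩
  · rw [hl, List.pairwise_map]
    refine List.Pairwise.imp_of_mem ?_
      (((List.pairwise_lt_range (n := k+1)).filter _))
    intro a b ha hb hab
    rw [hmemf] at ha hb
    rw [Set.disjoint_left]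
    intro x hx1 hx2
    have h1 : c (a+1) ≤ c b := cmono (a+1) b hab (by omega)
    have e1 := hηpos (a+1) (by omega)
    have e2 := hηpos b (by omega)
    have hxa : x ≤ c (a+1) - η (a+1) := hx1.2
    have hxb : c b + η b ≤ x := hx2.1
    linarith
  · intro y hyY
    have h0 : c 0 ≤ y := by rw [hc0]; linarith [(hYsub hyY).1]
    have h1 : y ≤ c (k+1) := by rw [hck]; linarith [(hYsub hyY).2]
    obtain ⟨i, hik, hy1, hy2⟩ := grid_cover k c y h0 h1 cstep
    rw [mem_iUnion₂]
    refine ⟨(c i + η i, c (i+1) - η (i+1)), ?_, key i hik y ⟨hyY, hy1, hy2⟩⟩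
    rw [hl, List.mem_map]
    exact ⟨i, (hmemf i).2 ⟨hik, ⟨y, hyY, hy1, hy2⟩⟩, rfl⟩
  · refine ⟨c 1, ?_, ?_⟩
    · intro p hp
      rw [hl, List.mem_map] at hp
      obtain ⟨i, hif, rfl⟩ := hp
      rw [hmemf] at hif
      by_cases hi0 : i = 0
      · subst hi0
        intro h
        have h2 : c 1 ≤ c (0+1) - η (0+1) := h.2
        have h3 := hηpos 1 (by omega)
        simp only [Nat.zero_add] at h2
        linarith
      · intro h
        have h1 : c 1 ≤ c i := cmono 1 i (by omega) (by omega)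
        have h2 : c i + η i ≤ c 1 := h.1
        have h3 := hηpos i (by omega)
        linarith
    · rcases Nat.eq_zero_or_pos k with hk0 | hk1
      · refine ⟨M₀, hMY, ?_⟩
        have h1 : c 1 = M₀ + ε/8 := by
          have := hck
          rw [hk0] at this
          simpa using this
        have hMe : M₀ = m₀ := hk0M hk0
        rw [h1, abs_le]
        constructor <;> linarith
      · obtain ⟨⟨ha, hb⟩, _⟩ := hcpick 1 (le_refl _) (by omega)
        refine ⟨m₀, hmY, ?_⟩
        have := hk1s hk1
        push_cast at ha hb
        rw [abs_le]
        constructor <;> linarith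


lemma biUnion_cons {α : Type*} (b : α) (l : List α) (f : α → Set ℝ) :
    ⋃ a ∈ (b :: l : List α), f a = f b ∪ ⋃ a ∈ l, f a := by
  ext x
  simp [List.mem_cons, or_and_right, exists_or]

lemma interior_union_empty {s t : Set ℝ} (hs : IsClosed s) (hs' : interior s = ∅)
    (ht' : interior t = ∅) : interior (s ∪ t) = ∅ := by
  have h1 : interior (s ∪ t) \ s ⊆ interior t :=
    interior_maximal (fun y hy => (interior_subset hy.1).resolve_left hy.2)
      (isOpen_interior.sdiff hs)
  rw [ht'] at h1
  have h2 : interior (s ∪ t) ⊆ s := fun y hy => by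
    by_contra hys
    exact absurd (h1 ⟨hy, hys⟩) (notMem_empty y)
  have h3 : interior (s ∪ t) ⊆ interior s := interior_maximal h2 isOpen_interior
  rw [hs'] at h3
  exact eq_empty_iff_forall_notMem.2 (fun y hy => h3 hy)

lemma isClosed_list_biUnion {α : Type*} (l : List α) (f : α → Set ℝ)
    (h : ∀ a ∈ l, IsClosed (f a)) : IsClosed (⋃ a ∈ l, f a) := by
  induction l with
  | nil => simp
  | cons b l ih =>
    rw [biUnion_cons]
    exact ((h b (List.mem_cons_self)).union
      (ih (fun a ha => h a (List.mem_cons_of_mem _ ha))))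

lemma interior_list_biUnion_empty {α : Type*} (l : List α) (f : α → Set ℝ)
    (hcl : ∀ a ∈ l, IsClosed (f a)) (h : ∀ a ∈ l, interior (f a) = ∅) :
    interior (⋃ a ∈ l, f a) = ∅ := by
  induction l with
  | nil => simp
  | cons b l ih =>
    rw [biUnion_cons]
    exact interior_union_empty (hcl b (List.mem_cons_self))
      (h b (List.mem_cons_self))
      (ih (fun a ha => hcl a (List.mem_cons_of_mem _ ha))
        (fun a ha => h a (List.mem_cons_of_mem _ ha)))


lemma isBounded_list_biUnion {α : Type*} (l : List α) (f : α → Set ℝ)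
    (h : ∀ a ∈ l, Bornology.IsBounded (f a)) : Bornology.IsBounded (⋃ a ∈ l, f a) := by
  induction l with
  | nil => simp
  | cons b l ih =>
    rw [biUnion_cons]
    exact ((h b (List.mem_cons_self)).union
      (ih (fun a ha => h a (List.mem_cons_of_mem _ ha))))


-- the cell construction state
structure CState where
  comps : List (ℝ × ℝ)
  T : Set ℝ

variable (A : Set ℝ) (F B : ℕ → Set ℝ)

def Phi (n : ℕ) : Set ℝ := ⋃ j ∈ Finset.range n, F j

lemma phi_closed (hFc : ∀ j, IsClosed (F j)) (n : ℕ) : IsClosed (Phi F n) := by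
  apply Set.Finite.isClosed_biUnion (Finset.range n).finite_toSet
  exact fun j _ => hFc j

lemma mem_phi_iff {n : ℕ} {x : ℝ} : x ∈ Phi F n ↔ ∃ j < n, x ∈ F j := by
  simp [Phi]

structure Good (n : ℕ) (S : CState) : Prop where
  hcne : S.comps ≠ []
  hlen : ∀ p ∈ S.comps, p.1 < p.2 ∧ p.2 - p.1 ≤ (1/2:ℝ)^n
  hdisj : List.Pairwise (fun p q : ℝ × ℝ => Disjoint (Icc p.1 p.2) (Icc q.1 q.2)) S.comps
  hF : ∀ p ∈ S.comps, Icc p.1 p.2 ∩ Phi F n = ∅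
  hTc : IsCompact S.T
  hTsub : S.T ⊆ ⋃ p ∈ S.comps, Ioo p.1 p.2
  hTA : S.T ∩ A = ∅
  hTint : interior S.T = ∅
  hBmem : ∀ p ∈ S.comps, ∃ m, B m ⊆ Ioo p.1 p.2 ∧ B m ⊆ S.T
  hq : ∀ p ∈ S.comps, ∃ q ∈ S.T, q ∈ Ioo p.1 p.2 ∧ q ∉ ⋃ m, B m

structure StepR (S S' : CState) : Prop where
  hsub : ∀ p' ∈ S'.comps, ∃ p ∈ S.comps, Icc p'.1 p'.2 ⊆ Icc p.1 p.2
  hT : S.T ⊆ S'.T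
  htwo : ∀ p ∈ S.comps, ∃ p₁ ∈ S'.comps, ∃ p₂ ∈ S'.comps,
    Disjoint (Icc p₁.1 p₁.2) (Icc p₂.1 p₂.2) ∧
    Icc p₁.1 p₁.2 ⊆ Icc p.1 p.2 ∧ Icc p₂.1 p₂.2 ⊆ Icc p.1 p.2
  hgap : ∀ p ∈ S.comps, ∃ g ∈ Ioo p.1 p.2, ∀ p' ∈ S'.comps, g ∉ Icc p'.1 p'.2

variable {A F B}

lemma trace_subset_Ioo {n : ℕ} {S : CState} (hS : Good A F B n S) {p : ℝ × ℝ}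
    (hp : p ∈ S.comps) : S.T ∩ Icc p.1 p.2 ⊆ Ioo p.1 p.2 := by
  rintro x ⟨hxT, hxI⟩
  obtain ⟨p'', hp'', hx''⟩ := mem_iUnion₂.1 (hS.hTsub hxT)
  by_cases h : p'' = p
  · exact h ▸ hx''
  · exfalso
    have hdd : Disjoint (Icc p''.1 p''.2) (Icc p.1 p.2) :=
      (letI : Std.Symm (fun p q : ℝ × ℝ => Disjoint (Icc p.1 p.2) (Icc q.1 q.2)) := ⟨fun a b hab => Disjoint.symm hab⟩; hS.hdisj.forall) hp'' hp h
    exact (Set.disjoint_left.1 hdd) (Ioo_subset_Icc_self hx'') hxI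

structure RProps (A : Set ℝ) (F B : ℕ → Set ℝ) (n : ℕ) (S : CState) (p : ℝ × ℝ)
    (l : List (ℝ × ℝ)) (Tadd : Set ℝ) : Prop where
  hmain : ∀ p' ∈ l, p'.1 < p'.2 ∧ p'.2 - p'.1 ≤ (1/2:ℝ)^(n+1) ∧
    Icc p'.1 p'.2 ⊆ Ioo p.1 p.2 ∧ Icc p'.1 p'.2 ∩ Phi F (n+1) = ∅
  hpw : List.Pairwise (fun a b : ℝ × ℝ => Disjoint (Icc a.1 a.2) (Icc b.1 b.2)) l
  hcov : S.T ∩ Icc p.1 p.2 ⊆ ⋃ p' ∈ l, Ioo p'.1 p'.2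
  hTac : IsCompact Tadd
  hTaint : interior Tadd = ∅
  hTaA : Tadd ∩ A = ∅
  hTasub : Tadd ⊆ ⋃ p' ∈ l, Ioo p'.1 p'.2
  hBm : ∀ p' ∈ l, ∃ m, B m ⊆ Ioo p'.1 p'.2 ∧ B m ⊆ Tadd
  hqq : ∀ p' ∈ l, ∃ q ∈ Tadd, q ∈ Ioo p'.1 p'.2 ∧ q ∉ ⋃ m, B m
  htwo : ∃ p₁ ∈ l, ∃ p₂ ∈ l, Disjoint (Icc p₁.1 p₁.2) (Icc p₂.1 p₂.2)
  hgap : ∃ g ∈ Ioo p.1 p.2, ∀ p' ∈ l, g ∉ Icc p'.1 p'.2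

lemma refine_comp (hFc : ∀ j, IsClosed (F j)) (hFA : ∀ j, F j ⊆ A)
    (hBc : ∀ m, IsClosed (B m)) (hBne : ∀ m, (B m).Nonempty)
    (hBA : ∀ m, Disjoint A (B m)) (hBint : ∀ m, interior (B m) = ∅)
    (hBdense : ∀ U : Set ℝ, IsOpen U → U.Nonempty → ∃ m, B m ⊆ U)
    (hdense : Dense ((A ∪ ⋃ m, B m)ᶜ))
    {n : ℕ} {S : CState} (hS : Good A F B n S) {p : ℝ × ℝ} (hp : p ∈ S.comps) :
    ∃ (l : List (ℝ × ℝ)) (Tadd : Set ℝ), RProps A F B n S p l Tadd := by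
  classical
  set Y := S.T ∩ Icc p.1 p.2 with hY
  have hYc : IsCompact Y := hS.hTc.inter_right isClosed_Icc
  have hYIoo : Y ⊆ Ioo p.1 p.2 := trace_subset_Ioo hS hp
  obtain ⟨m₁, hm₁I, hm₁T⟩ := hS.hBmem p hp
  obtain ⟨b₀, hb₀⟩ := hBne m₁
  have hb₀Y : b₀ ∈ Y := ⟨hm₁T hb₀, Ioo_subset_Icc_self (hm₁I hb₀)⟩
  obtain ⟨q₀, hq₀T, hq₀I, hq₀B⟩ := hS.hq p hp
  have hq₀Y : q₀ ∈ Y := ⟨hq₀T, Ioo_subset_Icc_self hq₀I⟩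
  have hYne : Y.Nonempty := ⟨q₀, hq₀Y⟩
  have hqb : q₀ ≠ b₀ := fun h => hq₀B (h ▸ mem_iUnion.2 ⟨m₁, hb₀⟩)
  have hYint : interior Y = ∅ := by
    have h1 := interior_mono (inter_subset_left : Y ⊆ S.T)
    rw [hS.hTint] at h1
    exact subset_empty_iff.1 h1
  have hWopen : IsOpen (Ioo p.1 p.2 \ Phi F (n+1)) := isOpen_Ioo.sdiff (phi_closed F hFc _)
  have hYW : Y ⊆ Ioo p.1 p.2 \ Phi F (n+1) := by
    intro x hx
    refine ⟨hYIoo hx, fun hxPhi => ?_⟩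
    obtain ⟨j, _, hxj⟩ := (mem_phi_iff F).1 hxPhi
    have hxA : x ∈ A := hFA j hxj
    have hmem : x ∈ S.T ∩ A := ⟨hx.1, hxA⟩
    rw [hS.hTA] at hmem
    exact absurd hmem (notMem_empty x)
  obtain ⟨δ₀, hδ₀, hthick⟩ := hYc.exists_thickening_subset_open hWopen hYW
  set d₁₂ := |q₀ - b₀| with hd
  have hd₁₂ : 0 < d₁₂ := abs_pos.2 (sub_ne_zero.2 hqb)
  set ε := min ((1/2:ℝ)^(n+1)) (min (δ₀/2) (d₁₂/2)) with hε
  have hεpos : 0 < ε := lt_min (by positivity) (lt_min (by linarith) (by linarith))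
  have hεδ : ε < δ₀ := lt_of_le_of_lt (le_trans (min_le_right _ _) (min_le_left _ _))
    (by linarith)
  have hεd : ε < d₁₂ := lt_of_le_of_lt (le_trans (min_le_right _ _) (min_le_right _ _))
    (by linarith)
  have hεlen : ε ≤ (1/2:ℝ)^(n+1) := min_le_left _ _
  obtain ⟨l₀, hl₀, hl₀pw, hl₀cov, g, hgl, y₀, hy₀Y, hgy⟩ := cover_lemma hYc hYne hYint hεpos
  have hsubW : ∀ p' ∈ l₀, Icc p'.1 p'.2 ⊆ Ioo p.1 p.2 \ Phi F (n+1) := by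
    intro p' hp' z hz
    obtain ⟨hlt, hlen, ⟨y, hyY, hyI⟩, _⟩ := hl₀ p' hp'
    apply hthick
    rw [Metric.mem_thickening_iff]
    refine ⟨y, hyY, ?_⟩
    rw [Real.dist_eq]
    have h1 : |z - y| ≤ ε := by
      rw [abs_le]
      obtain ⟨hz1, hz2⟩ := hz
      obtain ⟨hy1, hy2⟩ := hyI
      constructor <;> linarith
    linarith
  have hfresh : ∀ p' : ℝ × ℝ, ∃ mz : ℕ × ℝ, p'.1 < p'.2 →
      (B mz.1 ⊆ Ioo p'.1 p'.2 ∧ mz.2 ∈ Ioo p'.1 p'.2 ∧ mz.2 ∉ A ∪ ⋃ m', B m') := by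
    intro p'
    by_cases h : p'.1 < p'.2
    · obtain ⟨m, hm⟩ := hBdense (Ioo p'.1 p'.2) isOpen_Ioo (nonempty_Ioo.2 h)
      obtain ⟨z, hzs, hzU⟩ := hdense.exists_mem_open isOpen_Ioo (nonempty_Ioo.2 h)
      exact ⟨(m, z), fun _ => ⟨hm, hzU, hzs⟩⟩
    · exact ⟨(0, 0), fun hc => absurd hc h⟩
  choose mz hmz using hfresh
  refine ⟨l₀, ⋃ p' ∈ l₀, (B (mz p').1 ∪ {(mz p').2}), ?_, hl₀pw, ?_, ?_, ?_, ?_, ?_, ?_, ?_, ?_, ?_⟩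
  · intro p' hp'
    obtain ⟨hlt, hlen, _, _⟩ := hl₀ p' hp'
    have hw := hsubW p' hp'
    refine ⟨hlt, le_trans hlen hεlen, fun z hz => (hw hz).1, ?_⟩
    rw [eq_empty_iff_forall_notMem]
    exact fun z hz => (hw hz.1).2 hz.2
  · -- trace covered
    exact hl₀cov
  · -- Tadd compact
    apply Set.Finite.isCompact_biUnion l₀.finite_toSet
    intro p' hp'
    have hlt := (hl₀ p' hp').1
    have hbdd : IsBounded (B (mz p').1) :=
      (isBounded_Ioo _ _).subset ((hmz p' hlt).1)
    exact (Metric.isCompact_of_isClosed_isBounded (hBc _) hbdd).union isCompact_singleton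
  · -- interior empty
    apply interior_list_biUnion_empty
    · intro p' hp'
      exact (hBc _).union isClosed_singleton
    · intro p' hp'
      exact interior_union_empty (hBc _) (hBint _) (interior_singleton _)
  · -- avoid A
    rw [eq_empty_iff_forall_notMem]
    rintro x ⟨hx1, hx2⟩
    obtain ⟨p', hp', hx⟩ := mem_iUnion₂.1 hx1
    have hlt := (hl₀ p' hp').1
    rcases hx with hx | hx
    · exact (Set.disjoint_left.1 (hBA _)) hx2 hx
    · rw [mem_singleton_iff] at hx
      subst hx
      exact (hmz p' hlt).2.2 (Or.inl hx2)
  · -- Tadd in children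
    intro x hx
    obtain ⟨p', hp', hx⟩ := mem_iUnion₂.1 hx
    have hlt := (hl₀ p' hp').1
    apply mem_iUnion₂.2
    refine ⟨p', hp', ?_⟩
    rcases hx with hx | hx
    · exact (hmz p' hlt).1 hx
    · rw [mem_singleton_iff] at hx
      subst hx
      exact (hmz p' hlt).2.1
  · -- fresh B per child
    intro p' hp'
    have hlt := (hl₀ p' hp').1
    refine ⟨(mz p').1, (hmz p' hlt).1, ?_⟩
    intro x hx
    exact mem_iUnion₂.2 ⟨p', hp', Or.inl hx⟩
  · -- fresh q per child
    intro p' hp'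
    have hlt := (hl₀ p' hp').1
    refine ⟨(mz p').2, mem_iUnion₂.2 ⟨p', hp', Or.inr rfl⟩, (hmz p' hlt).2.1, ?_⟩
    intro hx
    exact (hmz p' hlt).2.2 (Or.inr hx)
  · -- two disjoint children
    obtain ⟨P₁, hP₁, hq₀P⟩ := mem_iUnion₂.1 (hl₀cov hq₀Y)
    obtain ⟨P₂, hP₂, hb₀P⟩ := mem_iUnion₂.1 (hl₀cov hb₀Y)
    have hPne : P₁ ≠ P₂ := by
      intro h
      subst h
      have h1 := (hl₀ P₁ hP₁).2.1
      have h2 : d₁₂ ≤ P₁.2 - P₁.1 := by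
        rw [hd]
        rw [abs_le]
        obtain ⟨hu1, hu2⟩ := hq₀P
        obtain ⟨hv1, hv2⟩ := hb₀P
        constructor <;> linarith
      linarith [hεd]
    exact ⟨P₁, hP₁, P₂, hP₂, (letI : Std.Symm (fun p q : ℝ × ℝ => Disjoint (Icc p.1 p.2) (Icc q.1 q.2)) := ⟨fun a b hab => Disjoint.symm hab⟩; hl₀pw.forall) hP₁ hP₂ hPne⟩
  · -- gap point
    refine ⟨g, ?_, hgl⟩
    have hgW : g ∈ Ioo p.1 p.2 \ Phi F (n+1) := by
      apply hthick
      rw [Metric.mem_thickening_iff]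
      exact ⟨y₀, hy₀Y, by rw [Real.dist_eq]; linarith⟩
    exact hgW.1


lemma step_ex (hFc : ∀ j, IsClosed (F j)) (hFA : ∀ j, F j ⊆ A)
    (hBc : ∀ m, IsClosed (B m)) (hBne : ∀ m, (B m).Nonempty)
    (hBA : ∀ m, Disjoint A (B m)) (hBint : ∀ m, interior (B m) = ∅)
    (hBdense : ∀ U : Set ℝ, IsOpen U → U.Nonempty → ∃ m, B m ⊆ U)
    (hdense : Dense ((A ∪ ⋃ m, B m)ᶜ))
    {n : ℕ} {S : CState} (hS : Good A F B n S) :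
    ∃ S' : CState, Good A F B (n+1) S' ∧ StepR S S' := by
  classical
  have H : ∀ p : ℝ × ℝ, ∃ lT : List (ℝ × ℝ) × Set ℝ,
      p ∈ S.comps → RProps A F B n S p lT.1 lT.2 := by
    intro p
    by_cases hp : p ∈ S.comps
    · obtain ⟨l, Ta, h⟩ := refine_comp hFc hFA hBc hBne hBA hBint hBdense hdense hS hp
      exact ⟨(l, Ta), fun _ => h⟩
    · exact ⟨([], ∅), fun hc => absurd hc hp⟩
  choose ch hch using H
  refine ⟨⟨S.comps.flatMap (fun p => (ch p).1), S.T ∪ ⋃ p ∈ S.comps, (ch p).2⟩, ?_, ?_⟩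
  · constructor
    · -- nonempty comps
      obtain ⟨p, hp⟩ := List.exists_mem_of_ne_nil _ hS.hcne
      obtain ⟨p₁, hp₁, _⟩ := (hch p hp).htwo
      exact List.ne_nil_of_mem (List.mem_flatMap.2 ⟨p, hp, hp₁⟩)
    · intro p' hp'
      obtain ⟨p, hp, hp'mem⟩ := List.mem_flatMap.1 hp'
      obtain ⟨h1, h2, _, _⟩ := (hch p hp).hmain p' hp'mem
      exact ⟨h1, h2⟩
    · rw [List.pairwise_flatMap]
      constructor
      · exact fun p hp => (hch p hp).hpw
      · refine List.Pairwise.imp_of_mem ?_ hS.hdisj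
        intro p₁ p₂ h₁ h₂ hd x hx y hy
        refine Disjoint.mono ?_ ?_ hd
        · exact subset_trans (((hch p₁ h₁).hmain x hx).2.2.1) Ioo_subset_Icc_self
        · exact subset_trans (((hch p₂ h₂).hmain y hy).2.2.1) Ioo_subset_Icc_self
    · intro p' hp'
      obtain ⟨p, hp, hp'mem⟩ := List.mem_flatMap.1 hp'
      exact ((hch p hp).hmain p' hp'mem).2.2.2
    · exact hS.hTc.union (Set.Finite.isCompact_biUnion S.comps.finite_toSet
        (fun p hp => (hch p hp).hTac))
    · rintro x (hx | hx)
      · obtain ⟨p, hp, hxp⟩ := mem_iUnion₂.1 (hS.hTsub hx)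
        obtain ⟨p', hp', hxp'⟩ := mem_iUnion₂.1
          ((hch p hp).hcov ⟨hx, Ioo_subset_Icc_self hxp⟩)
        exact mem_iUnion₂.2 ⟨p', List.mem_flatMap.2 ⟨p, hp, hp'⟩, hxp'⟩
      · obtain ⟨p, hp, hxp⟩ := mem_iUnion₂.1 hx
        obtain ⟨p', hp', hxp'⟩ := mem_iUnion₂.1 ((hch p hp).hTasub hxp)
        exact mem_iUnion₂.2 ⟨p', List.mem_flatMap.2 ⟨p, hp, hp'⟩, hxp'⟩
    · rw [eq_empty_iff_forall_notMem]
      rintro x ⟨(hx | hx), hxA⟩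
      · have h0 := hS.hTA
        rw [eq_empty_iff_forall_notMem] at h0
        exact h0 x ⟨hx, hxA⟩
      · obtain ⟨p, hp, hxp⟩ := mem_iUnion₂.1 hx
        have := (hch p hp).hTaA
        rw [eq_empty_iff_forall_notMem] at this
        exact this x ⟨hxp, hxA⟩
    · apply interior_union_empty hS.hTc.isClosed hS.hTint
      apply interior_list_biUnion_empty
      · exact fun p hp => (hch p hp).hTac.isClosed
      · exact fun p hp => (hch p hp).hTaint
    · intro p' hp'
      obtain ⟨p, hp, hp'mem⟩ := List.mem_flatMap.1 hp'
      obtain ⟨m, hm1, hm2⟩ := (hch p hp).hBm p' hp'mem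
      refine ⟨m, hm1, subset_trans hm2 (subset_trans ?_ subset_union_right)⟩
      exact subset_biUnion_of_mem (u := fun p => (ch p).2) (show p ∈ {x | x ∈ S.comps} from hp)
    · intro p' hp'
      obtain ⟨p, hp, hp'mem⟩ := List.mem_flatMap.1 hp'
      obtain ⟨q, hq1, hq2, hq3⟩ := (hch p hp).hqq p' hp'mem
      exact ⟨q, Or.inr (mem_iUnion₂.2 ⟨p, hp, hq1⟩), hq2, hq3⟩
  · constructor
    · intro p' hp'
      obtain ⟨p, hp, hp'mem⟩ := List.mem_flatMap.1 hp'
      exact ⟨p, hp, subset_trans (((hch p hp).hmain p' hp'mem).2.2.1) Ioo_subset_Icc_self⟩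
    · exact subset_union_left
    · intro p hp
      obtain ⟨p₁, hp₁, p₂, hp₂, hd⟩ := (hch p hp).htwo
      exact ⟨p₁, List.mem_flatMap.2 ⟨p, hp, hp₁⟩, p₂, List.mem_flatMap.2 ⟨p, hp, hp₂⟩, hd,
        subset_trans (((hch p hp).hmain p₁ hp₁).2.2.1) Ioo_subset_Icc_self,
        subset_trans (((hch p hp).hmain p₂ hp₂).2.2.1) Ioo_subset_Icc_self⟩
    · intro p hp
      obtain ⟨g, hg, hgavoid⟩ := (hch p hp).hgap
      refine ⟨g, hg, ?_⟩
      intro p' hp'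
      obtain ⟨pp, hpp, hp'mem⟩ := List.mem_flatMap.1 hp'
      by_cases h : pp = p
      · subst h
        exact hgavoid p' hp'mem
      · intro hgmem
        have hdd : Disjoint (Icc pp.1 pp.2) (Icc p.1 p.2) :=
          (letI : Std.Symm (fun p q : ℝ × ℝ => Disjoint (Icc p.1 p.2) (Icc q.1 q.2)) := ⟨fun a b hab => Disjoint.symm hab⟩; hS.hdisj.forall) hpp hp h
        have h1 : g ∈ Icc pp.1 pp.2 :=
          subset_trans (((hch pp hpp).hmain p' hp'mem).2.2.1) Ioo_subset_Icc_self hgmem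
        exact (Set.disjoint_left.1 hdd) h1 (Ioo_subset_Icc_self hg)

lemma init_ex (hBc : ∀ m, IsClosed (B m)) (hBne : ∀ m, (B m).Nonempty)
    (hBA : ∀ m, Disjoint A (B m)) (hBint : ∀ m, interior (B m) = ∅)
    (hBdense : ∀ U : Set ℝ, IsOpen U → U.Nonempty → ∃ m, B m ⊆ U)
    (hdense : Dense ((A ∪ ⋃ m, B m)ᶜ))
    {a b : ℝ} (hab : a < b) :
    ∃ S : CState, Good A F B 0 S ∧ ∀ p ∈ S.comps, Icc p.1 p.2 ⊆ Ioo a b := by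
  classical
  set w := min (b - a) 1 with hw
  have hwpos : 0 < w := lt_min (by linarith) one_pos
  have hwle : w ≤ b - a := min_le_left _ _
  have hwle1 : w ≤ 1 := min_le_right _ _
  set u := (a+b)/2 - w/8 with hu
  set v := (a+b)/2 + w/8 with hv
  have huv : u < v := by rw [hu, hv]; linarith
  have hIab : Icc u v ⊆ Ioo a b := by
    intro x hx
    obtain ⟨h1, h2⟩ := hx
    rw [hu] at h1
    rw [hv] at h2
    constructor <;> linarith
  obtain ⟨m, hm⟩ := hBdense (Ioo u v) isOpen_Ioo (nonempty_Ioo.2 huv)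
  obtain ⟨q, hqs, hqU⟩ := hdense.exists_mem_open isOpen_Ioo (nonempty_Ioo.2 huv)
  have hqA : q ∉ A := fun h => hqs (Or.inl h)
  have hqB : q ∉ ⋃ m', B m' := fun h => hqs (Or.inr h)
  have hcovT : B m ∪ {q} ⊆ ⋃ p ∈ ([((u,v):ℝ×ℝ)] : List (ℝ×ℝ)), Ioo p.1 p.2 := by
    intro x hx
    apply mem_iUnion₂.2
    refine ⟨(u,v), List.mem_singleton_self _, ?_⟩
    rcases hx with hx | hx
    · exact hm hx
    · rw [mem_singleton_iff] at hx; subst hx; exact hqU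
  refine ⟨⟨[(u,v)], B m ∪ {q}⟩, ⟨?_, ?_, ?_, ?_, ?_, ?_, ?_, ?_, ?_, ?_⟩, ?_⟩
  · simp
  · intro p hp
    rw [List.mem_singleton] at hp
    subst hp
    constructor
    · exact huv
    · show v - u ≤ (1/2:ℝ)^0
      rw [hu, hv]
      simp only [pow_zero]
      linarith
  · exact List.pairwise_singleton _ _
  · intro p hp
    rw [eq_empty_iff_forall_notMem]
    rintro x ⟨_, hx⟩
    rw [mem_phi_iff] at hx
    obtain ⟨j, hj, _⟩ := hx
    omega
  · refine IsCompact.union ?_ isCompact_singleton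
    exact Metric.isCompact_of_isClosed_isBounded (hBc m)
      ((isBounded_Ioo u v).subset hm)
  · exact hcovT
  · rw [eq_empty_iff_forall_notMem]
    rintro x ⟨(hx | hx), hxA⟩
    · exact (Set.disjoint_left.1 (hBA m)) hxA hx
    · rw [mem_singleton_iff] at hx; subst hx; exact hqA hxA
  · exact interior_union_empty (hBc m) (hBint m) (interior_singleton _)
  · intro p hp
    rw [List.mem_singleton] at hp
    subst hp
    exact ⟨m, hm, subset_union_left⟩
  · intro p hp
    rw [List.mem_singleton] at hp
    subst hp
    exact ⟨q, Or.inr rfl, hqU, hqB⟩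
  · intro p hp
    rw [List.mem_singleton] at hp
    subst hp
    exact hIab

variable (A F B) in
structure CellHyps : Prop where
  hFc : ∀ j, IsClosed (F j)
  hFA : ∀ j, F j ⊆ A
  hBc : ∀ m, IsClosed (B m)
  hBne : ∀ m, (B m).Nonempty
  hBA : ∀ m, Disjoint A (B m)
  hBint : ∀ m, interior (B m) = ∅
  hBdense : ∀ U : Set ℝ, IsOpen U → U.Nonempty → ∃ m, B m ⊆ U
  hdense : Dense ((A ∪ ⋃ m, B m)ᶜ)

noncomputable def chainAux (hyp : CellHyps A F B) {a b : ℝ} (hab : a < b) :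
    (n : ℕ) → {S : CState // Good A F B n S}
  | 0 => ⟨(init_ex hyp.hBc hyp.hBne hyp.hBA hyp.hBint hyp.hBdense hyp.hdense hab).choose,
      (init_ex hyp.hBc hyp.hBne hyp.hBA hyp.hBint hyp.hBdense hyp.hdense hab).choose_spec.1⟩
  | n+1 => ⟨(step_ex hyp.hFc hyp.hFA hyp.hBc hyp.hBne hyp.hBA hyp.hBint hyp.hBdense hyp.hdense
        (chainAux hyp hab n).2).choose,
      (step_ex hyp.hFc hyp.hFA hyp.hBc hyp.hBne hyp.hBA hyp.hBint hyp.hBdense hyp.hdense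
        (chainAux hyp hab n).2).choose_spec.1⟩

lemma chain_step (hyp : CellHyps A F B) {a b : ℝ} (hab : a < b) (n : ℕ) :
    StepR (chainAux hyp hab n).1 (chainAux hyp hab (n+1)).1 :=
  (step_ex hyp.hFc hyp.hFA hyp.hBc hyp.hBne hyp.hBA hyp.hBint hyp.hBdense hyp.hdense
    (chainAux hyp hab n).2).choose_spec.2

lemma chain_init (hyp : CellHyps A F B) {a b : ℝ} (hab : a < b) :
    ∀ p ∈ (chainAux hyp hab 0).1.comps, Icc p.1 p.2 ⊆ Ioo a b :=
  (init_ex hyp.hBc hyp.hBne hyp.hBA hyp.hBint hyp.hBdense hyp.hdense hab).choose_spec.2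

lemma cell_lemma (hyp : CellHyps A F B) (hAeq : A = ⋃ j, F j) {a b : ℝ} (hab : a < b) :
    ∃ K : Set ℝ, K ⊆ Ioo a b ∧ IsCompact K ∧ K.Nonempty ∧ interior K = ∅ ∧
      (∀ x ∈ K, AccPt x (𝓟 K)) ∧ K ∩ A = ∅ ∧
      (∀ x ∈ K, ∀ ε > 0, ∃ m, B m ⊆ Metric.ball x ε ∩ K) ∧
      (∀ x ∈ K, ∀ ε > 0, ∃ q ∈ K, |q - x| < ε ∧ q ∉ ⋃ m, B m) := by
  classical
  set Sn : ℕ → CState := fun n => (chainAux hyp hab n).1 with hSn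
  have hGood : ∀ n, Good A F B n (Sn n) := fun n => (chainAux hyp hab n).2
  have hStep : ∀ n, StepR (Sn n) (Sn (n+1)) := fun n => chain_step hyp hab n
  set Xs : ℕ → Set ℝ := fun n => ⋃ p ∈ (Sn n).comps, Icc p.1 p.2 with hXs
  have hXclosed : ∀ n, IsClosed (Xs n) := fun n =>
    isClosed_list_biUnion _ _ (fun p _ => isClosed_Icc)
  have hXmono : ∀ n, Xs (n+1) ⊆ Xs n := by
    intro n x hx
    obtain ⟨p', hp', hxp'⟩ := mem_iUnion₂.1 hx
    obtain ⟨p, hp, hsub⟩ := (hStep n).hsub p' hp'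
    exact mem_iUnion₂.2 ⟨p, hp, hsub hxp'⟩
  have hXmono' : ∀ m n, m ≤ n → Xs n ⊆ Xs m := by
    intro m n hmn
    induction n with
    | zero =>
      have : m = 0 := by omega
      subst this
      exact subset_rfl
    | succ n ih =>
      rcases Nat.eq_or_lt_of_le hmn with h | h
      · rw [h]
      · exact subset_trans (hXmono n) (ih (by omega))
  have hX0 : Xs 0 ⊆ Ioo a b := by
    intro x hx
    obtain ⟨p, hp, hxp⟩ := mem_iUnion₂.1 hx
    exact chain_init hyp hab p hp hxp
  have hXsub : ∀ n, Xs n ⊆ Ioo a b := fun n => subset_trans (hXmono' 0 n (Nat.zero_le n)) hX0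
  have hXbdd : ∀ n, Bornology.IsBounded (Xs n) := fun n =>
    (isBounded_Ioo a b).subset (hXsub n)
  have hXcompact : ∀ n, IsCompact (Xs n) := fun n =>
    Metric.isCompact_of_isClosed_isBounded (hXclosed n) (hXbdd n)
  have hXne : ∀ n, (Xs n).Nonempty := by
    intro n
    obtain ⟨p, hp⟩ := List.exists_mem_of_ne_nil _ (hGood n).hcne
    have hlt := ((hGood n).hlen p hp).1
    exact ⟨p.1, mem_iUnion₂.2 ⟨p, hp, left_mem_Icc.2 hlt.le⟩⟩
  set K := ⋂ n, Xs n with hK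
  -- committed sets live in K
  have hTmono : ∀ m n, m ≤ n → (Sn m).T ⊆ (Sn n).T := by
    intro m n hmn
    induction n with
    | zero =>
      have : m = 0 := by omega
      subst this
      exact subset_rfl
    | succ n ih =>
      rcases Nat.eq_or_lt_of_le hmn with h | h
      · rw [h]
      · exact subset_trans (ih (by omega)) (hStep n).hT
  have hTsubX : ∀ n, (Sn n).T ⊆ Xs n := fun n x hx => by
    obtain ⟨p, hp, hxp⟩ := mem_iUnion₂.1 ((hGood n).hTsub hx)
    exact mem_iUnion₂.2 ⟨p, hp, Ioo_subset_Icc_self hxp⟩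
  have hTK : ∀ n, (Sn n).T ⊆ K := by
    intro n
    rw [hK]
    refine subset_iInter (fun k => ?_)
    rcases le_or_gt n k with h | h
    · exact subset_trans (hTmono n k h) (hTsubX k)
    · exact subset_trans (subset_trans (hTsubX n) (hXmono' k n h.le)) subset_rfl
  -- find the component of a point of K at each level
  have hcomp : ∀ (x : ℝ), x ∈ K → ∀ n, ∃ p ∈ (Sn n).comps, x ∈ Icc p.1 p.2 := by
    intro x hx n
    have : x ∈ Xs n := (mem_iInter.1 hx) n
    obtain ⟨p, hp, hxp⟩ := mem_iUnion₂.1 this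
    exact ⟨p, hp, hxp⟩
  have hsmall : ∀ ε : ℝ, 0 < ε → ∃ n : ℕ, ((1:ℝ)/2)^n < ε := by
    intro ε hε
    obtain ⟨n, hn⟩ := exists_pow_lt_of_lt_one hε (by norm_num : (1:ℝ)/2 < 1)
    exact ⟨n, hn⟩
  refine ⟨K, subset_trans (iInter_subset _ 0) hX0, ?_, ?_, ?_, ?_, ?_, ?_, ?_⟩
  · exact (hXcompact 0).of_isClosed_subset (isClosed_iInter hXclosed) (iInter_subset _ 0)
  · exact IsCompact.nonempty_iInter_of_sequence_nonempty_isCompact_isClosed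
      Xs hXmono hXne (hXcompact 0) hXclosed
  · -- empty interior
    rw [eq_empty_iff_forall_notMem]
    intro x hx
    obtain ⟨ε, hε, hball⟩ := Metric.isOpen_iff.1 isOpen_interior x hx
    obtain ⟨n, hn⟩ := hsmall ε hε
    obtain ⟨p, hp, hxp⟩ := hcomp x (interior_subset hx) n
    obtain ⟨g, hg, hgavoid⟩ := (hStep n).hgap p hp
    have hgball : g ∈ Metric.ball x ε := by
      rw [Metric.mem_ball, Real.dist_eq]
      have hlen := ((hGood n).hlen p hp).2
      obtain ⟨h1, h2⟩ := hxp
      obtain ⟨h3, h4⟩ := hg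
      rw [abs_lt]
      constructor <;> linarith
    have hgK : g ∈ K := interior_subset (hball hgball)
    obtain ⟨p', hp', hgp'⟩ := hcomp g hgK (n+1)
    exact hgavoid p' hp' hgp'
  · -- preperfect
    intro x hx
    rw [accPt_iff_nhds]
    intro U hU
    obtain ⟨ε, hε, hball⟩ := Metric.mem_nhds_iff.1 hU
    obtain ⟨n, hn⟩ := hsmall ε hε
    obtain ⟨p, hp, hxp⟩ := hcomp x hx n
    obtain ⟨p₁, hp₁, p₂, hp₂, hd, hs₁, hs₂⟩ := (hStep n).htwo p hp
    have hKpt : ∀ pc, pc ∈ (Sn (n+1)).comps → ∃ y ∈ K, y ∈ Icc pc.1 pc.2 := by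
      intro pc hpc
      obtain ⟨m, hm1, hm2⟩ := (hGood (n+1)).hBmem pc hpc
      obtain ⟨y, hy⟩ := hyp.hBne m
      exact ⟨y, hTK (n+1) (hm2 hy), Ioo_subset_Icc_self (hm1 hy)⟩
    have hxnot : x ∉ Icc p₁.1 p₁.2 ∨ x ∉ Icc p₂.1 p₂.2 := by
      by_contra h
      push_neg at h
      exact (Set.disjoint_left.1 hd) h.1 h.2
    have hget : ∃ y ∈ K, y ≠ x ∧ y ∈ Icc p.1 p.2 := by
      rcases hxnot with h | h
      · obtain ⟨y, hyK, hyp₁⟩ := hKpt p₁ hp₁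
        exact ⟨y, hyK, fun he => h (he ▸ hyp₁), hs₁ hyp₁⟩
      · obtain ⟨y, hyK, hyp₂⟩ := hKpt p₂ hp₂
        exact ⟨y, hyK, fun he => h (he ▸ hyp₂), hs₂ hyp₂⟩
    obtain ⟨y, hyK, hyx, hyp'⟩ := hget
    refine ⟨y, ⟨hball ?_, hyK⟩, hyx⟩
    rw [Metric.mem_ball, Real.dist_eq]
    have hlen := ((hGood n).hlen p hp).2
    obtain ⟨h1, h2⟩ := hxp
    obtain ⟨h3, h4⟩ := hyp'
    rw [abs_lt]
    constructor <;> linarith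
  · -- avoid A
    rw [eq_empty_iff_forall_notMem]
    rintro x ⟨hxK, hxA⟩
    rw [hAeq] at hxA
    obtain ⟨j, hj⟩ := mem_iUnion.1 hxA
    obtain ⟨p, hp, hxp⟩ := hcomp x hxK (j+1)
    have h0 := (hGood (j+1)).hF p hp
    rw [eq_empty_iff_forall_notMem] at h0
    exact h0 x ⟨hxp, (mem_phi_iff F).2 ⟨j, by omega, hj⟩⟩
  · -- B's dense in K
    intro x hx ε hε
    obtain ⟨n, hn⟩ := hsmall ε hε
    obtain ⟨p, hp, hxp⟩ := hcomp x hx n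
    obtain ⟨m, hm1, hm2⟩ := (hGood n).hBmem p hp
    refine ⟨m, fun z hz => ⟨?_, hTK n (hm2 hz)⟩⟩
    rw [Metric.mem_ball, Real.dist_eq]
    have hlen := ((hGood n).hlen p hp).2
    obtain ⟨h1, h2⟩ := hxp
    obtain ⟨h3, h4⟩ := Ioo_subset_Icc_self (hm1 hz)
    rw [abs_lt]
    constructor <;> linarith
  · -- non-B points dense in K
    intro x hx ε hε
    obtain ⟨n, hn⟩ := hsmall ε hε
    obtain ⟨p, hp, hxp⟩ := hcomp x hx n
    obtain ⟨q, hq1, hq2, hq3⟩ := (hGood n).hq p hp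
    refine ⟨q, hTK n hq1, ?_, hq3⟩
    have hlen := ((hGood n).hlen p hp).2
    obtain ⟨h1, h2⟩ := hxp
    obtain ⟨h3, h4⟩ := Ioo_subset_Icc_self hq2
    rw [abs_lt]
    constructor <;> linarith


/-- the gluing prefix map -/
def patch (k : ℕ) (y : ℕ → Bool) : ℕ → Bool := fun i =>
  if i ≤ k / 2 then decide (k % 2 = 1)
  else if i = k / 2 + 1 then !(decide (k % 2 = 1))
  else y (i - (k / 2) - 2)

lemma patch_mem (k : ℕ) (y : ℕ → Bool) : patch k y ∈ CantorMinusEnds := by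
  set b := decide (k % 2 = 1)
  have h0 : patch k y 0 = b := by simp [patch, b]
  have h1 : patch k y (k/2 + 1) = !b := by
    simp [patch, b]
  constructor
  · intro h
    have e0 := congrFun h 0
    have e1 := congrFun h (k/2 + 1)
    rw [h0] at e0
    rw [h1] at e1
    rw [e0] at e1
    simp at e1
  · intro h
    have e0 := congrFun h 0
    have e1 := congrFun h (k/2 + 1)
    rw [h0] at e0
    rw [h1] at e1
    rw [e0] at e1
    simp at e1

def cmeMap : (Σ _ : ℕ, (ℕ → Bool)) → CantorMinusEnds :=
  fun p => ⟨patch p.1 p.2, patch_mem p.1 p.2⟩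

lemma exists_flip {x : ℕ → Bool} (hx : x ∈ CantorMinusEnds) : ∃ n, x n ≠ x 0 := by
  by_contra h
  push_neg at h
  have hxc : x = fun _ => x 0 := funext fun n => h n
  cases hb : x 0
  · exact hx.1 (by rw [hxc, hb])
  · exact hx.2 (by rw [hxc, hb])

lemma cmeMap_bijective : Function.Bijective cmeMap := by
  constructor
  · rintro ⟨k, y⟩ ⟨k', y'⟩ h
    have hf : patch k y = patch k' y' := congrArg Subtype.val h
    set b := decide (k % 2 = 1) with hb
    set b' := decide (k' % 2 = 1) with hb'
    set j := k / 2 with hj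
    set j' := k' / 2 with hj'
    -- evaluate at 0 and at flips
    have h0 : patch k y 0 = b := by simp [patch, hb]
    have h0' : patch k' y' 0 = b' := by simp [patch, hb']
    have hflip : ∀ (K : ℕ) (z : ℕ → Bool) (i : ℕ), i ≤ K/2 → patch K z i = decide (K % 2 = 1) := by
      intro K z i hi
      simp [patch, hi]
    have hflip1 : ∀ (K : ℕ) (z : ℕ → Bool), patch K z (K/2+1) = !(decide (K % 2 = 1)) := by
      intro K z
      simp [patch]
    have hbb : b = b' := by
      have := congrFun hf 0
      rw [h0, h0'] at this
      exact this
    have hjj : j = j' := by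
      by_contra hne
      rcases Nat.lt_or_ge j j' with hlt | hge
      · have e1 := congrFun hf (j+1)
        have e2 : patch k y (j+1) = !b := hflip1 k y
        have e3 : patch k' y' (j+1) = b' := hflip k' y' (j+1) (by omega)
        rw [e2, e3, ← hbb] at e1
        simp at e1
      · have hlt' : j' < j := by omega
        have e1 := congrFun hf (j'+1)
        have e2 : patch k y (j'+1) = b := hflip k y (j'+1) (by omega)
        have e3 : patch k' y' (j'+1) = !b' := hflip1 k' y'
        rw [e2, e3, ← hbb] at e1
        simp at e1
    have hkk : k = k' := by
      have hm : k % 2 = k' % 2 := by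
        have : (decide (k % 2 = 1)) = (decide (k' % 2 = 1)) := hbb
        rcases Nat.mod_two_eq_zero_or_one k with h1 | h1 <;>
          rcases Nat.mod_two_eq_zero_or_one k' with h2 | h2 <;>
            simp [h1, h2] at this ⊢
      omega
    subst hkk
    refine Sigma.ext rfl (heq_of_eq (funext fun i => ?_))
    have := congrFun hf (j + 2 + i)
    have e1 : patch k y (j+2+i) = y i := by
      simp only [patch]
      rw [if_neg (by omega), if_neg (by omega)]
      congr 1
      omega
    have e2 : patch k y' (j+2+i) = y' i := by
      simp only [patch]
      rw [if_neg (by omega), if_neg (by omega)]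
      congr 1
      omega
    rw [e1, e2] at this
    exact this
  · rintro ⟨x, hx⟩
    obtain ⟨n₀, hn₀⟩ := exists_flip hx
    set N := Nat.find (⟨n₀, hn₀⟩ : ∃ n, x n ≠ x 0) with hN
    have hNspec : x N ≠ x 0 := Nat.find_spec (⟨n₀, hn₀⟩ : ∃ n, x n ≠ x 0)
    have hNmin : ∀ i, i < N → x i = x 0 := by
      intro i hi
      have := Nat.find_min (⟨n₀, hn₀⟩ : ∃ n, x n ≠ x 0) hi
      simpa using this
    have hN1 : 1 ≤ N := by
      rcases Nat.eq_zero_or_pos N with h | h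
      · exfalso; apply hNspec; rw [h]
      · exact h
    set k := 2 * (N - 1) + (x 0).toNat with hk
    have hk2 : k / 2 = N - 1 := by
      rw [hk]
      rcases Bool.le_true (x 0) with _
      cases x 0 <;> simp <;> omega
    have hkm : decide (k % 2 = 1) = x 0 := by
      rw [hk]
      cases x 0 <;> simp [Nat.add_mul_mod_self_left] <;> omega
    refine ⟨⟨k, fun i => x (N + 1 + i)⟩, ?_⟩
    apply Subtype.ext
    funext i
    show patch k _ i = x i
    simp only [patch, hk2, hkm]
    by_cases h1 : i ≤ N - 1
    · rw [if_pos h1]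
      exact (hNmin i (by omega)).symm
    · rw [if_neg h1]
      by_cases h2 : i = N - 1 + 1
      · rw [if_pos h2]
        have hiN : i = N := by omega
        subst hiN
        cases hx0 : x 0 <;> cases hxN : x N <;> simp
        · rw [hx0, hxN] at hNspec; exact hNspec rfl
        · rw [hx0, hxN] at hNspec; exact hNspec rfl
      · rw [if_neg h2]
        congr 1
        omega

lemma cmeMap_continuous : Continuous cmeMap := by
  apply continuous_sigma
  intro k
  apply Continuous.subtype_mk
  apply continuous_pi
  intro i
  by_cases h1 : i ≤ k / 2
  · have he : (fun y : ℕ → Bool => patch k y i) = fun _ => decide (k % 2 = 1) :=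
      funext fun y => by simp [patch, h1]
    rw [he]
    exact continuous_const
  · by_cases h2 : i = k / 2 + 1
    · have he : (fun y : ℕ → Bool => patch k y i) = fun _ => !(decide (k % 2 = 1)) :=
        funext fun y => by simp [patch, h1, h2]
      rw [he]
      exact continuous_const
    · have he : (fun y : ℕ → Bool => patch k y i) = fun y => y (i - (k/2) - 2) :=
        funext fun y => by simp [patch, h1, h2]
      rw [he]
      exact continuous_apply _

lemma cmeMap_isOpenMap : IsOpenMap cmeMap := by
  rw [isOpenMap_sigma]
  intro k
  intro U hU
  -- image = val ⁻¹' (Cyl ∩ shift ⁻¹' U)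
  set j := k / 2 with hj
  set b := decide (k % 2 = 1) with hb
  set Cyl : Set (ℕ → Bool) := {w | (∀ i ≤ j, w i = b) ∧ w (j+1) = !b} with hCyl
  set shiftK : (ℕ → Bool) → (ℕ → Bool) := fun w i => w (j + 2 + i) with hshift
  have hCylopen : IsOpen Cyl := by
    have : Cyl = (⋂ i ∈ Finset.range (j+1), (fun w : ℕ → Bool => w i) ⁻¹' {b}) ∩
        ((fun w : ℕ → Bool => w (j+1)) ⁻¹' {!b}) := by
      ext w
      simp [hCyl, Nat.lt_succ_iff]
    rw [this]
    apply IsOpen.inter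
    · apply isOpen_biInter_finset
      intro i _
      exact (continuous_apply i).isOpen_preimage _ (isOpen_discrete _)
    · exact (continuous_apply (j+1)).isOpen_preimage _ (isOpen_discrete _)
  have hshiftcont : Continuous shiftK := continuous_pi (fun i => continuous_apply _)
  have himage : (fun y => cmeMap ⟨k, y⟩) '' U =
      Subtype.val ⁻¹' (Cyl ∩ shiftK ⁻¹' U) := by
    ext ⟨w, hw⟩
    simp only [mem_image, mem_preimage, mem_inter_iff]
    constructor
    · rintro ⟨y, hyU, heq⟩
      have hweq : patch k y = w := congrArg Subtype.val heq
      subst hweq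
      refine ⟨⟨fun i hi => by simp [patch, show i ≤ k/2 from hi, hb], by simp [patch, hb, hj]⟩, ?_⟩
      have : shiftK (patch k y) = y := by
        funext i
        simp only [hshift, patch]
        rw [if_neg (by omega), if_neg (by omega)]
        congr 1
        omega
      rw [this]
      exact hyU
    · rintro ⟨⟨hcy1, hcy2⟩, hsU⟩
      refine ⟨shiftK w, hsU, ?_⟩
      apply Subtype.ext
      show patch k (shiftK w) = w
      funext i
      simp only [patch, hshift]
      split_ifs with h1 h2
      · exact (hcy1 i h1).symm
      · rw [h2]; exact hcy2.symm
      · congr 1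
        omega
  rw [himage]
  exact (hCylopen.inter (hshiftcont.isOpen_preimage U hU)).preimage continuous_subtype_val

noncomputable def cmeHomeo : (Σ _ : ℕ, (ℕ → Bool)) ≃ₜ CantorMinusEnds :=
  Equiv.toHomeomorphOfContinuousOpen (Equiv.ofBijective cmeMap cmeMap_bijective)
    cmeMap_continuous cmeMap_isOpenMap


lemma meagre_of_closed_int_empty {X : Type*} [TopologicalSpace X] {s : Set X}
    (hs : IsClosed s) (h : interior s = ∅) : IsMeagre s := by
  rw [isMeagre_iff_countable_union_isNowhereDense]
  refine ⟨{s}, ?_, countable_singleton _, by simp⟩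
  intro t ht
  rw [mem_singleton_iff] at ht
  subst ht
  rw [hs.isNowhereDense_iff]
  exact h

end CantorAvoid

open CantorAvoid

/-- Let `A ⊆ ℝ` be a meager `F_σ` set and `(Bₙ)` a sequence of nonempty closed subsets of `ℝ`
with `B = ⋃ₙ Bₙ`, such that `A, B₀, B₁, …` are pairwise disjoint and every nonempty open subset
of `ℝ` includes some `Bₙ`. Then there is a Cantor set `C ⊆ ℝ` (homeomorphic to the Cantor space
minus endpoints) such that `C` is disjoint from `A`, `B` is meager in `C`, and every nonempty
relatively open subset of `C` includes some `Bₙ`. -/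
theorem exists_cantor_set_avoiding_meager_fsigma
    (A : Set ℝ) (hAm : IsMeagre A)
    (hAF : ∃ F : ℕ → Set ℝ, (∀ n, IsClosed (F n)) ∧ A = ⋃ n, F n)
    (B : ℕ → Set ℝ) (hBc : ∀ n, IsClosed (B n)) (hBne : ∀ n, (B n).Nonempty)
    (hdisjAB : ∀ n, Disjoint A (B n))
    (hdisjB : Pairwise fun m n => Disjoint (B m) (B n))
    (hBdense : ∀ U : Set ℝ, IsOpen U → U.Nonempty → ∃ n, B n ⊆ U) :
    ∃ C : Set ℝ, Nonempty (C ≃ₜ CantorMinusEnds) ∧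
      Disjoint C A ∧
      IsMeagre ((fun x : C => (x : ℝ)) ⁻¹' (⋃ n, B n)) ∧
      ∀ V : Set ℝ, IsOpen V → (V ∩ C).Nonempty → ∃ n, B n ⊆ V ∩ C := by
  classical
  obtain ⟨F, hFc, hAeq⟩ := hAF
  -- each B n has empty interior
  have hBint : ∀ n, interior (B n) = ∅ := by
    intro n
    by_contra h
    have hne : (interior (B n)).Nonempty := nonempty_iff_ne_empty.2 h
    obtain ⟨m, hm⟩ := hBdense _ isOpen_interior hne
    by_cases hmn : m = n
    · subst hmn
      have hi : interior (B m) = B m := Subset.antisymm interior_subset hm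
      have hopen : IsOpen (B m) := by rw [← hi]; exact isOpen_interior
      have huniv : B m = univ := IsClopen.eq_univ ⟨hBc m, hopen⟩ (hBne m)
      have hd : Disjoint (B m) (B (m+1)) := hdisjB (show m ≠ m + 1 by omega)
      rw [huniv] at hd
      obtain ⟨y, hy⟩ := hBne (m+1)
      exact (Set.disjoint_left.1 hd) (mem_univ y) hy
    · have hd := hdisjB hmn
      obtain ⟨y, hy⟩ := hBne m
      exact (Set.disjoint_left.1 hd) hy (interior_subset (hm hy))
  have hBmeagre : ∀ m, IsMeagre (B m) := fun m =>
    meagre_of_closed_int_empty (hBc m) (hBint m)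
  have hUmeagre : IsMeagre (⋃ m, B m) := isMeagre_iUnion hBmeagre
  have hABm : IsMeagre (A ∪ ⋃ m, B m) := by
    rw [IsMeagre, compl_union]
    exact Filter.inter_mem hAm hUmeagre
  have hdense : Dense ((A ∪ ⋃ m, B m)ᶜ) := dense_of_mem_residual hABm
  have hyp : CellHyps A F B :=
    ⟨hFc, fun j => hAeq ▸ subset_iUnion F j, hBc, hBne, hdisjAB, hBint, hBdense, hdense⟩
  -- disjoint intervals
  set aI : ℕ → ℝ := fun k => 1/(k+2) with haI
  set bI : ℕ → ℝ := fun k => 1/(k+1) with hbI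
  have habI : ∀ k, aI k < bI k := by
    intro k
    apply one_div_lt_one_div_of_lt <;> push_cast <;> linarith
  have hblea : ∀ k k' : ℕ, k < k' → bI k' ≤ aI k := by
    intro k k' h
    apply one_div_le_one_div_of_le
    · positivity
    · push_cast
      have : (k:ℝ) + 1 ≤ (k':ℝ) := by exact_mod_cast Nat.succ_le_of_lt h
      linarith
  have hIdisj : ∀ k k' : ℕ, k ≠ k' → Disjoint (Ioo (aI k) (bI k)) (Ioo (aI k') (bI k')) := by
    intro k k' hne
    rw [Set.disjoint_left]
    rintro x ⟨h1, h2⟩ ⟨h3, h4⟩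
    rcases Nat.lt_or_ge k k' with h | h
    · have := hblea k k' h
      linarith
    · have := hblea k' k (by omega)
      linarith
  -- the cells
  have hcells := fun k : ℕ => cell_lemma hyp hAeq (habI k)
  choose Cl hCl1 hCl2 hCl3 hCl4 hCl5 hCl6 hCl7 hCl8 using hcells
  set C := ⋃ k, Cl k with hC
  have hCmem : ∀ k, Cl k ⊆ C := fun k => subset_iUnion Cl k
  have hCinter : ∀ k, C ∩ Ioo (aI k) (bI k) = Cl k := by
    intro k
    apply Subset.antisymm
    · rintro x ⟨hx1, hx2⟩
      obtain ⟨k', hk'⟩ := mem_iUnion.1 hx1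
      by_cases h : k' = k
      · exact h ▸ hk'
      · exact absurd hx2 (fun hc =>
          (Set.disjoint_left.1 (hIdisj k' k h)) (hCl1 k' hk') hc)
    · exact fun x hx => ⟨hCmem k hx, hCl1 k hx⟩
  -- homeomorphisms of the cells
  have hhom : ∀ k, Nonempty ((ℕ → Bool) ≃ₜ (Cl k)) := fun k =>
    brouwer_real (hCl2 k).isClosed (hCl4 k) (hCl5 k) (hCl2 k).isBounded (hCl3 k)
  set e : ∀ k, (ℕ → Bool) ≃ₜ (Cl k) := fun k => (hhom k).some with he
  -- glue
  set Θ : (Σ _ : ℕ, (ℕ → Bool)) → C := fun p =>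
    ⟨((e p.1) p.2 : ℝ), hCmem p.1 ((e p.1) p.2).2⟩ with hΘ
  have hΘbij : Function.Bijective Θ := by
    constructor
    · rintro ⟨k, y⟩ ⟨k', y'⟩ h
      have hval : ((e k) y : ℝ) = ((e k') y' : ℝ) := congrArg Subtype.val h
      have hkk : k = k' := by
        by_contra hne
        have h1 : ((e k) y : ℝ) ∈ Ioo (aI k) (bI k) := hCl1 k ((e k) y).2
        have h2 : ((e k') y' : ℝ) ∈ Ioo (aI k') (bI k') := hCl1 k' ((e k') y').2
        rw [hval] at h1
        exact (Set.disjoint_left.1 (hIdisj k k' hne)) h1 h2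
      subst hkk
      have : (e k) y = (e k) y' := Subtype.ext hval
      have := (e k).injective this
      exact Sigma.ext rfl (heq_of_eq this)
    · rintro ⟨z, hz⟩
      obtain ⟨k, hk⟩ := mem_iUnion.1 hz
      refine ⟨⟨k, (e k).symm ⟨z, hk⟩⟩, ?_⟩
      apply Subtype.ext
      show (((e k) ((e k).symm ⟨z, hk⟩)) : ℝ) = z
      rw [(e k).apply_symm_apply]
  have hΘcont : Continuous Θ := by
    apply continuous_sigma
    intro k
    exact Continuous.subtype_mk (continuous_subtype_val.comp (e k).continuous) _
  have hΘopen : IsOpenMap Θ := by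
    rw [isOpenMap_sigma]
    intro k U hU
    have hV : IsOpen ((e k) '' U) := (e k).isOpenMap U hU
    obtain ⟨W, hW, hWeq⟩ := isOpen_induced_iff.1 hV
    have himg : (fun y => Θ ⟨k, y⟩) '' U =
        Subtype.val ⁻¹' (W ∩ Ioo (aI k) (bI k)) := by
      ext ⟨z, hz⟩
      simp only [mem_image, mem_preimage, mem_inter_iff]
      constructor
      · rintro ⟨y, hyU, heq⟩
        have hzval : ((e k) y : ℝ) = z := congrArg Subtype.val heq
        constructor
        · have : (e k) y ∈ Subtype.val ⁻¹' W := by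
            rw [hWeq]
            exact mem_image_of_mem _ hyU
          rw [← hzval]
          exact this
        · rw [← hzval]
          exact hCl1 k ((e k) y).2
      · rintro ⟨hzW, hzI⟩
        have hzCl : z ∈ Cl k := by
          rw [← hCinter k]
          exact ⟨hz, hzI⟩
        have : (⟨z, hzCl⟩ : Cl k) ∈ Subtype.val ⁻¹' W := hzW
        rw [hWeq] at this
        obtain ⟨y, hyU, hyeq⟩ := this
        refine ⟨y, hyU, ?_⟩
        apply Subtype.ext
        show ((e k) y : ℝ) = z
        rw [hyeq]
    rw [himg]
    exact (continuous_subtype_val.isOpen_preimage _ (hW.inter isOpen_Ioo))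
  have hΘhomeo : (Σ _ : ℕ, (ℕ → Bool)) ≃ₜ C :=
    Equiv.toHomeomorphOfContinuousOpen (Equiv.ofBijective Θ hΘbij) hΘcont hΘopen
  refine ⟨C, ⟨hΘhomeo.symm.trans cmeHomeo⟩, ?_, ?_, ?_⟩
  · -- disjoint from A
    rw [Set.disjoint_left]
    intro x hxC hxA
    obtain ⟨k, hk⟩ := mem_iUnion.1 hxC
    have h0 := hCl6 k
    rw [eq_empty_iff_forall_notMem] at h0
    exact h0 x ⟨hk, hxA⟩
  · -- B meagre in C
    rw [preimage_iUnion]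
    apply isMeagre_iUnion
    intro m
    apply meagre_of_closed_int_empty ((hBc m).preimage continuous_subtype_val)
    rw [eq_empty_iff_forall_notMem]
    rintro ⟨x, hxC⟩ hmem
    obtain ⟨O, hOsub, hOopen, hxO⟩ := mem_interior.1 hmem
    obtain ⟨W, hW, hWeq⟩ := isOpen_induced_iff.1 hOopen
    have hxW : x ∈ W := by
      rw [← hWeq] at hxO
      exact hxO
    obtain ⟨ε, hε, hball⟩ := Metric.isOpen_iff.1 hW x hxW
    obtain ⟨k, hk⟩ := mem_iUnion.1 hxC
    obtain ⟨q, hqCl, hqd, hqB⟩ := hCl8 k x hk ε hε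
    have hqC : q ∈ C := hCmem k hqCl
    have hqW : q ∈ W := hball (by rw [Metric.mem_ball, Real.dist_eq]; exact hqd)
    have : (⟨q, hqC⟩ : C) ∈ O := by
      rw [← hWeq]
      exact hqW
    have hqBm : q ∈ B m := hOsub this
    exact hqB (mem_iUnion.2 ⟨m, hqBm⟩)
  · -- density of the B's
    intro V hV hVC
    obtain ⟨x, hxV, hxC⟩ := hVC
    obtain ⟨k, hk⟩ := mem_iUnion.1 hxC
    obtain ⟨ε, hε, hball⟩ := Metric.isOpen_iff.1 hV x hxV
    obtain ⟨m, hm⟩ := hCl7 k x hk ε hε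
    refine ⟨m, fun z hz => ⟨hball (hm hz).1, hCmem k (hm hz).2⟩⟩
end

section
/- If (Bₙ) is a sequence as above with every nonempty open set containing some Bₙ and the Bₙ pairwise disjoint nonempty closed sets, then B = ⋃ₙ Bₙ is meager in ℝ. -/
open Set

/-- The `B j` inside `interior (B i)` can only be `B i` itself, by disjointness; then `B i` is
clopen, hence everything, leaving no room for a second `B k`. -/
theorem isNowhereDense_of_pairwise_disjoint_of_forall_isOpen_exists_subset
    {X ι : Type*} [TopologicalSpace X] [PreconnectedSpace X] [Nontrivial ι] {B : ι → Set X}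
    (hBc : ∀ i, IsClosed (B i)) (hBne : ∀ i, (B i).Nonempty)
    (hdisj : Pairwise fun i j => Disjoint (B i) (B j))
    (hBdense : ∀ U : Set X, IsOpen U → U.Nonempty → ∃ i, B i ⊆ U) (i : ι) :
    IsNowhereDense (B i) := by
  rw [(hBc i).isNowhereDense_iff, ← not_nonempty_iff_eq_empty]
  intro hint
  obtain ⟨j, hj⟩ := hBdense _ isOpen_interior hint
  obtain rfl | hji := eq_or_ne j i
  · have huniv : B j = univ :=
      IsClopen.eq_univ ⟨hBc j, subset_interior_iff_isOpen.mp hj⟩ (hBne j)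
    obtain ⟨k, hkj⟩ := exists_ne j
    have hBk_disj : Disjoint (B k) univ := huniv ▸ hdisj hkj
    exact (hBne k).ne_empty (disjoint_univ.mp hBk_disj)
  · exact (hBne j).ne_empty ((hdisj hji).eq_bot_of_le (hj.trans interior_subset))

/-- If `(Bₙ)` is a sequence of pairwise disjoint nonempty closed subsets of `ℝ` such that every
nonempty open subset of `ℝ` includes some `Bₙ`, then `⋃ₙ Bₙ` is meager in `ℝ`. -/
theorem union_of_locally_included_closed_sets_meagre
    (B : ℕ → Set ℝ) (hBc : ∀ n, IsClosed (B n)) (hBne : ∀ n, (B n).Nonempty)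
    (hdisj : Pairwise fun m n => Disjoint (B m) (B n))
    (hBdense : ∀ U : Set ℝ, IsOpen U → U.Nonempty → ∃ n, B n ⊆ U) :
    IsMeagre (⋃ n, B n) :=
  isMeagre_iUnion fun n =>
    (isNowhereDense_of_pairwise_disjoint_of_forall_isOpen_exists_subset
      hBc hBne hdisj hBdense n).isMeagre
end

section
/- In a Hausdorff space, any countable union of copies of the Cantor space has a countable disjoint refinement consisting of copies of the Cantor space; that is, if (Cₙ) are subsets each homeomorphic to 2^ℕ, then there is a countable family of pairwise disjoint sets, each homeomorphic to 2^ℕ, whose union equals ⋃ₙ Cₙ. -/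
open Set

/-- The cylinder of length `n` around `x` in Cantor space. -/
def cantorCyl (n : ℕ) (x : ℕ → Bool) : Set (ℕ → Bool) := {y | ∀ i < n, y i = x i}

lemma mem_cantorCyl_self (n : ℕ) (x : ℕ → Bool) : x ∈ cantorCyl n x := fun _ _ => rfl

lemma cantorCyl_anti {m n : ℕ} (h : m ≤ n) (x : ℕ → Bool) :
    cantorCyl n x ⊆ cantorCyl m x := fun _y hy i hi => hy i (lt_of_lt_of_le hi h)

lemma cantorCyl_eq_of_agree {n : ℕ} {x y : ℕ → Bool} (h : ∀ i < n, x i = y i) :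
    cantorCyl n x = cantorCyl n y := by
  ext z
  constructor <;> intro hz i hi
  · rw [hz i hi, h i hi]
  · rw [hz i hi, h i hi]

lemma mem_cantorCyl_iff {n : ℕ} {x y : ℕ → Bool} (hy : y ∈ cantorCyl n x) :
    cantorCyl n x = cantorCyl n y :=
  cantorCyl_eq_of_agree (fun i hi => (hy i hi).symm)

/-- A cylinder is homeomorphic to the whole Cantor space. -/
noncomputable def cantorCylHomeo (n : ℕ) (x : ℕ → Bool) : cantorCyl n x ≃ₜ (ℕ → Bool) where
  toFun y := fun i => y.1 (i + n)
  invFun z := ⟨fun i => if h : i < n then x i else z (i - n), fun i hi => by simp [hi]⟩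
  left_inv := by
    rintro ⟨y, hy⟩
    ext i
    by_cases h : i < n
    · simp [h, hy i h]
    · simp only [h, dif_neg, not_false_iff]
      congr 1
      omega
  right_inv := by
    intro z
    funext i
    have h : ¬ (i + n < n) := by omega
    simp only [h, dif_neg, not_false_iff]
    congr 1
    omega
  continuous_toFun := continuous_pi fun i => (continuous_apply (i + n)).comp continuous_subtype_val
  continuous_invFun := by
    apply Continuous.subtype_mk
    apply continuous_pi
    intro i
    by_cases h : i < n
    · simpa [h] using (continuous_const : Continuous fun _ : ℕ → Bool => x i)
    · simpa [h] using continuous_apply (i - n)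

lemma exists_cantorCyl_subset {U : Set (ℕ → Bool)} (hU : IsOpen U) {x : ℕ → Bool} (hx : x ∈ U) :
    ∃ n, cantorCyl n x ⊆ U := by
  obtain ⟨I, u, hu, hIu⟩ := isOpen_pi_iff.mp hU x hx
  refine ⟨(I.sup id) + 1, fun y hy => hIu fun a ha => ?_⟩
  have : a < I.sup id + 1 := Nat.lt_succ_of_le (Finset.le_sup (f := id) ha)
  rw [hy a this]
  exact (hu a ha).2

/-- Every open subset of Cantor space is a countable disjoint union of cylinders. -/
lemma cantor_open_decomp {U : Set (ℕ → Bool)} (hU : IsOpen U) :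
    ∃ T : Set (Set (ℕ → Bool)), T.Countable ∧
      (∀ c ∈ T, Nonempty (c ≃ₜ (ℕ → Bool))) ∧
      T.PairwiseDisjoint id ∧ ⋃₀ T = U := by
  classical
  refine ⟨{c | ∃ x n, x ∈ U ∧ c = cantorCyl n x ∧ cantorCyl n x ⊆ U ∧
      ∀ m < n, ¬ cantorCyl m x ⊆ U}, ?_, ?_, ?_, ?_⟩
  · -- countable
    apply Set.Countable.mono ?_
      (Set.countable_range (fun s : List Bool => cantorCyl s.length (fun i => s.getD i false)))
    rintro c ⟨x, n, -, rfl, -, -⟩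
    refine ⟨List.ofFn (fun i : Fin n => x i), ?_⟩
    simp only [List.length_ofFn]
    apply cantorCyl_eq_of_agree
    intro i hi
    simp [List.getD, List.getElem?_ofFn, hi]
  · rintro c ⟨x, n, -, rfl, -, -⟩
    exact ⟨cantorCylHomeo n x⟩
  · rintro c ⟨x, n, -, rfl, hsub, hmax⟩ d ⟨y, m, -, rfl, hsub', hmax'⟩ hne
    simp only [Function.onFun, id_eq]
    rw [Set.disjoint_left]
    rintro z hz hz'
    apply hne
    have h1 : cantorCyl n x = cantorCyl n z := mem_cantorCyl_iff hz
    have h2 : cantorCyl m y = cantorCyl m z := mem_cantorCyl_iff hz'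
    rcases le_total n m with h | h
    · have : cantorCyl n y = cantorCyl n z := by
        apply mem_cantorCyl_iff
        exact cantorCyl_anti h y hz'
      have hnm : ¬ n < m := fun hlt => hmax' n hlt (by rw [this, ← h1]; exact hsub)
      have : n = m := by omega
      subst this
      rw [h1, h2]
    · have : cantorCyl m x = cantorCyl m z := by
        apply mem_cantorCyl_iff
        exact cantorCyl_anti h x hz
      have hnm : ¬ m < n := fun hlt => hmax m hlt (by rw [this, ← h2]; exact hsub')
      have : m = n := by omega
      subst this
      rw [h1, h2]
  · apply subset_antisymm
    · rintro z ⟨c, ⟨x, n, -, rfl, hsub, -⟩, hz⟩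
      exact hsub hz
    · intro x hx
      obtain ⟨n, hn⟩ := exists_cantorCyl_subset hU hx
      have hex : ∃ m, cantorCyl m x ⊆ U := ⟨n, hn⟩
      refine ⟨cantorCyl (Nat.find hex) x, ⟨x, Nat.find hex, hx, rfl, Nat.find_spec hex,
        fun m hm => Nat.find_min hex hm⟩, mem_cantorCyl_self _ _⟩

/-- In a Hausdorff space, any countable union of copies of the Cantor space has a countable
disjoint refinement consisting of copies of the Cantor space. -/
theorem countable_union_cantor_copies_disjoint_refinement
    {X : Type*} [TopologicalSpace X] [T2Space X]
    (C : ℕ → Set X) (hC : ∀ n, Nonempty (C n ≃ₜ (ℕ → Bool))) :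
    ∃ S : Set (Set X), S.Countable ∧
      (∀ V ∈ S, Nonempty (V ≃ₜ (ℕ → Bool)) ∧ ∃ n, V ⊆ C n) ∧
      S.PairwiseDisjoint id ∧
      ⋃₀ S = ⋃ n, C n := by
  classical
  have e : ∀ n, C n ≃ₜ (ℕ → Bool) := fun n => (hC n).some
  have hCcl : ∀ k, IsClosed (C k) := by
    intro k
    have : CompactSpace (C k) := (e k).symm.compactSpace
    exact (isCompact_iff_compactSpace.mpr this).isClosed
  set D : ℕ → Set X := fun n => C n \ ⋃ k, ⋃ _ : k < n, C k with hDdef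
  have hDsub : ∀ n, D n ⊆ C n := fun n => diff_subset
  have hDdisj : ∀ m n, m ≠ n → Disjoint (D m) (D n) := by
    intro m n hmn
    wlog h : m < n generalizing m n
    · exact (this n m hmn.symm (by omega)).symm
    rw [Set.disjoint_left]
    intro z hz hz'
    exact hz'.2 (Set.mem_iUnion.mpr ⟨m, Set.mem_iUnion.mpr ⟨h, hz.1⟩⟩)
  have hDunion : ⋃ n, D n = ⋃ n, C n := by
    apply subset_antisymm (Set.iUnion_mono fun n => hDsub n)
    intro x hx
    have hex : ∃ n, x ∈ C n := Set.mem_iUnion.mp hx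
    refine Set.mem_iUnion.mpr ⟨Nat.find hex, Nat.find_spec hex, ?_⟩
    rintro ⟨s, ⟨k, rfl⟩, hs⟩
    simp only [Set.mem_iUnion] at hs
    obtain ⟨hk, hxk⟩ := hs
    exact Nat.find_min hex hk hxk
  -- W n : the part of C n (as a subtype) lying in D n; it is open
  have hWopen : ∀ n, IsOpen ((Subtype.val : C n → X) ⁻¹' (D n)) := by
    intro n
    have : (Subtype.val : C n → X) ⁻¹' (D n) =
        (Subtype.val : C n → X) ⁻¹' ((⋃ k, ⋃ _ : k < n, C k)ᶜ) := by
      ext y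
      simp [hDdef, y.2]
    rw [this]
    apply IsOpen.preimage continuous_subtype_val
    apply isOpen_compl_iff.mpr
    have : (⋃ k, ⋃ _ : k < n, C k) = ⋃ k ∈ Set.Iio n, C k := rfl
    rw [this]
    exact Set.Finite.isClosed_biUnion (Set.finite_Iio n) (fun k _ => hCcl k)
  have hUopen : ∀ n, IsOpen ((e n) '' ((Subtype.val : C n → X) ⁻¹' (D n))) :=
    fun n => (e n).isOpenMap _ (hWopen n)
  choose T hTcount hThomeo hTdisj hTunion using fun n => cantor_open_decomp (hUopen n)
  set F : ℕ → Set (ℕ → Bool) → Set X :=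
    fun n c => Subtype.val '' ((e n).symm '' c) with hFdef
  have hFsubD : ∀ n c, c ∈ T n → F n c ⊆ D n := by
    intro n c hc z hz
    obtain ⟨y, ⟨w, hw, rfl⟩, rfl⟩ := hz
    have : w ∈ ⋃₀ T n := ⟨c, hc, hw⟩
    rw [hTunion n] at this
    obtain ⟨v, hv, hvw⟩ := this
    have : (e n).symm w = v := by rw [← hvw]; exact (e n).symm_apply_apply v
    rw [this]
    exact hv
  refine ⟨⋃ n, (F n) '' (T n), ?_, ?_, ?_, ?_⟩
  · exact Set.countable_iUnion fun n => (hTcount n).image _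
  · rintro V hV
    obtain ⟨n, c, hc, rfl⟩ := by
      simpa only [Set.mem_iUnion, Set.mem_image] using hV
    constructor
    · -- homeomorphism
      obtain ⟨h1⟩ := hThomeo n c hc
      have h2 : c ≃ₜ ((e n).symm '' c) := Homeomorph.image (e n).symm c
      have h3 : ((e n).symm '' c) ≃ₜ (F n c) := by
        have hemb : Topology.IsEmbedding
            (fun y : ((e n).symm '' c) => ((y : C n) : X)) :=
          Topology.IsEmbedding.subtypeVal.comp Topology.IsEmbedding.subtypeVal
        refine (Topology.IsEmbedding.toHomeomorph hemb).trans (Homeomorph.setCongr ?_)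
        show Set.range ((Subtype.val : C n → X) ∘
          (Subtype.val : ((e n).symm '' c) → C n)) = F n c
        rw [Set.range_comp, Subtype.range_val]
      exact ⟨(h3.symm.trans h2.symm).trans h1⟩
    · exact ⟨n, ((hFsubD n c hc).trans (hDsub n))⟩
  · rintro V hV W hW hne
    obtain ⟨n, c, hc, rfl⟩ := by
      simpa only [Set.mem_iUnion, Set.mem_image] using hV
    obtain ⟨m, d, hd, rfl⟩ := by
      simpa only [Set.mem_iUnion, Set.mem_image] using hW
    rcases eq_or_ne n m with rfl | hnm
    · have hcd : c ≠ d := fun h => hne (by rw [h])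
      have hdisj := hTdisj n hc hd hcd
      simp only [Function.onFun, id_eq] at hdisj ⊢
      rw [Set.disjoint_left] at hdisj ⊢
      rintro z ⟨y, ⟨w, hw, rfl⟩, rfl⟩ ⟨y', ⟨w', hw', rfl⟩, hyz⟩
      have hww : w' = w := (e n).symm.injective (Subtype.val_injective hyz)
      exact hdisj hw (hww ▸ hw')
    · exact Set.disjoint_of_subset (hFsubD n c hc) (hFsubD m d hd) (hDdisj n m hnm)
  · rw [← hDunion]
    apply subset_antisymm
    · rintro z ⟨V, hV, hz⟩
      obtain ⟨n, c, hc, rfl⟩ := by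
        simpa only [Set.mem_iUnion, Set.mem_image] using hV
      exact Set.mem_iUnion.mpr ⟨n, hFsubD n c hc hz⟩
    · intro z hz
      obtain ⟨n, hn⟩ := Set.mem_iUnion.mp hz
      have hzC : z ∈ C n := hDsub n hn
      set y : C n := ⟨z, hzC⟩ with hy
      have hyW : y ∈ (Subtype.val : C n → X) ⁻¹' (D n) := hn
      have : (e n) y ∈ ⋃₀ T n := by rw [hTunion n]; exact ⟨y, hyW, rfl⟩
      obtain ⟨c, hc, hyc⟩ := this
      refine ⟨F n c, Set.mem_iUnion.mpr ⟨n, c, hc, rfl⟩, ?_⟩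
      exact ⟨(e n).symm ((e n) y), ⟨(e n) y, hyc, rfl⟩, by simp [hy]⟩
end

section
/- Let X be a Polish space without isolated points and A ⊆ X meager. Then there is a countable dense subset B ⊆ X such that there is no Cantor set C ⊆ A ∪ B (i.e. no subset of A ∪ B homeomorphic to the Cantor space) with B ∩ C dense in C. -/
open Set Filter Topology

/-- The Cantor space `ℕ → Bool` has no isolated points. -/
private lemma cantor_punctured_neBot (y : ℕ → Bool) : (𝓝[≠] y).NeBot := by
  have hu : Tendsto (fun n : ℕ => Function.update y n (!(y n))) atTop (𝓝[≠] y) := by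
    rw [tendsto_nhdsWithin_iff]
    constructor
    · rw [tendsto_pi_nhds]
      intro k
      apply Tendsto.congr' (f₁ := fun _ => y k)
      · filter_upwards [eventually_gt_atTop k] with n hn
        exact (Function.update_of_ne (by omega) _ _).symm
      · exact tendsto_const_nhds
    · filter_upwards with n
      intro h
      have : Function.update y n (!(y n)) n = y n := by rw [h]
      simp [Function.update_self] at this
  exact hu.neBot

/-- A countable union over a countable set of meagre sets is meagre. -/
private lemma isMeagre_biUnion' {Y : Type*} [TopologicalSpace Y] {ι : Type*} {s : Set ι}
    (hs : s.Countable) {f : ι → Set Y} (h : ∀ i ∈ s, IsMeagre (f i)) :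
    IsMeagre (⋃ i ∈ s, f i) := by
  rw [IsMeagre, compl_iUnion]
  simp only [compl_iUnion]
  exact (countable_bInter_mem hs).mpr h

/-- Let `X` be a Polish space without isolated points and `A ⊆ X` meager. Then there is a
countable dense subset `B ⊆ X` such that there is no Cantor set `C ⊆ A ∪ B` (no subset of
`A ∪ B` homeomorphic to the Cantor space) with `B ∩ C` dense in `C`. -/
theorem exists_countable_dense_no_cantor_subset
    {X : Type*} [TopologicalSpace X] [PolishSpace X]
    (hiso : ∀ x : X, (nhdsWithin x {x}ᶜ).NeBot)
    (A : Set X) (hA : IsMeagre A) :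
    ∃ B : Set X, B.Countable ∧ Dense B ∧
      ¬∃ C : Set X, C ⊆ A ∪ B ∧ Nonempty (C ≃ₜ (ℕ → Bool)) ∧
        C ⊆ closure (B ∩ C) := by
  -- Extract a dense Gδ set `t ⊆ Aᶜ`.
  letI := TopologicalSpace.upgradeIsCompletelyMetrizable X
  obtain ⟨T, hTopen, hTdense, hTcount, htA⟩ := mem_residual_iff.1 hA
  have htd : Dense (⋂₀ T) := dense_sInter_of_isOpen hTopen hTcount hTdense
  -- Pick a countable dense subset `B` of `⋂₀ T`.
  obtain ⟨B, hBt, hBcount, hBdense⟩ := htd.exists_countable_dense_subset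
  refine ⟨B, hBcount, hBdense, ?_⟩
  rintro ⟨C, hCsub, ⟨e⟩, hCdense⟩
  -- Work in the subtype `↥C`.
  haveI : CompactSpace C := e.symm.compactSpace
  haveI : Nonempty C := ⟨e.symm (fun _ => false)⟩
  -- `↥C` has no isolated points, transferring from the Cantor space.
  have hperf : ∀ x : C, (𝓝[≠] x).NeBot := by
    intro x
    haveI := cantor_punctured_neBot (e x)
    have : Tendsto e.symm (𝓝[≠] (e x)) (𝓝[≠] x) := by
      rw [tendsto_nhdsWithin_iff]
      constructor
      · have h := ((e.symm.continuous.tendsto (e x)).mono_left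
          (nhdsWithin_le_nhds (s := {e x}ᶜ)))
        simpa using h
      · filter_upwards [self_mem_nhdsWithin] with z hz
        simp only [mem_compl_iff, mem_singleton_iff] at hz ⊢
        intro h
        apply hz
        rw [← h]
        simp
    exact this.neBot
  -- `B ∩ C`, seen inside `↥C`, is dense.
  have hDdense : Dense ((Subtype.val ⁻¹' B : Set C)) := by
    intro x
    rw [closure_subtype, Subtype.image_preimage_coe]
    exact closure_mono (inter_comm C B ▸ inter_subset_inter_right _ (subset_refl _))
      (hCdense x.2)
  -- `↥C` is a nonempty Baire space, so it is not meagre in itself.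
  have huniv : ¬ IsMeagre (univ : Set C) := by
    intro h
    rw [IsMeagre, compl_univ] at h
    have := dense_of_mem_residual h
    rcases this.nonempty with ⟨x, hx⟩
    exact hx
  apply huniv
  -- Cover `↥C` by `B ∩ C` and the closed sets `Uᶜ ∩ C`, `U ∈ T`.
  have hcover : (univ : Set C) ⊆
      (Subtype.val ⁻¹' B) ∪ ⋃ U ∈ T, (Subtype.val ⁻¹' Uᶜ : Set C) := by
    intro x _
    rcases hCsub x.2 with hxA | hxB
    · right
      have : (x : X) ∉ ⋂₀ T := fun hmem => htA hmem hxA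
      rw [mem_sInter] at this
      push_neg at this
      obtain ⟨U, hUT, hxU⟩ := this
      exact mem_biUnion hUT hxU
    · exact Or.inl hxB
  refine IsMeagre.mono hcover ?_
  have h1 : IsMeagre ((Subtype.val ⁻¹' B : Set C)) := by
    have hcnt : (Subtype.val ⁻¹' B : Set C).Countable :=
      hBcount.preimage Subtype.val_injective
    rw [← Set.biUnion_of_singleton ((Subtype.val ⁻¹' B : Set C))]
    apply isMeagre_biUnion' hcnt
    intro b _
    haveI := hperf b
    exact IsMeagre.mono (subset_refl _) (residual_of_dense_open isOpen_compl_singleton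
      (dense_compl_singleton b) : IsMeagre {b})
  have h2 : IsMeagre (⋃ U ∈ T, (Subtype.val ⁻¹' Uᶜ : Set C)) := by
    apply isMeagre_biUnion' hTcount
    intro U hUT
    -- `Uᶜ ∩ C` is closed in `↥C` with empty interior, as `B ∩ C` is dense and avoids `Uᶜ`.
    have hclosed : IsClosed (Subtype.val ⁻¹' Uᶜ : Set C) :=
      ((hTopen U hUT).isClosed_compl).preimage continuous_subtype_val
    have hint : interior (Subtype.val ⁻¹' Uᶜ : Set C) = ∅ := by
      by_contra h
      obtain ⟨x, hx⟩ := nonempty_iff_ne_empty.2 h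
      obtain ⟨b, hbB, hbint⟩ := hDdense.exists_mem_open isOpen_interior ⟨x, hx⟩
      have hbU : (b : X) ∈ U := hBt hbB U hUT
      exact (interior_subset hbint) hbU
    rw [IsMeagre]
    apply residual_of_dense_open hclosed.isOpen_compl
    rwa [← interior_eq_empty_iff_dense_compl]
  rw [IsMeagre, compl_union]
  exact inter_mem h1 h2
end
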